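/- arXiv:2009.02475 — 5 statements merged into one kernel-verified Lean document; each statement's English description precedes it below -/
import Mathlib

section
/- Let g be an unbounded automorphism of (ℚ, ≤). Then the normal closure of {g} in Aut(ℚ, ≤) is the whole group Aut(ℚ, ≤); equivalently, every automorphism of (ℚ, ≤) is a product of conjugates of g and g⁻¹. -/
/-- The automorphism group of `(ℚ, ≤)`, as a subgroup of `Equiv.Perm ℚ`. -/
def QAut : Subgroup (Equiv.Perm ℚ) where
  carrier := {g | ∀ a b : ℚ, a ≤ b ↔ g a ≤ g b}
  one_mem' := fun _ _ => Iff.rfl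
  mul_mem' := by
    intro g h hg hh a b
    exact (hh a b).trans (hg (h a) (h b))
  inv_mem' := by
    intro g hg a b
    simpa using (hg (g⁻¹ a) (g⁻¹ b)).symm

/-- `f` has a single `+`-orbital: there is `a` with `a < f a` whose orbit
`{f^k a : k ∈ ℤ}` is unbounded above and below in `ℚ`. -/
def SinglePlusQ (f : Equiv.Perm ℚ) : Prop :=
  ∃ a : ℚ, a < f a ∧ (∀ x : ℚ, ∃ k : ℤ, x < (f ^ k) a) ∧ (∀ x : ℚ, ∃ k : ℤ, (f ^ k) a < x)

/-- `f` has a single `−`-orbital: there is `a` with `f a < a` whose orbit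
`{f^k a : k ∈ ℤ}` is unbounded above and below in `ℚ`. -/
def SingleMinusQ (f : Equiv.Perm ℚ) : Prop :=
  ∃ a : ℚ, f a < a ∧ (∀ x : ℚ, ∃ k : ℤ, x < (f ^ k) a) ∧ (∀ x : ℚ, ∃ k : ℤ, (f ^ k) a < x)

/-- `f` has a `+`-orbital unbounded above. -/
def PlusUnbAboveQ (f : Equiv.Perm ℚ) : Prop :=
  ∃ a : ℚ, a < f a ∧ ∀ x : ℚ, ∃ k : ℤ, x < (f ^ k) a

/-- `f` has a `−`-orbital unbounded below. -/
def MinusUnbBelowQ (f : Equiv.Perm ℚ) : Prop :=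
  ∃ b : ℚ, f b < b ∧ ∀ x : ℚ, ∃ k : ℤ, (f ^ k) b < x

namespace Stmt1Aux

abbrev P := Equiv.Perm ℚ

lemma mem_QAut_iff (f : P) : f ∈ QAut ↔ StrictMono ⇑f := by
  constructor
  · intro h
    exact (Monotone.strictMono_of_injective (fun a b hab => (h a b).1 hab) f.injective)
  · intro h a b
    exact (h.le_iff_le).symm

lemma sm_inv {f : P} (hf : StrictMono ⇑f) : StrictMono ⇑f⁻¹ := by
  intro a b hab
  apply hf.lt_iff_lt.mp
  simpa using hab

lemma sm_mul {f g : P} (hf : StrictMono ⇑f) (hg : StrictMono ⇑g) : StrictMono ⇑(f * g) := by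
  intro a b hab
  exact hf (hg hab)

lemma sm_zpow {f : P} (hf : StrictMono ⇑f) : ∀ k : ℤ, StrictMono ⇑(f ^ k) := by
  have hn : ∀ n : ℕ, StrictMono ⇑(f ^ n) := by
    intro n
    induction n with
    | zero => simpa using strictMono_id
    | succ n ih => rw [pow_succ]; exact sm_mul ih hf
  intro k
  rcases k with n | n
  · simpa using hn n
  · rw [zpow_negSucc]
    exact sm_inv (hn (n + 1))

/-- floor lemma -/
lemma exists_block {s : ℤ → ℚ} (hs : ∀ i, s i < s (i + 1))
    (hU : ∀ x : ℚ, ∃ i, x < s i) (hL : ∀ x : ℚ, ∃ i, s i < x) (x : ℚ) :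
    ∃ i, s i ≤ x ∧ x < s (i + 1) := by
  have hmono : StrictMono s := strictMono_int_of_lt_succ hs
  obtain ⟨j, hj⟩ := hL x
  obtain ⟨K, hK⟩ := hU x
  obtain ⟨i, hi, hmax⟩ := Int.exists_greatest_of_bdd (P := fun i => s i ≤ x)
    ⟨K, fun z hz => by
      by_contra hc
      push_neg at hc
      exact absurd (le_trans (hmono (by omega)).le hz) (not_le.2 hK)⟩
    ⟨j, hj.le⟩
  refine ⟨i, hi, ?_⟩
  by_contra hc
  push_neg at hc
  have := hmax (i + 1) hc
  omega

lemma block_unique {s : ℤ → ℚ} (hs : ∀ i, s i < s (i + 1)) {x : ℚ} {i j : ℤ}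
    (hi : s i ≤ x ∧ x < s (i + 1)) (hj : s j ≤ x ∧ x < s (j + 1)) : i = j := by
  have hmono : StrictMono s := strictMono_int_of_lt_succ hs
  by_contra hc
  rcases lt_or_gt_of_ne hc with h | h
  · exact absurd (le_trans (hmono.monotone (by omega : i + 1 ≤ j)) hj.1) (not_le.2 hi.2)
  · exact absurd (le_trans (hmono.monotone (by omega : j + 1 ≤ i)) hi.1) (not_le.2 hj.2)

/-- Block-builder: glue per-block order isomorphisms into a permutation of ℚ. -/
lemma BLD {s t : ℤ → ℚ} (hs : ∀ i, s i < s (i + 1)) (ht : ∀ i, t i < t (i + 1))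
    (hsU : ∀ x : ℚ, ∃ i, x < s i) (hsL : ∀ x : ℚ, ∃ i, s i < x)
    (htU : ∀ x : ℚ, ∃ i, x < t i) (htL : ∀ x : ℚ, ∃ i, t i < x)
    (ψ : ℤ → ℚ → ℚ)
    (hmap : ∀ i x, s i ≤ x → x < s (i + 1) → t i ≤ ψ i x ∧ ψ i x < t (i + 1))
    (hmono : ∀ i x y, s i ≤ x → x < y → y < s (i + 1) → ψ i x < ψ i y)
    (hsurj : ∀ i y, t i ≤ y → y < t (i + 1) → ∃ x, s i ≤ x ∧ x < s (i + 1) ∧ ψ i x = y) :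
    ∃ W : P, StrictMono ⇑W ∧ ∀ i x, s i ≤ x → x < s (i + 1) → W x = ψ i x := by
  have hts : StrictMono t := strictMono_int_of_lt_succ ht
  choose k hk1 hk2 using exists_block hs hsU hsL
  set W0 : ℚ → ℚ := fun x => ψ (k x) x with hW0
  have keq : ∀ (x : ℚ) (i : ℤ), s i ≤ x → x < s (i + 1) → k x = i := by
    intro x i h1 h2
    exact block_unique hs ⟨hk1 x, hk2 x⟩ ⟨h1, h2⟩
  have hsm : StrictMono W0 := by
    intro x y hxy
    have hkxy : k x ≤ k y := by
      by_contra hc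
      push_neg at hc
      have : s (k y + 1) ≤ s (k x) := (strictMono_int_of_lt_succ hs).monotone (by omega)
      have := le_trans this (hk1 x)
      exact absurd (lt_trans hxy (hk2 y)) (not_lt.2 this)
    rcases eq_or_lt_of_le hkxy with heq | hlt
    · have := hmono (k x) x y (hk1 x) hxy (heq ▸ hk2 y)
      simpa [hW0, heq] using (heq ▸ this)
    · have h1 : W0 x < t (k x + 1) := (hmap (k x) x (hk1 x) (hk2 x)).2
      have h2 : t (k y) ≤ W0 y := (hmap (k y) y (hk1 y) (hk2 y)).1
      exact lt_of_lt_of_le (lt_of_lt_of_le h1 (hts.monotone (by omega))) h2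
  have hsur : Function.Surjective W0 := by
    intro y
    obtain ⟨j, hj1, hj2⟩ := exists_block ht htU htL y
    obtain ⟨x, hx1, hx2, hx3⟩ := hsurj j y hj1 hj2
    refine ⟨x, ?_⟩
    have : k x = j := keq x j hx1 hx2
    simp [hW0, this, hx3]
  refine ⟨Equiv.ofBijective W0 ⟨hsm.injective, hsur⟩, ?_, ?_⟩
  · simpa [Equiv.ofBijective] using hsm
  · intro i x h1 h2
    have : k x = i := keq x i h1 h2
    simp [Equiv.ofBijective, hW0, this]

end Stmt1Aux

namespace Stmt1Aux

/-- Piecewise-affine interpolation through two ℤ-indexed sequences. -/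
lemma INTERP {s t : ℤ → ℚ} (hs : ∀ i, s i < s (i + 1)) (ht : ∀ i, t i < t (i + 1))
    (hsU : ∀ x : ℚ, ∃ i, x < s i) (hsL : ∀ x : ℚ, ∃ i, s i < x)
    (htU : ∀ x : ℚ, ∃ i, x < t i) (htL : ∀ x : ℚ, ∃ i, t i < x) :
    ∃ W : P, StrictMono ⇑W ∧ ∀ i, W (s i) = t i := by
  set ψ : ℤ → ℚ → ℚ := fun i x => t i + (x - s i) * ((t (i+1) - t i) / (s (i+1) - s i)) with hψ
  have hden : ∀ i, (0:ℚ) < s (i+1) - s i := fun i => by linarith [hs i]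
  have hnum : ∀ i, (0:ℚ) < t (i+1) - t i := fun i => by linarith [ht i]
  have hslope : ∀ i, (0:ℚ) < (t (i+1) - t i) / (s (i+1) - s i) :=
    fun i => div_pos (hnum i) (hden i)
  obtain ⟨W, hW1, hW2⟩ := BLD hs ht hsU hsL htU htL ψ
    (by
      intro i x h1 h2
      constructor
      · have : (0:ℚ) ≤ (x - s i) * ((t (i+1) - t i) / (s (i+1) - s i)) :=
          mul_nonneg (by linarith) (hslope i).le
        simp [hψ]; linarith
      · have h3 : (x - s i) * ((t (i+1) - t i) / (s (i+1) - s i))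
            < (s (i+1) - s i) * ((t (i+1) - t i) / (s (i+1) - s i)) :=
          mul_lt_mul_of_pos_right (by linarith) (hslope i)
        have h4 : (s (i+1) - s i) * ((t (i+1) - t i) / (s (i+1) - s i)) = t (i+1) - t i := by
          rw [mul_comm]; exact div_mul_cancel₀ _ (ne_of_gt (hden i))
        simp only [hψ]; linarith)
    (by
      intro i x y h1 hxy h2
      have := mul_lt_mul_of_pos_right (by linarith : x - s i < y - s i) (hslope i)
      simp only [hψ]; linarith)
    (by
      intro i y h1 h2
      refine ⟨s i + (y - t i) * ((s (i+1) - s i) / (t (i+1) - t i)), ?_, ?_, ?_⟩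
      · have : (0:ℚ) ≤ (y - t i) * ((s (i+1) - s i) / (t (i+1) - t i)) :=
          mul_nonneg (by linarith) (div_pos (hden i) (hnum i)).le
        linarith
      · have h3 : (y - t i) * ((s (i+1) - s i) / (t (i+1) - t i))
            < (t (i+1) - t i) * ((s (i+1) - s i) / (t (i+1) - t i)) :=
          mul_lt_mul_of_pos_right (by linarith) (div_pos (hden i) (hnum i))
        have h4 : (t (i+1) - t i) * ((s (i+1) - s i) / (t (i+1) - t i)) = s (i+1) - s i := by
          rw [mul_comm]; exact div_mul_cancel₀ _ (ne_of_gt (hnum i))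
        linarith
      · simp only [hψ]
        have e1 : s i + (y - t i) * ((s (i+1) - s i) / (t (i+1) - t i)) - s i
            = (y - t i) * ((s (i+1) - s i) / (t (i+1) - t i)) := by ring
        rw [e1, mul_assoc, div_mul_div_comm, mul_comm (s (i+1) - s i),
          div_self (mul_ne_zero (ne_of_gt (hnum i)) (ne_of_gt (hden i))), mul_one]
        ring)
  exact ⟨W, hW1, fun i => by
    have := hW2 i (s i) le_rfl (hs i)
    simpa [hψ] using this⟩

/-- unboundedness from gaps -/
lemma unb_of_gaps {p : ℤ → ℚ} (h : ∀ n, p n + 1 ≤ p (n + 1)) :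
    (∀ x : ℚ, ∃ n, x < p n) ∧ (∀ x : ℚ, ∃ n, p n < x) := by
  have hup : ∀ n : ℕ, p 0 + n ≤ p n := by
    intro n
    induction n with
    | zero => simp
    | succ n ih =>
      have := h n
      push_cast
      push_cast at ih
      linarith
  have hdn : ∀ n : ℕ, p (-n) ≤ p 0 - n := by
    intro n
    induction n with
    | zero => simp
    | succ n ih =>
      have := h (-(n+1) : ℤ)
      have he : (-(n:ℤ)) = -(n+1) + 1 := by ring
      rw [he] at ih
      push_cast at ih ⊢
      linarith
  constructor
  · intro x
    obtain ⟨n, hn⟩ := exists_nat_gt (x - p 0)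
    exact ⟨n, by have := hup n; linarith⟩
  · intro x
    obtain ⟨n, hn⟩ := exists_nat_gt (p 0 - x)
    exact ⟨-n, by have := hdn n; linarith⟩

/-- Two-sided recursion on ℤ. -/
lemma ZREC {X : Type*} (Rup Rdn : X → X → Prop) (x0 : X)
    (hup : ∀ x, ∃ y, Rup x y) (hdn : ∀ x, ∃ y, Rdn y x) :
    ∃ p : ℤ → X, p 0 = x0 ∧ (∀ n : ℤ, 0 ≤ n → Rup (p n) (p (n + 1))) ∧
      (∀ n : ℤ, n < 0 → Rdn (p n) (p (n + 1))) := by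
  choose fu hfu using hup
  choose fd hfd using hdn
  set u : ℕ → X := fun n => Nat.rec x0 (fun _ x => fu x) n with hu
  set d : ℕ → X := fun n => Nat.rec x0 (fun _ x => fd x) n with hd
  set p : ℤ → X := fun n => if 0 ≤ n then u n.toNat else d (-n).toNat with hp
  have hp0 : ∀ n : ℤ, 0 ≤ n → p n = u n.toNat := fun n hn => by simp [hp, hn]
  have hpneg : ∀ n : ℤ, n < 0 → p n = d (-n).toNat := fun n hn => by
    simp [hp, not_le.2 hn]
  refine ⟨p, by simp [hp, hu], ?_, ?_⟩
  · intro n hn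
    rw [hp0 n hn, hp0 (n+1) (by omega)]
    have : (n+1).toNat = n.toNat + 1 := by omega
    rw [this]
    exact hfu (u n.toNat)
  · intro n hn
    rw [hpneg n hn]
    have h1 : (-n).toNat = (-(n+1)).toNat + 1 := by omega
    rw [h1]
    rcases eq_or_lt_of_le (by omega : n + 1 ≤ 0) with heq | hlt
    · have h2 : (-(n+1)).toNat = 0 := by omega
      rw [h2, heq]
      have : p 0 = d 0 := by simp [hp, hu, hd]
      rw [this]
      exact hfd (d 0)
    · rw [hpneg (n+1) hlt]
      exact hfd (d (-(n+1)).toNat)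

/-- merge two interleaved sequences -/
lemma merge {p q : ℤ → ℚ} (h1 : ∀ n, p n < q n) (h2 : ∀ n, q n < p (n + 1))
    (hpU : ∀ x : ℚ, ∃ n, x < p n) (hpL : ∀ x : ℚ, ∃ n, p n < x) :
    ∃ s : ℤ → ℚ, (∀ i, s i < s (i + 1)) ∧ (∀ x : ℚ, ∃ i, x < s i) ∧ (∀ x : ℚ, ∃ i, s i < x) ∧
      (∀ n, s (2 * n) = p n) ∧ (∀ n, s (2 * n + 1) = q n) := by
  set s : ℤ → ℚ := fun i => if i % 2 = 0 then p (i / 2) else q (i / 2) with hs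
  have hev : ∀ n, s (2 * n) = p n := by
    intro n
    have e1 : (2 * n) % 2 = 0 := by omega
    have e2 : (2 * n) / 2 = n := by omega
    simp [hs, e1, e2]
  have hod : ∀ n, s (2 * n + 1) = q n := by
    intro n
    have e1 : (2 * n + 1) % 2 = 1 := by omega
    have e2 : (2 * n + 1) / 2 = n := by omega
    simp [hs, e1, e2]
  refine ⟨s, ?_, ?_, ?_, hev, hod⟩
  · intro i
    rcases Int.even_or_odd i with ⟨n, hn⟩ | ⟨n, hn⟩
    · have : i = 2 * n := by omega
      subst this
      rw [hev n, hod n]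
      exact h1 n
    · have : i = 2 * n + 1 := by omega
      subst this
      have : 2 * n + 1 + 1 = 2 * (n + 1) := by ring
      rw [hod n, this, hev (n+1)]
      exact h2 n
  · intro x
    obtain ⟨n, hn⟩ := hpU x
    exact ⟨2 * n, by rw [hev]; exact hn⟩
  · intro x
    obtain ⟨n, hn⟩ := hpL x
    exact ⟨2 * n, by rw [hev]; exact hn⟩

/-- orbit along a conjugating sequence -/
lemma orbit_zpow {F : P} {q : ℤ → ℚ} (h : ∀ n, F (q n) = q (n + 1)) :
    ∀ k : ℤ, (F ^ k) (q 0) = q k := by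
  have hinv : ∀ n, F⁻¹ (q (n + 1)) = q n := by
    intro n
    rw [← h n]
    simp
  intro k
  induction k using Int.induction_on with
  | zero => simp
  | succ n ih =>
    rw [show (n:ℤ) + 1 = 1 + (n:ℤ) by ring, zpow_add, zpow_one, Equiv.Perm.mul_apply, ih, h]
    ring_nf
  | pred n ih =>
    rw [show -(n:ℤ) - 1 = -1 + -(n:ℤ) by ring, zpow_add, zpow_neg_one, Equiv.Perm.mul_apply, ih,
      show -(n:ℤ) = (-(n:ℤ) - 1) + 1 by ring, hinv (-(n:ℤ) - 1)]
    ring_nf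

end Stmt1Aux

namespace Stmt1Aux

lemma zpow_apply_zpow (f : P) (m n : ℤ) (x : ℚ) :
    (f ^ m) ((f ^ n) x) = (f ^ (m + n)) x := by
  rw [← Equiv.Perm.mul_apply, ← zpow_add]

lemma zpow_cancel (f : P) (i : ℤ) (x : ℚ) : (f ^ (-i)) ((f ^ i) x) = x := by
  rw [zpow_apply_zpow, neg_add_cancel, zpow_zero]
  rfl

lemma zpow_cancel' (f : P) (i : ℤ) (x : ℚ) : (f ^ i) ((f ^ (-i)) x) = x := by
  rw [zpow_apply_zpow, add_neg_cancel, zpow_zero]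
  rfl

/-- decomposition of an arbitrary automorphism into strongly positive parts -/
lemma decomp {h : P} (hh : StrictMono ⇑h) :
    ∃ f f' : P, StrictMono ⇑f ∧ StrictMono ⇑f' ∧ (∀ x, x + 1 ≤ f x) ∧ (∀ x, x + 1 ≤ f' x) ∧
      f'⁻¹ * f = h := by
  have hhi : StrictMono ⇑h⁻¹ := sm_inv hh
  set M : P := {
    toFun := fun x => max x (h x) + 1
    invFun := fun y => min (y - 1) (h⁻¹ (y - 1))
    left_inv := by
      intro x
      show min (max x (h x) + 1 - 1) (h⁻¹ (max x (h x) + 1 - 1)) = x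
      simp only [add_sub_cancel_right]
      rcases le_total (h x) x with hc | hc
      · rw [max_eq_left hc]
        have : x ≤ h⁻¹ x := by
          have := hhi.monotone hc
          simpa using this
        exact min_eq_left this
      · rw [max_eq_right hc]
        have : h⁻¹ (h x) = x := by simp
        rw [min_comm, this]
        exact min_eq_left hc
    right_inv := by
      intro y
      show max (min (y - 1) (h⁻¹ (y - 1))) (h (min (y - 1) (h⁻¹ (y - 1)))) + 1 = y
      rcases le_total (y - 1) (h⁻¹ (y - 1)) with hc | hc
      · rw [min_eq_left hc]
        have h2 : h (y - 1) ≤ y - 1 := by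
          have := hh.monotone hc
          simpa using this
        rw [max_eq_left h2]
        ring
      · rw [min_eq_right hc]
        have h2 : h (h⁻¹ (y - 1)) = y - 1 := by simp
        rw [h2, max_eq_right hc]
        ring } with hM
  have hMf : ∀ x, M x = max x (h x) + 1 := fun x => rfl
  have hsmM : StrictMono ⇑M := by
    intro x y hxy
    rw [hMf, hMf]
    have := max_lt_max hxy (hh hxy); linarith
  refine ⟨M, M * h⁻¹, hsmM, sm_mul hsmM hhi, ?_, ?_, ?_⟩
  · intro x
    have := le_max_left x (h x)
    rw [hMf]; linarith
  · intro x
    have h1 : (M * h⁻¹) x = max (h⁻¹ x) (h (h⁻¹ x)) + 1 := rfl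
    have h2 : h (h⁻¹ x) = x := by simp
    rw [h1, h2]
    have := le_max_right (h⁻¹ x) x
    linarith
  · rw [mul_inv_rev, inv_inv, mul_assoc, inv_mul_cancel, mul_one]

/-- strongly positive implies single plus orbital -/
lemma SP_to_single {f : P} (hSP : ∀ x, x + 1 ≤ f x) : SinglePlusQ f := by
  have hup : ∀ n : ℕ, (n : ℚ) ≤ (f ^ (n : ℤ)) 0 := by
    intro n
    induction n with
    | zero => simp
    | succ n ih =>
      have e : (f ^ ((n : ℤ) + 1)) 0 = f ((f ^ (n : ℤ)) 0) := by
        rw [show (n:ℤ) + 1 = 1 + n by ring, ← zpow_apply_zpow f 1 n, zpow_one]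
      push_cast
      rw [e]
      have := hSP ((f ^ (n : ℤ)) 0)
      linarith
  have hinv : ∀ y, f⁻¹ y ≤ y - 1 := by
    intro y
    have h1 := hSP (f⁻¹ y)
    have h2 : f (f⁻¹ y) = y := by simp
    rw [h2] at h1
    linarith
  have hdn : ∀ n : ℕ, (f ^ (-(n : ℤ))) 0 ≤ -(n : ℚ) := by
    intro n
    induction n with
    | zero => simp
    | succ n ih =>
      have e : (f ^ (-((n:ℤ) + 1))) 0 = f⁻¹ ((f ^ (-(n : ℤ))) 0) := by
        rw [show -((n:ℤ) + 1) = -1 + -(n:ℤ) by ring, ← zpow_apply_zpow f (-1) (-(n:ℤ)),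
          zpow_neg_one]
      push_cast
      rw [e]
      have := hinv ((f ^ (-(n : ℤ))) 0)
      linarith
  refine ⟨0, by linarith [hSP 0], ?_, ?_⟩
  · intro x
    obtain ⟨n, hn⟩ := exists_nat_gt x
    exact ⟨n, lt_of_lt_of_le hn (hup n)⟩
  · intro x
    obtain ⟨n, hn⟩ := exists_nat_gt (-x)
    exact ⟨-(n:ℤ), lt_of_le_of_lt (hdn n) (by linarith)⟩

/-- affine bijection between two half-open rational intervals -/
lemma AFF {a b a' b' : ℚ} (hab : a < b) (hab' : a' < b') :
    ∃ φ : ℚ → ℚ, (∀ x, a ≤ x → x < b → a' ≤ φ x ∧ φ x < b') ∧ (∀ x y, x < y → φ x < φ y) ∧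
      (∀ z, a' ≤ z → z < b' → ∃ x, a ≤ x ∧ x < b ∧ φ x = z) := by
  have hden : (0:ℚ) < b - a := by linarith
  have hnum : (0:ℚ) < b' - a' := by linarith
  have hslope : (0:ℚ) < (b' - a') / (b - a) := div_pos hnum hden
  refine ⟨fun x => a' + (x - a) * ((b' - a') / (b - a)), ?_, ?_, ?_⟩
  · intro x h1 h2
    constructor
    · nlinarith [mul_nonneg (by linarith : (0:ℚ) ≤ x - a) hslope.le]
    · have h3 : (x - a) * ((b' - a') / (b - a)) < (b - a) * ((b' - a') / (b - a)) :=
        mul_lt_mul_of_pos_right (by linarith) hslope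
      have h4 : (b - a) * ((b' - a') / (b - a)) = b' - a' := by
        rw [mul_comm]; exact div_mul_cancel₀ _ (ne_of_gt hden)
      simp only
      linarith
  · intro x y hxy
    have := mul_lt_mul_of_pos_right (by linarith : x - a < y - a) hslope
    simp only
    linarith
  · intro z h1 h2
    refine ⟨a + (z - a') * ((b - a) / (b' - a')), ?_, ?_, ?_⟩
    · nlinarith [mul_nonneg (by linarith : (0:ℚ) ≤ z - a') (div_pos hden hnum).le]
    · have h3 : (z - a') * ((b - a) / (b' - a')) < (b' - a') * ((b - a) / (b' - a')) :=
        mul_lt_mul_of_pos_right (by linarith) (div_pos hden hnum)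
      have h4 : (b' - a') * ((b - a) / (b' - a')) = b - a := by
        rw [mul_comm]; exact div_mul_cancel₀ _ (ne_of_gt hnum)
      linarith
    · show a' + (a + (z - a') * ((b - a) / (b' - a')) - a) * ((b' - a') / (b - a)) = z
      have e1 : a + (z - a') * ((b - a) / (b' - a')) - a = (z - a') * ((b - a) / (b' - a')) := by
        ring
      rw [e1, mul_assoc, div_mul_div_comm, mul_comm (b - a),
        div_self (mul_ne_zero (ne_of_gt hnum) (ne_of_gt hden)), mul_one]
      ring

/-- two elements with a single plus orbital are conjugate -/
lemma conj_single {f f' : P} (hf : StrictMono ⇑f) (hf' : StrictMono ⇑f')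
    (h1 : SinglePlusQ f) (h2 : SinglePlusQ f') :
    ∃ H : P, StrictMono ⇑H ∧ H * f * H⁻¹ = f' := by
  obtain ⟨a, ha, haU, haL⟩ := h1
  obtain ⟨a', ha', haU', haL'⟩ := h2
  have hfz := sm_zpow hf
  have hfz' := sm_zpow hf'
  have hs1 : ∀ i : ℤ, (f ^ i) (f a) = (f ^ (i+1)) a := by
    intro i
    rw [show f a = (f ^ (1:ℤ)) a by rw [zpow_one], zpow_apply_zpow]
  have ht1 : ∀ i : ℤ, (f' ^ i) (f' a') = (f' ^ (i+1)) a' := by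
    intro i
    rw [show f' a' = (f' ^ (1:ℤ)) a' by rw [zpow_one], zpow_apply_zpow]
  have hs : ∀ i : ℤ, (f ^ i) a < (f ^ (i+1)) a := fun i => by
    rw [← hs1 i]; exact hfz i ha
  have ht : ∀ i : ℤ, (f' ^ i) a' < (f' ^ (i+1)) a' := fun i => by
    rw [← ht1 i]; exact hfz' i ha'
  have hbackL : ∀ (i:ℤ) (x:ℚ), (f ^ i) a ≤ x → a ≤ (f ^ (-i)) x := by
    intro i x hx
    have := (hfz (-i)).monotone hx
    rwa [zpow_cancel f i a] at this
  have hbackR : ∀ (i:ℤ) (x:ℚ), x < (f ^ (i+1)) a → (f ^ (-i)) x < f a := by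
    intro i x hx
    have h0 := hfz (-i) hx
    rwa [show (f ^ (-i)) ((f ^ (i+1)) a) = f a by
      rw [zpow_apply_zpow, show -i + (i+1) = 1 by ring, zpow_one]] at h0
  obtain ⟨φ, hφmap, hφmono, hφsurj⟩ := AFF ha ha'
  obtain ⟨W, hWsm, hWblock⟩ := BLD (s := fun i => (f ^ i) a) (t := fun i => (f' ^ i) a')
    hs ht haU haL haU' haL' (fun i x => (f' ^ i) (φ ((f ^ (-i)) x)))
    (by
      intro i x hx1 hx2
      have h3 := hφmap _ (hbackL i x hx1) (hbackR i x hx2)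
      refine ⟨(hfz' i).monotone h3.1, ?_⟩
      have := hfz' i h3.2
      rwa [ht1 i] at this)
    (fun i x y hx1 hxy hy2 => hfz' i (hφmono _ _ (hfz (-i) hxy)))
    (by
      intro i y hy1 hy2
      have hz1 : a' ≤ (f' ^ (-i)) y := by
        have := (hfz' (-i)).monotone hy1
        rwa [zpow_cancel f' i a'] at this
      have hz2 : (f' ^ (-i)) y < f' a' := by
        have h0 := hfz' (-i) hy2
        rwa [show (f' ^ (-i)) ((f' ^ (i+1)) a') = f' a' by
          rw [zpow_apply_zpow, show -i + (i+1) = 1 by ring, zpow_one]] at h0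
      obtain ⟨x, hx1, hx2, hx3⟩ := hφsurj _ hz1 hz2
      refine ⟨(f ^ i) x, (hfz i).monotone hx1, ?_, ?_⟩
      · have := hfz i hx2
        rwa [hs1 i] at this
      · show (f' ^ i) (φ ((f ^ (-i)) ((f ^ i) x))) = y
        rw [zpow_cancel f i x, hx3, zpow_cancel' f' i y])
  have hs1' : ∀ i : ℤ, f ((f ^ i) a) = (f ^ (i+1)) a := by
    intro i
    rw [show f ((f ^ i) a) = (f ^ (1:ℤ)) ((f ^ i) a) by rw [zpow_one], zpow_apply_zpow, add_comm]
  have hWf : W * f = f' * W := by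
    apply Equiv.ext
    intro y
    obtain ⟨i, hy1, hy2⟩ := exists_block hs haU haL y
    have hfy1 : (f ^ (i+1)) a ≤ f y := by
      rw [← hs1' i]; exact hf.monotone hy1
    have hfy2 : f y < (f ^ (i+1+1)) a := by
      rw [← hs1' (i+1)]; exact hf hy2
    have e1 := hWblock (i+1) (f y) hfy1 hfy2
    have e2 := hWblock i y hy1 hy2
    have e3 : (f ^ (-(i+1))) (f y) = (f ^ (-i)) y := by
      rw [show f y = (f ^ (1:ℤ)) y by rw [zpow_one], zpow_apply_zpow,
        show -(i+1) + 1 = -i by ring]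
    have e4 : ∀ z : ℚ, (f' ^ (i+1)) z = f' ((f' ^ i) z) := by
      intro z
      rw [show f' ((f' ^ i) z) = (f' ^ (1:ℤ)) ((f' ^ i) z) by rw [zpow_one],
        zpow_apply_zpow, add_comm]
    show W (f y) = f' (W y)
    rw [e1, e3, e4, e2]
  refine ⟨W, hWsm, ?_⟩
  rw [hWf]
  group

end Stmt1Aux

namespace Stmt1Aux

/-- Case A: from cofinal plus-points (both directions), one conjugate suffices to
produce a single plus orbital. -/
lemma chainA {u : P} (hu : StrictMono ⇑u)
    (hUp : ∀ x : ℚ, ∃ p, x < p ∧ p < u p) (hDn : ∀ x : ℚ, ∃ p, p < x ∧ p < u p) :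
    ∃ w : P, StrictMono ⇑w ∧ SinglePlusQ (u * (w⁻¹ * u * w)) := by
  obtain ⟨p0, _, hp0⟩ := hUp 0
  obtain ⟨p, hpbase, hpup, hpdn⟩ := ZREC
    (fun x y => max (u x) (x + 1) < y ∧ y < u y)
    (fun y x => y < min (u⁻¹ x) (x - 1) ∧ y < u y) p0
    (fun x => by
      obtain ⟨z, hz1, hz2⟩ := hUp (max (u x) (x + 1))
      exact ⟨z, hz1, hz2⟩)
    (fun x => by
      obtain ⟨z, hz1, hz2⟩ := hDn (min (u⁻¹ x) (x - 1))
      exact ⟨z, hz1, hz2⟩)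
  have hplus : ∀ n : ℤ, p n < u (p n) := by
    intro n
    rcases lt_trichotomy n 0 with h | h | h
    · exact (hpdn n h).2
    · rw [h, hpbase]; exact hp0
    · have h2 := hpup (n - 1) (by omega)
      rw [sub_add_cancel] at h2
      exact h2.2
  have hgap : ∀ n : ℤ, u (p n) < p (n + 1) := by
    intro n
    rcases lt_or_ge n 0 with h | h
    · have h1 := (hpdn n h).1
      have h2 : p n < u⁻¹ (p (n+1)) := lt_of_lt_of_le h1 (min_le_left _ _)
      have h3 := hu h2
      simpa using h3
    · exact lt_of_le_of_lt (le_max_left _ _) (hpup n h).1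
  have hgap1 : ∀ n : ℤ, p n + 1 ≤ p (n + 1) := by
    intro n
    rcases lt_or_ge n 0 with h | h
    · have h1 := lt_of_lt_of_le (hpdn n h).1 (min_le_right _ _)
      linarith
    · have h1 := lt_of_le_of_lt (le_max_right _ _) (hpup n h).1
      linarith
  obtain ⟨hpU, hpL⟩ := unb_of_gaps hgap1
  obtain ⟨s, hsadj, hsU, hsL, hsev, hsod⟩ :=
    merge (p := p) (q := fun n => u (p n)) hplus hgap hpU hpL
  obtain ⟨w, hwsm, hweval⟩ := INTERP (s := s) (t := fun i => s (i - 1)) hsadj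
    (fun i => by
      show s (i - 1) < s (i + 1 - 1)
      rw [show i + 1 - 1 = i - 1 + 1 by ring]
      exact hsadj (i - 1))
    hsU hsL
    (fun x => by obtain ⟨i, hi⟩ := hsU x; exact ⟨i + 1, by simpa using hi⟩)
    (fun x => by obtain ⟨i, hi⟩ := hsL x; exact ⟨i + 1, by simpa using hi⟩)
  refine ⟨w, hwsm, ?_⟩
  have hwq : ∀ n : ℤ, w (u (p n)) = p n := by
    intro n
    have h2 := hweval (2 * n + 1)
    rw [hsod n, show 2*n+1-1 = 2*n by ring, hsev n] at h2
    exact h2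
  have hwp : ∀ n : ℤ, w (p (n + 1)) = u (p n) := by
    intro n
    have h2 := hweval (2 * (n + 1))
    rw [hsev (n+1), show 2*(n+1)-1 = 2*n+1 by ring, hsod n] at h2
    exact h2
  have hFq : ∀ n : ℤ, (u * (w⁻¹ * u * w)) (u (p n)) = u (p (n + 1)) := by
    intro n
    have e1 : w⁻¹ (u (p n)) = p (n + 1) := by
      rw [← hwp n]; simp
    show u (w⁻¹ (u (w (u (p n))))) = u (p (n+1))
    rw [hwq n, e1]
  have horb := orbit_zpow (F := u * (w⁻¹ * u * w)) (q := fun n => u (p n)) hFq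
  refine ⟨u (p 0), ?_, ?_, ?_⟩
  · have h2 := hFq 0
    rw [h2]
    exact lt_trans (hgap 0) (hplus (0 + 1))
  · intro x
    obtain ⟨n, hn⟩ := hpU x
    exact ⟨n, by rw [horb n]; exact lt_trans hn (hplus n)⟩
  · intro x
    obtain ⟨n, hn⟩ := hpL x
    refine ⟨n - 1, ?_⟩
    rw [horb (n - 1)]
    have h2 := hgap (n - 1)
    rw [sub_add_cancel] at h2
    exact lt_trans h2 hn

/-- Case B: plus-points cofinal up and minus-points cofinal down produce, using one
conjugate of `g⁻¹`, an element with plus-points cofinal in both directions. -/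
lemma chainB {g : P} (hg : StrictMono ⇑g)
    (hUp : ∀ x : ℚ, ∃ p, x < p ∧ p < g p)
    (hDn : ∀ x : ℚ, ∃ y, y < x ∧ g y < y) :
    ∃ h : P, StrictMono ⇑h ∧
      (∀ x : ℚ, ∃ p, x < p ∧ p < (h * g⁻¹ * h⁻¹ * g) p) ∧
      (∀ x : ℚ, ∃ p, p < x ∧ p < (h * g⁻¹ * h⁻¹ * g) p) := by
  have hgi : StrictMono ⇑g⁻¹ := sm_inv hg
  have hDn' : ∀ x : ℚ, ∃ s, s < x ∧ s < g⁻¹ s := by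
    intro x
    obtain ⟨y, hy1, hy2⟩ := hDn x
    refine ⟨g y, lt_trans hy2 hy1, ?_⟩
    have : g⁻¹ (g y) = y := by simp
    rw [this]; exact hy2
  obtain ⟨P0, _, hP0⟩ := hUp 0
  obtain ⟨p, hpbase, hpup, hpdn⟩ := ZREC
    (X := ℚ × ℚ × ℚ × ℚ)
    (fun v v' => v'.1 = v.2.1 + 1 ∧ v'.2.1 = max (g v'.1) v'.1 + 1 ∧
      v.2.2.2 + 1 < v'.2.2.1 ∧ v'.2.2.1 < g v'.2.2.1 ∧ v'.2.2.2 = g v'.2.2.1)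
    (fun v v' => v.1 < g⁻¹ v.1 ∧ v.2.1 = g⁻¹ v.1 ∧ v.2.1 < v'.1 ∧ v.1 < v'.1 - 1 ∧
      (∃ y, g y < y ∧ v.2.2.1 = g y ∧ v.2.2.2 = y + 1) ∧
      v.2.2.2 < v'.2.2.1 ∧ v.2.2.1 < v'.2.2.1 - 1)
    (0, max (g 0) 0 + 1, P0, g P0)
    (fun v => by
      obtain ⟨Q, hQ1, hQ2⟩ := hUp (v.2.2.2 + 1)
      exact ⟨(v.2.1 + 1, max (g (v.2.1 + 1)) (v.2.1 + 1) + 1, Q, g Q),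
        rfl, rfl, hQ1, hQ2, rfl⟩)
    (fun v' => by
      obtain ⟨s, hs1, hs2⟩ := hDn' (min (g v'.1) (v'.1 - 1))
      obtain ⟨y, hy1, hy2⟩ := hDn (v'.2.2.1 - 2)
      refine ⟨(s, g⁻¹ s, g y, y + 1), hs2, rfl, ?_, ?_, ⟨y, hy2, rfl, rfl⟩, ?_, ?_⟩
      · have h1 : s < g v'.1 := lt_of_lt_of_le hs1 (min_le_left _ _)
        have h2 := hgi h1
        simpa using h2
      · have := lt_of_lt_of_le hs1 (min_le_right _ _)
        linarith
      · simp only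
        linarith
      · simp only
        linarith)
  set A : ℤ → ℚ := fun n => (p n).1 with hA
  set B : ℤ → ℚ := fun n => (p n).2.1 with hB
  set C : ℤ → ℚ := fun n => (p n).2.2.1 with hC
  set D : ℤ → ℚ := fun n => (p n).2.2.2 with hD
  have base1 : A 0 = 0 := by show (p 0).1 = 0; rw [hpbase]
  have base2 : B 0 = max (g 0) 0 + 1 := by show (p 0).2.1 = _; rw [hpbase]
  have base3 : C 0 = P0 := by show (p 0).2.2.1 = P0; rw [hpbase]
  have base4 : D 0 = g P0 := by show (p 0).2.2.2 = g P0; rw [hpbase]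
  have hpup : ∀ n : ℤ, 0 ≤ n → A (n+1) = B n + 1 ∧
      B (n+1) = max (g (A (n+1))) (A (n+1)) + 1 ∧ D n + 1 < C (n+1) ∧
      C (n+1) < g (C (n+1)) ∧ D (n+1) = g (C (n+1)) := hpup
  have hpdn : ∀ n : ℤ, n < 0 → A n < g⁻¹ (A n) ∧ B n = g⁻¹ (A n) ∧ B n < A (n+1) ∧
      A n < A (n+1) - 1 ∧ (∃ y, g y < y ∧ C n = g y ∧ D n = y + 1) ∧
      D n < C (n+1) ∧ C n < C (n+1) - 1 := hpdn
  have fup : ∀ n : ℤ, 0 ≤ n → g (A n) < B n ∧ C n < g (C n) ∧ D n = g (C n) := by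
    intro n hn
    rcases eq_or_lt_of_le hn with h | h
    · rw [← h, base1, base2, base3, base4]
      exact ⟨by have := le_max_left (g 0) 0; linarith, hP0, rfl⟩
    · have h2 := hpup (n - 1) (by omega)
      rw [sub_add_cancel] at h2
      refine ⟨?_, h2.2.2.2.1, h2.2.2.2.2⟩
      rw [h2.2.1]
      have := le_max_left (g (A n)) (A n)
      linarith
  have fdn : ∀ n : ℤ, n < 0 → (A n < g⁻¹ (A n) ∧ B n = g⁻¹ (A n)) ∧
      ∃ y, g y < y ∧ C n = g y ∧ D n = y + 1 := by
    intro n hn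
    have h2 := hpdn n hn
    exact ⟨⟨h2.1, h2.2.1⟩, h2.2.2.2.2.1⟩
  have fAB : ∀ n : ℤ, A n < B n := by
    intro n
    rcases lt_trichotomy n 0 with h | h | h
    · have h2 := fdn n h
      rw [h2.1.2]; exact h2.1.1
    · rw [h, base1, base2]
      have := le_max_right (g 0) 0; linarith
    · have h2 := hpup (n - 1) (by omega)
      rw [sub_add_cancel] at h2
      rw [h2.2.1]
      have := le_max_right (g (A n)) (A n); linarith
  have fBA : ∀ n : ℤ, B n < A (n + 1) := by
    intro n
    rcases lt_or_ge n 0 with h | h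
    · exact (hpdn n h).2.2.1
    · have h2 := hpup n h
      rw [h2.1]; linarith
  have fAgap : ∀ n : ℤ, A n + 1 ≤ A (n + 1) := by
    intro n
    rcases lt_or_ge n 0 with h | h
    · have := (hpdn n h).2.2.2.1; linarith
    · have h2 := hpup n h
      have := fAB n
      rw [h2.1]; linarith
  have fCD : ∀ n : ℤ, C n < D n := by
    intro n
    rcases lt_or_ge n 0 with h | h
    · obtain ⟨y, hy1, hy2, hy3⟩ := (fdn n h).2
      rw [hy2, hy3]; linarith
    · have h2 := fup n h
      rw [h2.2.2]; exact h2.2.1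
  have fDC : ∀ n : ℤ, D n < C (n + 1) := by
    intro n
    rcases lt_or_ge n 0 with h | h
    · exact (hpdn n h).2.2.2.2.2.1
    · have h2 := hpup n h
      have := h2.2.2.1; linarith
  have fCgap : ∀ n : ℤ, C n + 1 ≤ C (n + 1) := by
    intro n
    rcases lt_or_ge n 0 with h | h
    · have := (hpdn n h).2.2.2.2.2.2; linarith
    · have h2 := hpup n h
      have h3 := fCD n
      have := h2.2.2.1; linarith
  obtain ⟨hAU, hAL⟩ := unb_of_gaps fAgap
  obtain ⟨hCU, hCL⟩ := unb_of_gaps fCgap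
  have hCmono : StrictMono C := strictMono_int_of_lt_succ (fun n => by linarith [fCgap n])
  obtain ⟨σ, hσadj, hσU, hσL, hσev, hσod⟩ := merge (p := A) (q := B) fAB fBA hAU hAL
  obtain ⟨τ, hτadj, hτU, hτL, hτev, hτod⟩ := merge (p := C) (q := D) fCD fDC hCU hCL
  obtain ⟨h, hhsm, hheval⟩ := INTERP hσadj hτadj hσU hσL hτU hτL
  have hhA : ∀ n : ℤ, h (A n) = C n := by
    intro n
    have h2 := hheval (2 * n)
    rwa [hσev n, hτev n] at h2
  have hhB : ∀ n : ℤ, h (B n) = D n := by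
    intro n
    have h2 := hheval (2 * n + 1)
    rwa [hσod n, hτod n] at h2
  refine ⟨h, hhsm, ?_, ?_⟩
  · intro x
    obtain ⟨n', hn'⟩ := hCU x
    set m := max n' 0 with hm
    refine ⟨C m, lt_of_lt_of_le hn' (hCmono.monotone (le_max_left _ _)), ?_⟩
    obtain ⟨f1, f2, f3⟩ := fup m (le_max_right _ _)
    show C m < h (g⁻¹ (h⁻¹ (g (C m))))
    rw [← f3]
    have e1 : h⁻¹ (D m) = B m := by rw [← hhB m]; simp
    rw [e1]
    have e2 : A m < g⁻¹ (B m) := by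
      have h3 := hgi f1
      simpa using h3
    have := hhsm e2
    rwa [hhA m] at this
  · intro x
    obtain ⟨n0, hn0⟩ := hCL x
    set n := min n0 0 - 1 with hn
    obtain ⟨⟨d1, d2⟩, y, hy1, hy2, hy3⟩ := fdn n (by omega)
    refine ⟨y, ?_, ?_⟩
    · have h3 : C (n + 1) ≤ C n0 := hCmono.monotone (by omega)
      have h4 := fDC n
      rw [hy3] at h4
      linarith
    · show y < h (g⁻¹ (h⁻¹ (g y)))
      rw [← hy2]
      have e1 : h⁻¹ (C n) = A n := by rw [← hhA n]; simp
      rw [e1, ← d2, hhB n, hy3]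
      linarith

end Stmt1Aux

namespace Stmt1Aux

lemma up_flip {g : P} (hg : StrictMono ⇑g) (h : ∀ x : ℚ, ∃ p, x < p ∧ g p < p) :
    ∀ x : ℚ, ∃ p, x < p ∧ p < g⁻¹ p := by
  intro x
  obtain ⟨p, hp1, hp2⟩ := h (g⁻¹ x)
  refine ⟨g p, ?_, ?_⟩
  · have h2 := hg hp1
    simpa using h2
  · have e : g⁻¹ (g p) = p := by simp
    rw [e]; exact hp2

lemma dn_flip {g : P} (h : ∀ x : ℚ, ∃ p, p < x ∧ g p < p) :
    ∀ x : ℚ, ∃ p, p < x ∧ p < g⁻¹ p := by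
  intro x
  obtain ⟨y, hy1, hy2⟩ := h x
  refine ⟨g y, lt_trans hy2 hy1, ?_⟩
  have e : g⁻¹ (g y) = y := by simp
  rw [e]; exact hy2

lemma dn_keep {g : P} (hg : StrictMono ⇑g) (h : ∀ x : ℚ, ∃ p, p < x ∧ p < g p) :
    ∀ x : ℚ, ∃ p, p < x ∧ g⁻¹ p < p := by
  intro x
  obtain ⟨p, hp1, hp2⟩ := h x
  refine ⟨p, hp1, ?_⟩
  have h2 := (sm_inv hg) hp2
  simpa using h2

end Stmt1Aux



/-- If `g` is an unbounded automorphism of `(ℚ, ≤)` (neither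
right-bounded nor left-bounded), then the normal closure of `{g}` in `Aut(ℚ, ≤)`
is the whole group. -/
theorem stmt1 (g : QAut)
    (hnr : ¬ ∃ a : ℚ, ∀ b : ℚ, a < b → (g : Equiv.Perm ℚ) b = b)
    (hnl : ¬ ∃ a : ℚ, ∀ b : ℚ, b < a → (g : Equiv.Perm ℚ) b = b) :
    Subgroup.normalClosure ({g} : Set QAut) = ⊤ := by
  classical
  open Stmt1Aux in
  set N := Subgroup.normalClosure ({g} : Set QAut) with hNdef
  have hgsm : StrictMono ⇑(g : Stmt1Aux.P) := (Stmt1Aux.mem_QAut_iff _).1 g.2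
  have hgN : g ∈ N := Subgroup.subset_normalClosure (Set.mem_singleton g)
  push_neg at hnr hnl
  have hU : (∀ x : ℚ, ∃ p, x < p ∧ p < (g : Stmt1Aux.P) p) ∨
      (∀ x : ℚ, ∃ p, x < p ∧ (g : Stmt1Aux.P) p < p) := by
    by_contra hc
    push_neg at hc
    obtain ⟨⟨x₁, hx₁⟩, ⟨x₂, hx₂⟩⟩ := hc
    obtain ⟨b, hb1, hb2⟩ := hnr (max x₁ x₂)
    have h1 := hx₁ b (lt_of_le_of_lt (le_max_left _ _) hb1)
    have h2 := hx₂ b (lt_of_le_of_lt (le_max_right _ _) hb1)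
    exact hb2 (le_antisymm h1 h2)
  have hD : (∀ x : ℚ, ∃ p, p < x ∧ p < (g : Stmt1Aux.P) p) ∨
      (∀ x : ℚ, ∃ p, p < x ∧ (g : Stmt1Aux.P) p < p) := by
    by_contra hc
    push_neg at hc
    obtain ⟨⟨x₁, hx₁⟩, ⟨x₂, hx₂⟩⟩ := hc
    obtain ⟨b, hb1, hb2⟩ := hnl (min x₁ x₂)
    have h1 := hx₁ b (lt_of_lt_of_le hb1 (min_le_left _ _))
    have h2 := hx₂ b (lt_of_lt_of_le hb1 (min_le_right _ _))
    exact hb2 (le_antisymm h1 h2)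
  have key : ∃ uQ : QAut, uQ ∈ N ∧ (∀ x : ℚ, ∃ p, x < p ∧ p < (uQ : Stmt1Aux.P) p) ∧
      (∀ x : ℚ, ∃ p, p < x ∧ p < (uQ : Stmt1Aux.P) p) := by
    rcases hU with hU | hU <;> rcases hD with hD | hD
    · exact ⟨g, hgN, hU, hD⟩
    · -- U+ D−
      obtain ⟨h, hhsm, hcup, hcdn⟩ := Stmt1Aux.chainB hgsm hU hD
      refine ⟨(⟨h, (Stmt1Aux.mem_QAut_iff h).2 hhsm⟩ : QAut) * g⁻¹ *
        (⟨h, (Stmt1Aux.mem_QAut_iff h).2 hhsm⟩ : QAut)⁻¹ * g, ?_, hcup, hcdn⟩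
      exact Subgroup.mul_mem _
        ((Subgroup.normalClosure_normal).conj_mem _ (Subgroup.inv_mem _ hgN) _) hgN
    · -- U− D+
      obtain ⟨h, hhsm, hcup, hcdn⟩ :=
        Stmt1Aux.chainB (Stmt1Aux.sm_inv hgsm) (Stmt1Aux.up_flip hgsm hU)
          (Stmt1Aux.dn_keep hgsm hD)
      refine ⟨(⟨h, (Stmt1Aux.mem_QAut_iff h).2 hhsm⟩ : QAut) * (g⁻¹)⁻¹ *
        (⟨h, (Stmt1Aux.mem_QAut_iff h).2 hhsm⟩ : QAut)⁻¹ * g⁻¹, ?_, hcup, hcdn⟩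
      exact Subgroup.mul_mem _
        ((Subgroup.normalClosure_normal).conj_mem _
          (Subgroup.inv_mem _ (Subgroup.inv_mem _ hgN)) _) (Subgroup.inv_mem _ hgN)
    · -- U− D−
      exact ⟨g⁻¹, Subgroup.inv_mem _ hgN, Stmt1Aux.up_flip hgsm hU, Stmt1Aux.dn_flip hD⟩
  obtain ⟨uQ, huN, hcup, hcdn⟩ := key
  have husm : StrictMono ⇑(uQ : Stmt1Aux.P) := (Stmt1Aux.mem_QAut_iff _).1 uQ.2
  obtain ⟨w, hwsm, hFsingle⟩ := Stmt1Aux.chainA husm hcup hcdn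
  have hwQ : (⟨w, (Stmt1Aux.mem_QAut_iff w).2 hwsm⟩ : QAut) ∈ (⊤ : Subgroup QAut) :=
    Subgroup.mem_top _
  set wQ : QAut := ⟨w, (Stmt1Aux.mem_QAut_iff w).2 hwsm⟩ with hwQdef
  set FQ : QAut := uQ * (wQ⁻¹ * uQ * wQ) with hFQdef
  have hFN : FQ ∈ N := by
    refine Subgroup.mul_mem _ huN ?_
    have h2 := (Subgroup.normalClosure_normal).conj_mem _ huN wQ⁻¹
    rwa [inv_inv] at h2
  have hFsm : StrictMono ⇑(FQ : Stmt1Aux.P) := (Stmt1Aux.mem_QAut_iff _).1 FQ.2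
  have hFsp : SinglePlusQ (FQ : Stmt1Aux.P) := hFsingle
  apply (Subgroup.eq_top_iff' _).2
  intro x
  have hxsm : StrictMono ⇑(x : Stmt1Aux.P) := (Stmt1Aux.mem_QAut_iff _).1 x.2
  obtain ⟨f, f', hfsm, hf'sm, hfSP, hf'SP, hdec⟩ := Stmt1Aux.decomp hxsm
  have hmem : ∀ (e : Stmt1Aux.P) (he : StrictMono ⇑e), SinglePlusQ e →
      (⟨e, (Stmt1Aux.mem_QAut_iff e).2 he⟩ : QAut) ∈ N := by
    intro e he hesp
    obtain ⟨H, hHsm, hHconj⟩ := Stmt1Aux.conj_single hFsm he hFsp hesp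
    have heq : (⟨e, (Stmt1Aux.mem_QAut_iff e).2 he⟩ : QAut) =
        (⟨H, (Stmt1Aux.mem_QAut_iff H).2 hHsm⟩ : QAut) * FQ *
        (⟨H, (Stmt1Aux.mem_QAut_iff H).2 hHsm⟩ : QAut)⁻¹ :=
      Subtype.ext hHconj.symm
    rw [heq]
    exact (Subgroup.normalClosure_normal).conj_mem _ hFN _
  have hfN := hmem f hfsm (Stmt1Aux.SP_to_single hfSP)
  have hf'N := hmem f' hf'sm (Stmt1Aux.SP_to_single hf'SP)
  have hxeq : x = (⟨f', (Stmt1Aux.mem_QAut_iff f').2 hf'sm⟩ : QAut)⁻¹ *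
      (⟨f, (Stmt1Aux.mem_QAut_iff f).2 hfsm⟩ : QAut) := Subtype.ext hdec.symm
  rw [hxeq]
  exact Subgroup.mul_mem _ (Subgroup.inv_mem _ hf'N) hfN
end

section
/- Let M be a universal n-linear order and g ∈ Aut(M). (a) If g a <_i a for every a ∈ M and every i ∈ {1, …, n}, then g moves almost R-maximally: for every finite X ⊆ M and every tuple b_1, …, b_l ∈ M with no entry in X, there exist a_1, …, a_l ∈ M realizing the same quantifier-free type over X as b_1, …, b_l (for every order index k and all s, t: a_s <_k a_t iff b_s <_k b_t, and for every x ∈ X: a_s <_k x iff b_s <_k x, and x <_k a_s iff x <_k b_s; in particular no a_s lies in X) such that (a_1, …, a_l) is independent from (g a_1, …, g a_l) over X, meaning: for every order index k and all s, t, if a_s <_k g a_t and g a_t ∉ X, then there exists x ∈ X with a_s <_k x and x <_k g a_t. (b) Symmetrically, if a <_i g a for every a ∈ M and every i, then g moves almost L-maximally: for every such X and tuple b_1, …, b_l there is a tuple a_1, …, a_l realizing the same quantifier-free type over X such that (g a_1, …, g a_l) is independent from (a_1, …, a_l) over X, meaning: for every k and all s, t, if g a_s <_k a_t and g a_s ∉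 X, then there exists x ∈ X with g a_s <_k x and x <_k a_t. -/
/-- A set `M` equipped with `n` linear orders `<_1, …, <_n`. -/
structure NLinear (n : ℕ) (M : Type*) where
  lt : Fin n → M → M → Prop
  irrefl : ∀ i a, ¬ lt i a a
  trans : ∀ i a b c, lt i a b → lt i b c → lt i a c
  total : ∀ i a b, lt i a b ∨ a = b ∨ lt i b a

/-- `M` with its `n` linear orders is a universal `n`-linear order: it is countably
infinite and has the one-point extension property. -/
structure IsUniversalNLinear (n : ℕ) (M : Type*) (L : NLinear n M) : Prop where
  countable : Countable M
  infinite : Infinite M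
  extension : ∀ (A : Finset M) (D : Fin n → Set M),
    (∀ i, D i ⊆ ↑A) →
    (∀ i, ∀ a ∈ A, ∀ b ∈ A, L.lt i a b → b ∈ D i → a ∈ D i) →
    ∃ x, x ∉ A ∧ ∀ i, ∀ a ∈ A, (L.lt i a x ↔ a ∈ D i)

/-- The automorphism group of an `n`-linearly ordered set, as a subgroup of `Equiv.Perm M`. -/
def NLinear.aut {n : ℕ} {M : Type*} (L : NLinear n M) : Subgroup (Equiv.Perm M) where
  carrier := {g | ∀ i a b, L.lt i a b ↔ L.lt i (g a) (g b)}
  one_mem' := fun _ _ _ => Iff.rfl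
  mul_mem' := by
    intro g h hg hh i a b
    exact (hh i a b).trans (hg i (h a) (h b))
  inv_mem' := by
    intro g hg i a b
    simpa using (hg i (g⁻¹ a) (g⁻¹ b)).symm

/-- `f` has a single `+`-orbital with respect to `<_m`. -/
def NLinear.SinglePlus {n : ℕ} {M : Type*} (L : NLinear n M) (m : Fin n)
    (f : Equiv.Perm M) : Prop :=
  ∃ a : M, L.lt m a (f a) ∧ (∀ x : M, ∃ k : ℤ, L.lt m x ((f ^ k) a)) ∧
    (∀ x : M, ∃ k : ℤ, L.lt m ((f ^ k) a) x)

/-- `f` has a single `−`-orbital with respect to `<_m`. -/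
def NLinear.SingleMinus {n : ℕ} {M : Type*} (L : NLinear n M) (m : Fin n)
    (f : Equiv.Perm M) : Prop :=
  ∃ a : M, L.lt m (f a) a ∧ (∀ x : M, ∃ k : ℤ, L.lt m x ((f ^ k) a)) ∧
    (∀ x : M, ∃ k : ℤ, L.lt m ((f ^ k) a) x)

/-- `f` has a `+`-orbital unbounded above with respect to `<_m`. -/
def NLinear.PlusUnbAbove {n : ℕ} {M : Type*} (L : NLinear n M) (m : Fin n)
    (f : Equiv.Perm M) : Prop :=
  ∃ a : M, L.lt m a (f a) ∧ ∀ x : M, ∃ k : ℤ, L.lt m x ((f ^ k) a)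

/-- `f` has a `−`-orbital unbounded below with respect to `<_m`. -/
def NLinear.MinusUnbBelow {n : ℕ} {M : Type*} (L : NLinear n M) (m : Fin n)
    (f : Equiv.Perm M) : Prop :=
  ∃ b : M, L.lt m (f b) b ∧ ∀ x : M, ∃ k : ℤ, L.lt m ((f ^ k) b) x


/-!
Fix one of the orders. Since `g` moves every point down, one can choose in each gap of `X` met
by the tuple `b` a nonempty open interval, a box, such that `g` maps the box into a single gap
of `X` and strictly below the box chosen in that gap: choosing the boxes from the top gap down,
each box is placed above the images of the boxes chosen before. Any tuple `a` whose entries lie,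
in every order, in the boxes of the corresponding entries of `b` has the type of `b` over `X` and
is independent from its image; such a tuple exists by the extension property, built one entry at
a time. Part (b) is part (a) for the reversed orders.
-/

open Finset

section LowerCut

variable {α : Type*} [LinearOrder α]

theorem exists_between_finsets_notMem [DenselyOrdered α] [NoMinOrder α] [NoMaxOrder α]
    [Nonempty α] {S T : Finset α} (hST : ∀ s ∈ S, ∀ t ∈ T, s < t) (A : Finset α) :
    ∃ x ∉ A, (∀ s ∈ S, s < x) ∧ ∀ t ∈ T, x < t := by
  obtain ⟨m, hSm, hmT⟩ := Order.exists_between_finsets S T hST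
  -- `x` lies below `m` but above every point of `A` below `m`, hence outside `A`
  have hord : ∀ s ∈ {a ∈ A | a < m} ∪ S, ∀ t ∈ insert m T, s < t := by
    simp only [mem_union, mem_filter, mem_insert]
    rintro s (⟨-, hs⟩ | hs) t (rfl | ht)
    · exact hs
    · exact hs.trans (hmT t ht)
    · exact hSm s hs
    · exact hST s hs t ht
  obtain ⟨x, hlo, hhi⟩ := Order.exists_between_finsets _ _ hord
  have hxm : x < m := hhi m (mem_insert_self m T)
  refine ⟨x, fun hxA => ?_, fun s hs => hlo s (mem_union_right _ hs),
    fun t ht => hhi t (mem_insert_of_mem ht)⟩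
  exact lt_irrefl x (hlo x (mem_union_left _ (mem_filter.mpr ⟨hxA, hxm⟩)))

/-- Gaps of `X` are represented by lower cuts: two points outside `X` lie in the same gap of `X`
iff their lower cuts agree. -/
def lowerCut (X : Finset α) (y : α) : Finset α := {x ∈ X | x < y}

variable {X : Finset α} {u v x y z : α}

@[simp]
theorem mem_lowerCut : x ∈ lowerCut X y ↔ x ∈ X ∧ x < y := mem_filter

theorem lowerCut_mono : Monotone (lowerCut X) := fun _ _ h _ hx => by
  rw [mem_lowerCut] at hx ⊢
  exact ⟨hx.1, hx.2.trans_le h⟩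

theorem lt_iff_of_lowerCut_eq (h : lowerCut X u = lowerCut X v) (hx : x ∈ X) :
    x < u ↔ x < v := by
  simpa [hx] using Finset.ext_iff.mp h x

theorem lt_iff_notMem_lowerCut (hu : u ∉ X) (hx : x ∈ X) : u < x ↔ x ∉ lowerCut X u := by
  simp only [mem_lowerCut, hx, true_and, not_lt]
  exact (ne_of_mem_of_not_mem hx hu).symm.le_iff_lt.symm

theorem lowerCut_eq_of_forall {C : Finset α} (hC : C ⊆ X) (hlt : ∀ x ∈ C, x < z)
    (hgt : ∀ x ∈ X \ C, z < x) : lowerCut X z = C := by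
  ext x
  rw [mem_lowerCut]
  refine ⟨fun ⟨hx, hxz⟩ => ?_, fun hx => ⟨hC hx, hlt x hx⟩⟩
  by_contra hxC
  exact (hgt x (mem_sdiff.mpr ⟨hx, hxC⟩)).not_gt hxz

theorem lowerCut_eq_of_mem_Ioo (h : lowerCut X u = lowerCut X v) (hz : z ∈ Set.Ioo u v) :
    lowerCut X z = lowerCut X u :=
  le_antisymm (h ▸ lowerCut_mono hz.2.le) (lowerCut_mono hz.1.le)

theorem notMem_of_lowerCut_eq (h : lowerCut X u = lowerCut X v) (hz : z ∈ Set.Ioo u v) :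
    z ∉ X := fun hzX => ((lt_iff_of_lowerCut_eq h hzX).mpr hz.2).not_gt hz.1

theorem exists_mem_between_of_lowerCut_ne (hu : u ∉ X) (huv : u < v)
    (h : lowerCut X u ≠ lowerCut X v) : ∃ x ∈ X, u < x ∧ x < v := by
  obtain ⟨x, hxv, hxu⟩ := exists_of_ssubset ((lowerCut_mono huv.le).ssubset_of_ne h)
  have hxX := (mem_lowerCut.mp hxv).1
  exact ⟨x, hxX, (lt_iff_notMem_lowerCut hu hxX).mpr hxu, (mem_lowerCut.mp hxv).2⟩

end LowerCut

section GapBoxes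

variable {α : Type*} [LinearOrder α] (f : α ≃o α) (X : Finset α)

structure IsGapBox (C : Finset α) (l h : α) : Prop where
  lt : l < h
  lowerCut_left : lowerCut X l = C
  lowerCut_right : lowerCut X h = C
  apply_right_notMem : f h ∉ X
  lowerCut_apply : lowerCut X (f l) = lowerCut X (f h)

def IsGapBoxFamily (𝒞 : Finset (Finset α)) (lo hi : Finset α → α) : Prop :=
  ∀ C ∈ 𝒞, IsGapBox f X C (lo C) (hi C) ∧
    ∀ D ∈ 𝒞, lowerCut X (f (hi C)) = D → f (hi C) < lo D

variable {f X}

theorem IsGapBox.lowerCut_of_mem {C : Finset α} {l h u : α} (hB : IsGapBox f X C l h)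
    (hu : u ∈ Set.Ioo l h) : lowerCut X u = C ∧ u ∉ X := by
  have hlh := hB.lowerCut_left.trans hB.lowerCut_right.symm
  exact ⟨(lowerCut_eq_of_mem_Ioo hlh hu).trans hB.lowerCut_left, notMem_of_lowerCut_eq hlh hu⟩

theorem IsGapBox.lowerCut_apply_of_mem {C : Finset α} {l h u : α} (hB : IsGapBox f X C l h)
    (hu : u ∈ Set.Ioo l h) : lowerCut X (f u) = lowerCut X (f h) :=
  (lowerCut_eq_of_mem_Ioo hB.lowerCut_apply ⟨f.lt_iff_lt.mpr hu.1, f.lt_iff_lt.mpr hu.2⟩).trans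
    hB.lowerCut_apply

variable [DenselyOrdered α] [NoMinOrder α] [NoMaxOrder α] [Nonempty α]

variable (f X) in
theorem exists_isGapBox (hf : ∀ y, f y < y) {a : α} (ha : a ∉ X) (B : Finset α)
    (hB : ∀ z ∈ B, z ∉ X ∧ lowerCut X z = lowerCut X a) :
    ∃ l h, IsGapBox f X (lowerCut X a) l h ∧ f h < l ∧ ∀ z ∈ B, z < l := by
  have hupper : ∀ z, z ∉ X → lowerCut X z = lowerCut X a →
      ∀ x ∈ X \ lowerCut X a, z < x := by
    intro z hz hza x hx
    rw [mem_sdiff, ← hza] at hx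
    exact (lt_iff_notMem_lowerCut hz hx.1).mpr hx.2
  obtain ⟨h, hhA, hlo_h, hhi_h⟩ := exists_between_finsets_notMem
    (S := lowerCut X a ∪ B) (T := X \ lowerCut X a) (by
      simp only [mem_union]
      rintro s (hs | hs)
      · exact fun t ht => (mem_lowerCut.mp hs).2.trans (hupper a ha rfl t ht)
      · exact hupper s (hB s hs).1 (hB s hs).2)
    (X.image f.symm)
  have hcut_h : lowerCut X h = lowerCut X a :=
    lowerCut_eq_of_forall (filter_subset _ _) (fun x hx => hlo_h x (mem_union_left _ hx)) hhi_h
  have hfh : f h ∉ X := fun hX => hhA (mem_image.mpr ⟨f h, hX, f.symm_apply_apply h⟩)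
  -- `l` lies above `f⁻¹ x` for every `x ∈ X` below `f h`, so `f l` is in the gap of `f h`
  obtain ⟨l, hlo_l, hhi_l⟩ := Order.exists_between_finsets
    (insert (f h) (lowerCut X a ∪ B ∪ (lowerCut X (f h)).image f.symm)) {h} (by
      simp only [mem_insert, mem_union, mem_image, mem_singleton]
      rintro s (rfl | (hs | ⟨x, hx, rfl⟩)) t rfl
      · exact hf t
      · exact hlo_h s (mem_union.mpr hs)
      · exact f.symm_apply_lt.mpr (mem_lowerCut.mp hx).2)
  have hlh : l < h := hhi_l h (mem_singleton_self h)
  refine ⟨l, h, ⟨hlh, ?_, hcut_h, hfh, ?_⟩, hlo_l _ (mem_insert_self _ _),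
    fun z hz => hlo_l z (mem_insert_of_mem (mem_union_left _ (mem_union_right _ hz)))⟩
  · exact lowerCut_eq_of_forall (filter_subset _ _)
      (fun x hx => hlo_l x (mem_insert_of_mem (mem_union_left _ (mem_union_left _ hx))))
      (fun x hx => hlh.trans (hhi_h x hx))
  · refine le_antisymm (lowerCut_mono (f.lt_iff_lt.mpr hlh).le) fun x hx => ?_
    have hxl : f.symm x < l :=
      hlo_l _ (mem_insert_of_mem (mem_union_right _ (mem_image_of_mem _ hx)))
    exact mem_lowerCut.mpr ⟨(mem_lowerCut.mp hx).1, f.symm_apply_lt.mp hxl⟩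

theorem IsGapBoxFamily.exists_insert (hf : ∀ y, f y < y) {𝒞 : Finset (Finset α)}
    {lo hi : Finset α → α} (hfam : IsGapBoxFamily f X 𝒞 lo hi) {a : α} (ha : a ∉ X)
    (haC : lowerCut X a ∉ 𝒞) (hbelow : ∀ D ∈ 𝒞, lowerCut X a ⊆ D) :
    ∃ lo' hi', IsGapBoxFamily f X (insert (lowerCut X a) 𝒞) lo' hi' := by
  classical
  obtain ⟨l, h, hbox, hhl, hB⟩ := exists_isGapBox f X hf ha
    ((𝒞.filter fun C => lowerCut X (f (hi C)) = lowerCut X a).image (f ∘ hi)) (by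
      simp only [mem_image, mem_filter, Function.comp]
      rintro _ ⟨C, ⟨hC, hCA⟩, rfl⟩
      exact ⟨(hfam C hC).1.apply_right_notMem, hCA⟩)
  have hne : ∀ C ∈ 𝒞, C ≠ lowerCut X a := fun C hC h => haC (h ▸ hC)
  refine ⟨Function.update lo (lowerCut X a) l, Function.update hi (lowerCut X a) h,
    fun C hC => ?_⟩
  rcases mem_insert.mp hC with rfl | hC
  · simp only [Function.update_self]
    refine ⟨hbox, fun D hD hfD => ?_⟩
    rcases mem_insert.mp hD with rfl | hD
    · simpa using hhl
    · exfalso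
      apply hne D hD
      refine le_antisymm ?_ (hbelow D hD)
      rw [← hfD, ← hbox.lowerCut_right]
      exact lowerCut_mono (hf h).le
  · rw [Function.update_of_ne (hne C hC), Function.update_of_ne (hne C hC)]
    refine ⟨(hfam C hC).1, fun D hD hfD => ?_⟩
    rcases mem_insert.mp hD with rfl | hD
    · rw [Function.update_self]
      exact hB _ (mem_image_of_mem _ (mem_filter.mpr ⟨hC, hfD⟩))
    · rw [Function.update_of_ne (hne D hD)]
      exact (hfam C hC).2 D hD hfD

theorem exists_isGapBoxFamily (hf : ∀ y, f y < y) (Y : Finset α) (hY : Disjoint X Y) :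
    ∃ lo hi, IsGapBoxFamily f X (Y.image (lowerCut X)) lo hi := by
  classical
  induction Y using Finset.induction_on_min with
  | empty =>
    exact ⟨fun _ => Classical.arbitrary α, fun _ => Classical.arbitrary α,
      by simp [IsGapBoxFamily]⟩
  | insert a s has ih =>
    obtain ⟨lo, hi, hfam⟩ := ih (hY.mono_right (subset_insert a s))
    rw [image_insert]
    by_cases haC : lowerCut X a ∈ s.image (lowerCut X)
    · rw [insert_eq_of_mem haC]
      exact ⟨lo, hi, hfam⟩
    · refine hfam.exists_insert hf (disjoint_right.mp hY (mem_insert_self a s)) haC ?_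
      simp only [mem_image]
      rintro _ ⟨z, hz, rfl⟩
      exact lowerCut_mono (has z hz).le

variable (f) in
theorem exists_independent_boxes (hf : ∀ y, f y < y) {Y : Finset α} (hY : Disjoint X Y) :
    ∃ lo hi : α → α, (∀ y ∈ Y, lo y < hi y) ∧
      (∀ y ∈ Y, ∀ z ∈ Y, y < z → lo y ≤ lo z ∧ hi y ≤ hi z) ∧
      (∀ y ∈ Y, ∀ u ∈ Set.Ioo (lo y) (hi y), ∀ x ∈ X,
        (u < x ↔ y < x) ∧ (x < u ↔ x < y)) ∧
      (∀ y ∈ Y, ∀ z ∈ Y, ∀ u ∈ Set.Ioo (lo y) (hi y), ∀ v ∈ Set.Ioo (lo z) (hi z),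
        u < f v → ∃ x ∈ X, u < x ∧ x < f v) := by
  obtain ⟨lo, hi, hfam⟩ := exists_isGapBoxFamily hf Y hY
  have hbox : ∀ y ∈ Y, IsGapBox f X (lowerCut X y) (lo (lowerCut X y)) (hi (lowerCut X y)) :=
    fun y hy => (hfam _ (mem_image_of_mem _ hy)).1
  have hnotMem : ∀ y ∈ Y, y ∉ X := fun y hy hyX => disjoint_left.mp hY hyX hy
  refine ⟨fun y => lo (lowerCut X y), fun y => hi (lowerCut X y), fun y hy => (hbox y hy).lt,
    ?_, ?_, ?_⟩
  · intro y hy z hz hyz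
    by_cases hc : lowerCut X y = lowerCut X z
    · simp only [hc, le_refl, and_self]
    obtain ⟨x, hxX, hyx, hxz⟩ := exists_mem_between_of_lowerCut_ne (hnotMem y hy) hyz hc
    have below : ∀ w, lowerCut X w = lowerCut X y → w ≤ x := fun w hw =>
      not_lt.mp fun hxw => hyx.not_gt ((lt_iff_of_lowerCut_eq hw hxX).mp hxw)
    have above : ∀ w, lowerCut X w = lowerCut X z → x < w := fun w hw =>
      (lt_iff_of_lowerCut_eq hw hxX).mpr hxz
    exact ⟨((below _ (hbox y hy).lowerCut_left).trans_lt (above _ (hbox z hz).lowerCut_left)).le,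
      ((below _ (hbox y hy).lowerCut_right).trans_lt (above _ (hbox z hz).lowerCut_right)).le⟩
  · intro y hy u hu x hx
    obtain ⟨hcut, hu⟩ := (hbox y hy).lowerCut_of_mem hu
    rw [lt_iff_notMem_lowerCut hu hx, lt_iff_notMem_lowerCut (hnotMem y hy) hx, hcut]
    exact ⟨Iff.rfl, lt_iff_of_lowerCut_eq hcut hx⟩
  · intro y hy z hz u hu v hv huv
    obtain ⟨hcut_u, hu_notMem⟩ := (hbox y hy).lowerCut_of_mem hu
    by_cases hc : lowerCut X u = lowerCut X (f v)
    · exfalso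
      -- `f v` is in the gap of `u`, so `f` maps the box of `z` below the box of `y`
      have hlt := (hfam _ (mem_image_of_mem _ hz)).2 _ (mem_image_of_mem _ hy)
        (((hbox z hz).lowerCut_apply_of_mem hv).symm.trans (hc.symm.trans hcut_u))
      exact huv.not_gt (((f.lt_iff_lt.mpr hv.2).trans hlt).trans hu.1)
    · exact exists_mem_between_of_lowerCut_ne hu_notMem huv hc

end GapBoxes

namespace NLinear

variable {n : ℕ} {M : Type*} (L : NLinear n M)

def OrderAt (_L : NLinear n M) (_k : Fin n) : Type _ := M

noncomputable instance (k : Fin n) : LinearOrder (L.OrderAt k) :=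
  haveI : IsStrictTotalOrder M (L.lt k) :=
    { trichotomous := fun a b hab hba => ((L.total k a b).resolve_left hab).resolve_right hba
      irrefl := L.irrefl k
      trans := L.trans k }
  @linearOrderOfSTO M (L.lt k) _ (Classical.decRel _)

variable {L} {k : Fin n} {a b c : M}

theorem lt_of_not_lt_of_lt (hba : ¬ L.lt k b a) (hbc : L.lt k b c) : L.lt k a c :=
  lt_of_le_of_lt (α := L.OrderAt k) (not_lt.mp hba) hbc

theorem lt_of_lt_of_not_lt (hab : L.lt k a b) (hcb : ¬ L.lt k c b) : L.lt k a c :=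
  lt_of_lt_of_le (α := L.OrderAt k) hab (not_lt.mp hcb)

variable (L)

def reverse : NLinear n M where
  lt i a b := L.lt i b a
  irrefl := L.irrefl
  trans i a b c hab hbc := L.trans i c b a hbc hab
  total i a b := by rcases L.total i a b with h | h | h <;> simp [h]

end NLinear

namespace IsUniversalNLinear

open NLinear

variable {n : ℕ} {M : Type*} {L : NLinear n M}

theorem exists_forall_between_finsets (hL : IsUniversalNLinear n M L) (S T : Fin n → Finset M)
    (hST : ∀ i, ∀ s ∈ S i, ∀ t ∈ T i, L.lt i s t) :
    ∃ x, ∀ i, (∀ s ∈ S i, L.lt i s x) ∧ ∀ t ∈ T i, L.lt i x t := by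
  classical
  set A := univ.biUnion S ∪ univ.biUnion T
  set D : Fin n → Set M := fun i => {y | y ∈ A ∧ ∃ s ∈ S i, y = s ∨ L.lt i y s}
  obtain ⟨x, hxA, hx⟩ := hL.extension A D (fun i y hy => hy.1) (by
    rintro i y hy z - hyz ⟨-, s, hs, rfl | hzs⟩
    · exact ⟨hy, _, hs, Or.inr hyz⟩
    · exact ⟨hy, s, hs, Or.inr (L.trans i _ _ _ hyz hzs)⟩)
  refine ⟨x, fun i => ⟨fun s hs => ?_, fun t ht => ?_⟩⟩
  · have hsA : s ∈ A := mem_union_left _ (mem_biUnion.mpr ⟨i, mem_univ i, hs⟩)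
    exact (hx i s hsA).mpr ⟨hsA, s, hs, Or.inl rfl⟩
  · have htA : t ∈ A := mem_union_right _ (mem_biUnion.mpr ⟨i, mem_univ i, ht⟩)
    rcases L.total i x t with hxt | rfl | htx
    · exact hxt
    · exact absurd htA hxA
    · obtain ⟨-, s, hs, rfl | hts⟩ := (hx i t htA).mp htx
      · exact absurd (hST i _ hs _ ht) (L.irrefl i _)
      · exact absurd (L.trans i _ _ _ hts (hST i s hs t ht)) (L.irrefl i _)

theorem exists_between_finsets (hL : IsUniversalNLinear n M L) (k : Fin n) {S T : Finset M}
    (hST : ∀ s ∈ S, ∀ t ∈ T, L.lt k s t) :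
    ∃ x, (∀ s ∈ S, L.lt k s x) ∧ ∀ t ∈ T, L.lt k x t := by
  obtain ⟨x, hx⟩ := hL.exists_forall_between_finsets (Function.update (fun _ => ∅) k S)
    (Function.update (fun _ => ∅) k T) fun i => by
      rcases eq_or_ne i k with rfl | hi
      · simpa using hST
      · simp [Function.update_of_ne hi]
  exact ⟨x, by simpa using hx k⟩

theorem denselyOrdered (hL : IsUniversalNLinear n M L) (k : Fin n) :
    DenselyOrdered (L.OrderAt k) where
  dense (a b : M) hab := by
    obtain ⟨x, hax, hxb⟩ := hL.exists_between_finsets k (S := {a}) (T := {b})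
      (by simp only [mem_singleton, forall_eq]; exact hab)
    exact ⟨x, hax a (mem_singleton_self a), hxb b (mem_singleton_self b)⟩

theorem noMinOrder (hL : IsUniversalNLinear n M L) (k : Fin n) : NoMinOrder (L.OrderAt k) where
  exists_lt (a : M) := by
    obtain ⟨x, -, hxa⟩ := hL.exists_between_finsets k (S := ∅) (T := {a}) (by simp)
    exact ⟨x, hxa a (mem_singleton_self a)⟩

theorem noMaxOrder (hL : IsUniversalNLinear n M L) (k : Fin n) : NoMaxOrder (L.OrderAt k) where
  exists_gt (a : M) := by
    obtain ⟨x, hax, -⟩ := hL.exists_between_finsets k (S := {a}) (T := ∅) (by simp)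
    exact ⟨x, hax a (mem_singleton_self a)⟩

theorem nonempty (hL : IsUniversalNLinear n M L) (k : Fin n) : Nonempty (L.OrderAt k) :=
  ⟨(hL.exists_between_finsets k (S := ∅) (T := ∅) (by simp)).choose⟩

theorem reverse (hL : IsUniversalNLinear n M L) : IsUniversalNLinear n M L.reverse := by
  refine ⟨hL.countable, hL.infinite, fun A D _ hD => ?_⟩
  obtain ⟨x, hxA, hx⟩ := hL.extension A (fun i => ↑A \ D i) (fun i => Set.sdiff_subset) (by
    rintro i a ha b hb hab ⟨-, hbD⟩
    exact ⟨ha, fun haD => hbD (hD i b hb a ha hab haD)⟩)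
  refine ⟨x, hxA, fun i a ha => ⟨fun hxa => ?_, fun haD => ?_⟩⟩
  · by_contra haD
    exact L.irrefl i a (L.trans i _ _ _ ((hx i a ha).mpr ⟨ha, haD⟩) hxa)
  · rcases L.total i x a with hxa | rfl | hax
    · exact hxa
    · exact absurd ha hxA
    · exact absurd haD ((hx i a ha).mp hax).2

theorem exists_map_between_strictMono (hL : IsUniversalNLinear n M L) (Y : Finset M)
    (lo hi : Fin n → M → M) (hlt : ∀ k, ∀ y ∈ Y, L.lt k (lo k y) (hi k y))
    (hmono : ∀ k, ∀ y ∈ Y, ∀ z ∈ Y, L.lt k y z →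
      ¬ L.lt k (lo k z) (lo k y) ∧ ¬ L.lt k (hi k z) (hi k y)) :
    ∃ φ : M → M, ∀ k, ∀ y ∈ Y, (L.lt k (lo k y) (φ y) ∧ L.lt k (φ y) (hi k y)) ∧
      ∀ z ∈ Y, L.lt k y z → L.lt k (φ y) (φ z) := by
  classical
  induction Y using Finset.induction_on with
  | empty => exact ⟨id, by simp⟩
  | insert a s ha ih =>
    obtain ⟨φ, hφ⟩ := ih (fun k y hy => hlt k y (mem_insert_of_mem hy))
      (fun k y hy z hz => hmono k y (mem_insert_of_mem hy) z (mem_insert_of_mem hz))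
    obtain ⟨c, hc⟩ := hL.exists_forall_between_finsets
      (fun k => insert (lo k a) ((s.filter (L.lt k · a)).image φ))
      (fun k => insert (hi k a) ((s.filter (L.lt k a ·)).image φ)) (by
        intro k
        simp only [mem_insert, mem_image, mem_filter]
        rintro _ (rfl | ⟨y, ⟨hy, hya⟩, rfl⟩) _ (rfl | ⟨z, ⟨hz, haz⟩, rfl⟩)
        · exact hlt k a (mem_insert_self a s)
        · exact L.lt_of_not_lt_of_lt
            (hmono k a (mem_insert_self a s) z (mem_insert_of_mem hz) haz).1 (hφ k z hz).1.1
        · exact L.lt_of_lt_of_not_lt (hφ k y hy).1.2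
            (hmono k y (mem_insert_of_mem hy) a (mem_insert_self a s) hya).2
        · exact (hφ k y hy).2 z hz (L.trans k _ _ _ hya haz))
    have hφ_of_mem : ∀ y ∈ s, Function.update φ a c y = φ y := fun y hy =>
      Function.update_of_ne (ne_of_mem_of_not_mem hy ha) _ _
    refine ⟨Function.update φ a c, fun k y hy => ?_⟩
    rcases mem_insert.mp hy with rfl | hys
    · rw [Function.update_self]
      refine ⟨⟨(hc k).1 _ (mem_insert_self _ _), (hc k).2 _ (mem_insert_self _ _)⟩,
        fun z hz hyz => ?_⟩
      rcases mem_insert.mp hz with rfl | hzs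
      · exact absurd hyz (L.irrefl k _)
      · rw [hφ_of_mem z hzs]
        exact (hc k).2 _ (mem_insert_of_mem (mem_image_of_mem _ (mem_filter.mpr ⟨hzs, hyz⟩)))
    · rw [hφ_of_mem y hys]
      refine ⟨(hφ k y hys).1, fun z hz hyz => ?_⟩
      rcases mem_insert.mp hz with rfl | hzs
      · rw [Function.update_self]
        exact (hc k).1 _ (mem_insert_of_mem (mem_image_of_mem _ (mem_filter.mpr ⟨hys, hyz⟩)))
      · rw [hφ_of_mem z hzs]
        exact (hφ k y hys).2 z hzs hyz

theorem exists_independent_realization_of_apply_lt (hL : IsUniversalNLinear n M L) (g : L.aut)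
    (hg : ∀ (a : M) (i : Fin n), L.lt i ((g : Equiv.Perm M) a) a) (X : Finset M) {ι : Type*}
    [Finite ι] (b : ι → M) (hb : ∀ s, b s ∉ X) :
    ∃ a : ι → M,
      (∀ (k : Fin n) (s t : ι), L.lt k (a s) (a t) ↔ L.lt k (b s) (b t)) ∧
      (∀ (k : Fin n) (s : ι), ∀ x ∈ X,
        (L.lt k (a s) x ↔ L.lt k (b s) x) ∧ (L.lt k x (a s) ↔ L.lt k x (b s))) ∧
      (∀ (k : Fin n) (s t : ι),
        L.lt k (a s) ((g : Equiv.Perm M) (a t)) →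
        ∃ x ∈ X, L.lt k (a s) x ∧ L.lt k x ((g : Equiv.Perm M) (a t))) := by
  classical
  have := Fintype.ofFinite ι
  set Y := univ.image b
  have hbY : ∀ s, b s ∈ Y := fun s => mem_image_of_mem b (mem_univ s)
  have hXY : Disjoint X Y := disjoint_right.mpr (by simpa [Y] using hb)
  have hboxes := fun k => by
    haveI := hL.denselyOrdered k
    haveI := hL.noMinOrder k
    haveI := hL.noMaxOrder k
    haveI := hL.nonempty k
    exact exists_independent_boxes (α := L.OrderAt k)
      (StrictMono.orderIsoOfSurjective (α := L.OrderAt k) (β := L.OrderAt k)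
        (g : Equiv.Perm M) (fun a b => (g.2 k a b).1) (g : Equiv.Perm M).surjective)
      (fun y => hg y k) hXY
  choose lo hi hlt hmono htype hindep using hboxes
  obtain ⟨φ, hφ⟩ := hL.exists_map_between_strictMono Y lo hi hlt fun k y hy z hz hyz =>
    ⟨not_lt.mpr (hmono k y hy z hz hyz).1, not_lt.mpr (hmono k y hy z hz hyz).2⟩
  refine ⟨φ ∘ b, fun k s t => ⟨fun h => ?_, (hφ k _ (hbY s)).2 _ (hbY t)⟩,
    fun k s x hx => htype k _ (hbY s) _ (hφ k _ (hbY s)).1 x hx,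
    fun k s t h => hindep k _ (hbY s) _ (hbY t) _ (hφ k _ (hbY s)).1 _ (hφ k _ (hbY t)).1 h⟩
  rcases L.total k (b s) (b t) with hst | hst | hts
  · exact hst
  · simp only [Function.comp, hst] at h
    exact absurd h (L.irrefl k _)
  · exact absurd (L.trans k _ _ _ h ((hφ k _ (hbY t)).2 _ (hbY s) hts)) (L.irrefl k _)

end IsUniversalNLinear

/-- In a universal `n`-linear order:
(a) if `g a <_i a` for all `a` and `i`, then `g` moves almost `R`-maximally;
(b) if `a <_i g a` for all `a` and `i`, then `g` moves almost `L`-maximally. -/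
theorem stmt3 {n : ℕ} {M : Type*} (L : NLinear n M) (hL : IsUniversalNLinear n M L)
    (g : L.aut) :
    ((∀ (a : M) (i : Fin n), L.lt i ((g : Equiv.Perm M) a) a) →
      ∀ (X : Finset M) (l : ℕ) (b : Fin l → M), (∀ s, b s ∉ X) →
        ∃ a : Fin l → M,
          (∀ (k : Fin n) (s t : Fin l), L.lt k (a s) (a t) ↔ L.lt k (b s) (b t)) ∧
          (∀ (k : Fin n) (s : Fin l), ∀ x ∈ X,
            (L.lt k (a s) x ↔ L.lt k (b s) x) ∧ (L.lt k x (a s) ↔ L.lt k x (b s))) ∧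
          (∀ (k : Fin n) (s t : Fin l),
            L.lt k (a s) ((g : Equiv.Perm M) (a t)) → (g : Equiv.Perm M) (a t) ∉ X →
            ∃ x ∈ X, L.lt k (a s) x ∧ L.lt k x ((g : Equiv.Perm M) (a t)))) ∧
    ((∀ (a : M) (i : Fin n), L.lt i a ((g : Equiv.Perm M) a)) →
      ∀ (X : Finset M) (l : ℕ) (b : Fin l → M), (∀ s, b s ∉ X) →
        ∃ a : Fin l → M,
          (∀ (k : Fin n) (s t : Fin l), L.lt k (a s) (a t) ↔ L.lt k (b s) (b t)) ∧
          (∀ (k : Fin n) (s : Fin l), ∀ x ∈ X,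
            (L.lt k (a s) x ↔ L.lt k (b s) x) ∧ (L.lt k x (a s) ↔ L.lt k x (b s))) ∧
          (∀ (k : Fin n) (s t : Fin l),
            L.lt k ((g : Equiv.Perm M) (a s)) (a t) → (g : Equiv.Perm M) (a s) ∉ X →
            ∃ x ∈ X, L.lt k ((g : Equiv.Perm M) (a s)) x ∧ L.lt k x (a t))) := by
  refine ⟨fun hdown X _ b hb => ?_, fun hup X _ b hb => ?_⟩
  · obtain ⟨a, horder, htype, hindep⟩ :=
      hL.exists_independent_realization_of_apply_lt g hdown X b hb
    exact ⟨a, horder, htype, fun k s t h _ => hindep k s t h⟩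
  · obtain ⟨a, horder, htype, hindep⟩ := hL.reverse.exists_independent_realization_of_apply_lt
      ⟨g, fun i x y => g.2 i y x⟩ hup X b hb
    refine ⟨a, fun k s t => horder k t s, fun k s x hx => (htype k s x hx).symm,
      fun k s t h _ => ?_⟩
    obtain ⟨x, hx, hxs, htx⟩ := hindep k t s h
    exact ⟨x, hx, htx, hxs⟩
end

section
/- Let g be an unbounded automorphism of (ℚ, ≤). Then the normal closure of {g} in Aut(ℚ, ≤) contains an element having a single +-orbital, and also contains an element having a single −-orbital. -/
/-! ### Auxiliary material for `stmt4` -/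

theorem Equiv.Perm.inv_apply_self {α : Type*} (f : Equiv.Perm α) (x : α) : f⁻¹ (f x) = x :=
  f.symm_apply_apply x

theorem Equiv.Perm.apply_inv_self {α : Type*} (f : Equiv.Perm α) (x : α) : f (f⁻¹ x) = x :=
  f.apply_symm_apply x

lemma st4_le_iff (w : QAut) (a b : ℚ) : a ≤ b ↔ (w : Equiv.Perm ℚ) a ≤ (w : Equiv.Perm ℚ) b :=
  w.2 a b

lemma st4_lt_iff (w : QAut) (a b : ℚ) : a < b ↔ (w : Equiv.Perm ℚ) a < (w : Equiv.Perm ℚ) b := by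
  simp only [lt_iff_le_not_ge, ← st4_le_iff]

lemma st4_coe_inv (w : QAut) : ((w⁻¹ : QAut) : Equiv.Perm ℚ) = ((w : Equiv.Perm ℚ))⁻¹ := rfl

lemma st4_coe_mul (v w : QAut) :
    ((v * w : QAut) : Equiv.Perm ℚ) = (v : Equiv.Perm ℚ) * (w : Equiv.Perm ℚ) := rfl

/-- Points moved up are cofinal. -/
def St4UpCof (f : Equiv.Perm ℚ) : Prop := ∀ x : ℚ, ∃ a, x < a ∧ a < f a

/-- Points moved up are coinitial. -/
def St4UpCoi (f : Equiv.Perm ℚ) : Prop := ∀ x : ℚ, ∃ a, a < x ∧ a < f a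

/-- Points moved down are cofinal. -/
def St4DnCof (f : Equiv.Perm ℚ) : Prop := ∀ x : ℚ, ∃ a, x < a ∧ f a < a

/-- Points moved down are coinitial. -/
def St4DnCoi (f : Equiv.Perm ℚ) : Prop := ∀ x : ℚ, ∃ a, a < x ∧ f a < a

lemma st4_dncof_inv (w : QAut) (h : St4DnCof (w : Equiv.Perm ℚ)) :
    St4UpCof ((w⁻¹ : QAut) : Equiv.Perm ℚ) := by
  intro x
  obtain ⟨a, ha1, ha2⟩ := h (max x (((w : Equiv.Perm ℚ))⁻¹ x))
  refine ⟨(w : Equiv.Perm ℚ) a, ?_, ?_⟩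
  · have h1 : ((w : Equiv.Perm ℚ))⁻¹ x < a := lt_of_le_of_lt (le_max_right _ _) ha1
    have := (st4_lt_iff w _ _).1 h1
    rwa [Equiv.Perm.apply_inv_self] at this
  · rw [st4_coe_inv, Equiv.Perm.inv_apply_self]
    exact ha2

lemma st4_dncoi_inv (w : QAut) (h : St4DnCoi (w : Equiv.Perm ℚ)) :
    St4UpCoi ((w⁻¹ : QAut) : Equiv.Perm ℚ) := by
  intro x
  obtain ⟨a, ha1, ha2⟩ := h (min x (((w : Equiv.Perm ℚ))⁻¹ x))
  refine ⟨(w : Equiv.Perm ℚ) a, ?_, ?_⟩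
  · have h1 : a < ((w : Equiv.Perm ℚ))⁻¹ x := lt_of_lt_of_le ha1 (min_le_right _ _)
    have := (st4_lt_iff w _ _).1 h1
    rwa [Equiv.Perm.apply_inv_self] at this
  · rw [st4_coe_inv, Equiv.Perm.inv_apply_self]
    exact ha2

lemma st4_upcoi_inv (w : QAut) (h : St4UpCoi (w : Equiv.Perm ℚ)) :
    St4DnCoi ((w⁻¹ : QAut) : Equiv.Perm ℚ) := by
  intro x
  obtain ⟨a, ha1, ha2⟩ := h (min x (((w : Equiv.Perm ℚ))⁻¹ x))
  refine ⟨(w : Equiv.Perm ℚ) a, ?_, ?_⟩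
  · have h1 : a < ((w : Equiv.Perm ℚ))⁻¹ x := lt_of_lt_of_le ha1 (min_le_right _ _)
    have := (st4_lt_iff w _ _).1 h1
    rwa [Equiv.Perm.apply_inv_self] at this
  · rw [st4_coe_inv, Equiv.Perm.inv_apply_self]
    exact ha2

lemma st4_dich_cof (w : QAut) (hmov : ∀ x : ℚ, ∃ b, x < b ∧ (w : Equiv.Perm ℚ) b ≠ b) :
    St4UpCof (w : Equiv.Perm ℚ) ∨ St4DnCof (w : Equiv.Perm ℚ) := by
  by_cases h : St4UpCof (w : Equiv.Perm ℚ)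
  · exact Or.inl h
  · right
    unfold St4UpCof at h
    push_neg at h
    obtain ⟨x0, hx0⟩ := h
    intro y
    obtain ⟨b, hb1, hb2⟩ := hmov (max x0 y)
    refine ⟨b, lt_of_le_of_lt (le_max_right _ _) hb1, ?_⟩
    have := hx0 b (lt_of_le_of_lt (le_max_left _ _) hb1)
    exact lt_of_le_of_ne this hb2

lemma st4_dich_coi (w : QAut) (hmov : ∀ x : ℚ, ∃ b, b < x ∧ (w : Equiv.Perm ℚ) b ≠ b) :
    St4UpCoi (w : Equiv.Perm ℚ) ∨ St4DnCoi (w : Equiv.Perm ℚ) := by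
  by_cases h : St4UpCoi (w : Equiv.Perm ℚ)
  · exact Or.inl h
  · right
    unfold St4UpCoi at h
    push_neg at h
    obtain ⟨x0, hx0⟩ := h
    intro y
    obtain ⟨b, hb1, hb2⟩ := hmov (min x0 y)
    refine ⟨b, lt_of_lt_of_le hb1 (min_le_right _ _), ?_⟩
    have := hx0 b (lt_of_lt_of_le hb1 (min_le_left _ _))
    exact lt_of_le_of_ne this hb2

lemma st4_master (good : ℤ → ℚ × ℚ → Prop)
    (hup : ∀ n : ℤ, 0 ≤ n → ∀ b : ℚ, ∃ p : ℚ × ℚ, good n p ∧ b < p.1 ∧ p.1 < p.2)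
    (hdown : ∀ n : ℤ, n < 0 → ∀ b : ℚ, ∃ p : ℚ × ℚ, good n p ∧ p.2 < b ∧ p.1 < p.2) :
    ∃ C D : ℤ → ℚ, (∀ n, good n (C n, D n)) ∧ (∀ n, C n < D n) ∧ (∀ n, D n < C (n + 1)) ∧
      (∀ n : ℤ, 0 ≤ n → (n : ℚ) < C n) ∧ (∀ n : ℤ, n < 0 → D n < (n : ℚ)) := by
  classical
  let fup : ℕ → ℚ × ℚ := fun m =>
    Nat.rec ((hup 0 le_rfl 0).choose)
      (fun k ih => (hup (k + 1 : ℕ) (by positivity) (max ih.2 ((k : ℚ) + 1))).choose) m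
  have hfup0 : fup 0 = (hup 0 le_rfl 0).choose := rfl
  have hfupS : ∀ k, fup (k + 1)
      = (hup (k + 1 : ℕ) (by positivity) (max (fup k).2 ((k : ℚ) + 1))).choose := fun k => rfl
  have hfup_good : ∀ m : ℕ, good m (fup m) := by
    intro m
    cases m with
    | zero => exact (hup 0 le_rfl 0).choose_spec.1
    | succ k =>
      rw [hfupS k]
      exact (hup (k + 1 : ℕ) (by positivity) (max (fup k).2 ((k : ℚ) + 1))).choose_spec.1
  have hfup_lt : ∀ m : ℕ, (fup m).1 < (fup m).2 := by
    intro m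
    cases m with
    | zero => exact (hup 0 le_rfl 0).choose_spec.2.2
    | succ k =>
      rw [hfupS k]
      exact (hup (k + 1 : ℕ) (by positivity) (max (fup k).2 ((k : ℚ) + 1))).choose_spec.2.2
  have hfup_gt : ∀ m : ℕ, (m : ℚ) < (fup m).1 := by
    intro m
    cases m with
    | zero => simpa [hfup0] using (hup 0 le_rfl 0).choose_spec.2.1
    | succ k =>
      have := (hup (k + 1 : ℕ) (by positivity) (max (fup k).2 ((k : ℚ) + 1))).choose_spec.2.1
      rw [hfupS k]
      have h2 : ((k : ℚ) + 1) ≤ max (fup k).2 ((k : ℚ) + 1) := le_max_right _ _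
      push_cast
      linarith
  have hfup_chain : ∀ m : ℕ, (fup m).2 < (fup (m + 1)).1 := by
    intro m
    have := (hup (m + 1 : ℕ) (by positivity) (max (fup m).2 ((m : ℚ) + 1))).choose_spec.2.1
    rw [hfupS m]
    have h2 : (fup m).2 ≤ max (fup m).2 ((m : ℚ) + 1) := le_max_left _ _
    linarith
  let fdn : ℕ → ℚ × ℚ := fun m =>
    Nat.rec (fup 0)
      (fun k ih => (hdown (-(k + 1 : ℕ) : ℤ) (by omega) (min ih.1 (-(k : ℚ) - 1))).choose) m
  have hfdn0 : fdn 0 = fup 0 := rfl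
  have hfdnS : ∀ k, fdn (k + 1)
      = (hdown (-(k + 1 : ℕ) : ℤ) (by omega) (min (fdn k).1 (-(k : ℚ) - 1))).choose := fun k => rfl
  have hfdn_good : ∀ k : ℕ, good (-(k + 1 : ℕ) : ℤ) (fdn (k + 1)) := by
    intro k
    rw [hfdnS k]
    exact (hdown (-(k + 1 : ℕ) : ℤ) (by omega) (min (fdn k).1 (-(k : ℚ) - 1))).choose_spec.1
  have hfdn_lt : ∀ k : ℕ, (fdn (k + 1)).1 < (fdn (k + 1)).2 := by
    intro k
    rw [hfdnS k]
    exact (hdown (-(k + 1 : ℕ) : ℤ) (by omega) (min (fdn k).1 (-(k : ℚ) - 1))).choose_spec.2.2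
  have hfdn_bnd : ∀ k : ℕ, (fdn (k + 1)).2 < min (fdn k).1 (-(k : ℚ) - 1) := by
    intro k
    rw [hfdnS k]
    exact (hdown (-(k + 1 : ℕ) : ℤ) (by omega) (min (fdn k).1 (-(k : ℚ) - 1))).choose_spec.2.1
  refine ⟨fun n => if 0 ≤ n then (fup n.toNat).1 else (fdn (-n).toNat).1,
          fun n => if 0 ≤ n then (fup n.toNat).2 else (fdn (-n).toNat).2, ?_, ?_, ?_, ?_, ?_⟩
  · intro n
    by_cases h : 0 ≤ n
    · simp only [if_pos h]
      have : ((n.toNat : ℤ)) = n := Int.toNat_of_nonneg h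
      have hg := hfup_good n.toNat
      rw [this] at hg
      exact hg
    · simp only [if_neg h]
      obtain ⟨k, hk⟩ : ∃ k : ℕ, (-n).toNat = k + 1 := ⟨(-n).toNat - 1, by omega⟩
      rw [hk]
      have hg := hfdn_good k
      have : (-(k + 1 : ℕ) : ℤ) = n := by omega
      rw [this] at hg
      exact hg
  · intro n
    by_cases h : 0 ≤ n
    · simp only [if_pos h]; exact hfup_lt _
    · simp only [if_neg h]
      obtain ⟨k, hk⟩ : ∃ k : ℕ, (-n).toNat = k + 1 := ⟨(-n).toNat - 1, by omega⟩
      rw [hk]; exact hfdn_lt k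
  · intro n
    by_cases h : 0 ≤ n
    · have h1 : 0 ≤ n + 1 := by omega
      simp only [if_pos h, if_pos h1]
      have : (n + 1).toNat = n.toNat + 1 := by omega
      rw [this]
      exact hfup_chain n.toNat
    · by_cases h1 : n = -1
      · subst h1
        norm_num
        have := hfdn_bnd 0
        have h2 : (fdn 1).2 < (fdn 0).1 := lt_of_lt_of_le this (min_le_left _ _)
        rw [hfdn0] at h2
        simpa using h2
      · have h2 : ¬ 0 ≤ n + 1 := by omega
        simp only [if_neg h, if_neg h2]
        obtain ⟨k, hk⟩ : ∃ k : ℕ, (-(n + 1)).toNat = k + 1 := ⟨(-(n + 1)).toNat - 1, by omega⟩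
        have hk2 : (-n).toNat = k + 2 := by omega
        rw [hk, hk2]
        exact lt_of_lt_of_le (hfdn_bnd (k + 1)) (min_le_left _ _)
  · intro n h
    simp only [if_pos h]
    have := hfup_gt n.toNat
    rwa [show ((n.toNat : ℕ) : ℚ) = (n : ℚ) by
      have : ((n.toNat : ℤ)) = n := Int.toNat_of_nonneg h
      exact_mod_cast congrArg (fun z : ℤ => (z : ℚ)) this] at this
  · intro n h
    simp only [if_neg (by omega : ¬ 0 ≤ n)]
    obtain ⟨k, hk⟩ : ∃ k : ℕ, (-n).toNat = k + 1 := ⟨(-n).toNat - 1, by omega⟩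
    rw [hk]
    have := lt_of_lt_of_le (hfdn_bnd k) (min_le_right _ _)
    have hcast : -(k : ℚ) - 1 = (n : ℚ) := by
      have : (-(k + 1 : ℕ) : ℤ) = n := by omega
      push_cast [← this]
      ring
    linarith [hcast ▸ this]

lemma st4_unbd (C D : ℤ → ℚ) (hlt : ∀ n, C n < D n)
    (hup : ∀ n : ℤ, 0 ≤ n → (n : ℚ) < C n) (hdn : ∀ n : ℤ, n < 0 → D n < (n : ℚ)) :
    (∀ x : ℚ, ∃ n, x < C n) ∧ (∀ x : ℚ, ∃ n, D n < x) ∧ (∀ x : ℚ, ∃ n, C n < x)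
      ∧ (∀ x : ℚ, ∃ n, x < D n) := by
  have h1 : ∀ x : ℚ, ∃ n, x < C n := by
    intro x
    refine ⟨max 0 ⌈x⌉, ?_⟩
    have h4 := hup (max 0 ⌈x⌉) (le_max_left _ _)
    have h5 : x ≤ ((max 0 ⌈x⌉ : ℤ) : ℚ) := by
      calc x ≤ (⌈x⌉ : ℚ) := Int.le_ceil x
      _ ≤ _ := by exact_mod_cast le_max_right 0 ⌈x⌉
    linarith
  have h2 : ∀ x : ℚ, ∃ n, D n < x := by
    intro x
    refine ⟨min (-1) ⌊x⌋, ?_⟩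
    have h4 := hdn (min (-1) ⌊x⌋) (by omega)
    have h5 : ((min (-1) ⌊x⌋ : ℤ) : ℚ) ≤ x := by
      calc ((min (-1) ⌊x⌋ : ℤ) : ℚ) ≤ (⌊x⌋ : ℚ) := by exact_mod_cast min_le_right (-1) ⌊x⌋
      _ ≤ x := Int.floor_le x
    linarith
  refine ⟨h1, h2, ?_, ?_⟩
  · intro x
    obtain ⟨n, hn⟩ := h2 x
    exact ⟨n, lt_trans (hlt n) hn⟩
  · intro x
    obtain ⟨n, hn⟩ := h1 x
    exact ⟨n, lt_trans hn (hlt n)⟩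

lemma st4_idx (s : ℤ → ℚ) (hs : StrictMono s)
    (hsu : ∀ x : ℚ, ∃ n, x < s n) (hsd : ∀ x : ℚ, ∃ n, s n < x) (x : ℚ) :
    ∃ n, s n ≤ x ∧ x < s (n + 1) := by
  obtain ⟨m, hm⟩ := hsu x
  obtain ⟨l, hl⟩ := hsd x
  have hbdd : ∃ b : ℤ, ∀ z : ℤ, s z ≤ x → z ≤ b := by
    refine ⟨m, fun z hz => ?_⟩
    by_contra h
    push_neg at h
    exact absurd (le_trans (hs.monotone (by omega : m ≤ z)) hz) (not_le.2 hm)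
  obtain ⟨n, hn1, hn2⟩ := Int.exists_greatest_of_bdd hbdd ⟨l, hl.le⟩
  refine ⟨n, hn1, ?_⟩
  by_contra h
  push_neg at h
  exact absurd (hn2 (n + 1) h) (by omega)

lemma st4_interp (s t : ℤ → ℚ) (hs : StrictMono s) (ht : StrictMono t)
    (hsu : ∀ x : ℚ, ∃ n, x < s n) (hsd : ∀ x : ℚ, ∃ n, s n < x)
    (htu : ∀ x : ℚ, ∃ n, x < t n) (htd : ∀ x : ℚ, ∃ n, t n < x) :
    ∃ k : QAut, ∀ n, (k : Equiv.Perm ℚ) (s n) = t n := by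
  classical
  choose nn hnn1 hnn2 using st4_idx s hs hsu hsd
  have key : ∀ (x : ℚ) (n : ℤ), s n ≤ x → x < s (n + 1) → nn x = n := by
    intro x n h1 h2
    by_contra h
    rcases lt_or_gt_of_ne h with hlt | hgt
    · have : s (nn x + 1) ≤ s n := hs.monotone (by omega)
      linarith [hnn2 x, hnn1 x]
    · have : s (n + 1) ≤ s (nn x) := hs.monotone (by omega)
      linarith [hnn2 x, hnn1 x]
  set F : ℚ → ℚ := fun x =>
    t (nn x) + (x - s (nn x)) * (t (nn x + 1) - t (nn x)) / (s (nn x + 1) - s (nn x)) with hF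
  have hΔs : ∀ n : ℤ, 0 < s (n + 1) - s n := fun n => sub_pos.2 (hs (lt_add_one n))
  have hΔt : ∀ n : ℤ, 0 < t (n + 1) - t n := fun n => sub_pos.2 (ht (lt_add_one n))
  have hFeq : ∀ (x : ℚ) (n : ℤ), s n ≤ x → x < s (n + 1) →
      F x = t n + (x - s n) * (t (n + 1) - t n) / (s (n + 1) - s n) := by
    intro x n h1 h2
    rw [hF]
    simp only [key x n h1 h2]
  have hcell : ∀ (n : ℤ) (x : ℚ), s n ≤ x → x < s (n + 1) → t n ≤ F x ∧ F x < t (n + 1) := by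
    intro n x h1 h2
    rw [hFeq x n h1 h2]
    constructor
    · have : 0 ≤ (x - s n) * (t (n + 1) - t n) / (s (n + 1) - s n) :=
        div_nonneg (mul_nonneg (by linarith) (hΔt n).le) (hΔs n).le
      linarith
    · have h3 : (x - s n) * (t (n + 1) - t n) / (s (n + 1) - s n) < t (n + 1) - t n := by
        rw [div_lt_iff₀ (hΔs n)]
        have := mul_lt_mul_of_pos_right (by linarith : x - s n < s (n + 1) - s n) (hΔt n)
        linarith [this]
      linarith
  have hmono : StrictMono F := by
    intro x y hxy
    have hx1 := hnn1 x; have hx2 := hnn2 x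
    have hy1 := hnn1 y; have hy2 := hnn2 y
    have hmn : nn x ≤ nn y := by
      by_contra h
      push_neg at h
      have : s (nn y + 1) ≤ s (nn x) := hs.monotone (by omega)
      linarith
    rcases eq_or_lt_of_le hmn with heq | hlt
    · rw [hFeq x (nn x) hx1 hx2, hFeq y (nn x) (heq ▸ hy1) (heq ▸ hy2)]
      have h5 : (x - s (nn x)) * (t (nn x + 1) - t (nn x)) / (s (nn x + 1) - s (nn x))
          < (y - s (nn x)) * (t (nn x + 1) - t (nn x)) / (s (nn x + 1) - s (nn x)) := by
        gcongr
        · exact hΔs (nn x)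
        · exact hΔt (nn x)
      linarith
    · have h1 := (hcell (nn x) x hx1 hx2).2
      have h2 := (hcell (nn y) y hy1 hy2).1
      have h3 : t (nn x + 1) ≤ t (nn y) := ht.monotone (by omega)
      linarith
  have hsurj : Function.Surjective F := by
    intro y
    obtain ⟨n, hy1, hy2⟩ := st4_idx t ht htu htd y
    refine ⟨s n + (y - t n) * (s (n + 1) - s n) / (t (n + 1) - t n), ?_⟩
    set x := s n + (y - t n) * (s (n + 1) - s n) / (t (n + 1) - t n) with hx
    have hx1 : s n ≤ x := by
      have : 0 ≤ (y - t n) * (s (n + 1) - s n) / (t (n + 1) - t n) :=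
        div_nonneg (mul_nonneg (by linarith) (hΔs n).le) (hΔt n).le
      rw [hx]; linarith
    have hx2 : x < s (n + 1) := by
      have h3 : (y - t n) * (s (n + 1) - s n) / (t (n + 1) - t n) < s (n + 1) - s n := by
        rw [div_lt_iff₀ (hΔt n)]
        have := mul_lt_mul_of_pos_right (by linarith : y - t n < t (n + 1) - t n) (hΔs n)
        linarith [this]
      rw [hx]; linarith
    rw [hFeq x n hx1 hx2, hx]
    have h1 := (hΔs n).ne'
    have h2 := (hΔt n).ne'
    field_simp
    ring
  have hFs : ∀ n, F (s n) = t n := by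
    intro n
    rw [hFeq (s n) n le_rfl (hs (lt_add_one n))]
    simp
  refine ⟨⟨Equiv.ofBijective F ⟨hmono.injective, hsurj⟩, ?_⟩, ?_⟩
  · intro a b
    exact (hmono.le_iff_le).symm
  · intro n
    exact hFs n

lemma st4_inter (C D : ℤ → ℚ) (h1 : ∀ n, C n < D n) (h2 : ∀ n, D n < C (n + 1))
    (hup : ∀ n : ℤ, 0 ≤ n → (n : ℚ) < C n) (hdn : ∀ n : ℤ, n < 0 → D n < (n : ℚ)) :
    ∃ s : ℤ → ℚ, StrictMono s ∧ (∀ n, s (2 * n) = C n) ∧ (∀ n, s (2 * n + 1) = D n) ∧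
      (∀ x : ℚ, ∃ n, x < s n) ∧ (∀ x : ℚ, ∃ n, s n < x) := by
  classical
  refine ⟨fun m => if 2 ∣ m then C (m / 2) else D (m / 2), ?_, ?_, ?_, ?_, ?_⟩
  · apply strictMono_int_of_lt_succ
    intro m
    rcases Int.even_or_odd m with ⟨r, hr⟩ | ⟨r, hr⟩
    · have e1 : (2 : ℤ) ∣ m := ⟨r, by omega⟩
      have e2 : ¬ (2 : ℤ) ∣ (m + 1) := by omega
      simp only [if_pos e1, if_neg e2]
      have : (m + 1) / 2 = m / 2 := by omega
      rw [this]
      exact h1 _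
    · have e1 : ¬ (2 : ℤ) ∣ m := by omega
      have e2 : (2 : ℤ) ∣ (m + 1) := by omega
      simp only [if_neg e1, if_pos e2]
      have : (m + 1) / 2 = m / 2 + 1 := by omega
      rw [this]
      exact h2 _
  · intro n
    have e1 : (2 : ℤ) ∣ 2 * n := ⟨n, rfl⟩
    simp only [if_pos e1]
    congr 1
    omega
  · intro n
    have e1 : ¬ (2 : ℤ) ∣ (2 * n + 1) := by omega
    simp only [if_neg e1]
    congr 1
    omega
  · intro x
    refine ⟨2 * max 1 ⌈x⌉, ?_⟩
    have e1 : (2 : ℤ) ∣ 2 * max 1 ⌈x⌉ := ⟨_, rfl⟩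
    simp only [if_pos e1]
    have h3 : (0 : ℤ) ≤ max 1 ⌈x⌉ := by positivity
    have h4 := hup (max 1 ⌈x⌉) h3
    have h5 : x ≤ ((max 1 ⌈x⌉ : ℤ) : ℚ) := by
      calc x ≤ (⌈x⌉ : ℚ) := Int.le_ceil x
      _ ≤ _ := by exact_mod_cast le_max_right 1 ⌈x⌉
    have : (2 * max 1 ⌈x⌉) / 2 = max 1 ⌈x⌉ := by omega
    rw [this]
    linarith
  · intro x
    refine ⟨2 * min (-1) ⌊x⌋ + 1, ?_⟩
    have e1 : ¬ (2 : ℤ) ∣ (2 * min (-1) ⌊x⌋ + 1) := by omega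
    simp only [if_neg e1]
    have h3 : min (-1) ⌊x⌋ < 0 := by omega
    have h4 := hdn (min (-1) ⌊x⌋) h3
    have h5 : ((min (-1) ⌊x⌋ : ℤ) : ℚ) ≤ x := by
      calc ((min (-1) ⌊x⌋ : ℤ) : ℚ) ≤ (⌊x⌋ : ℚ) := by exact_mod_cast min_le_right (-1) ⌊x⌋
      _ ≤ x := Int.floor_le x
    have : (2 * min (-1) ⌊x⌋ + 1) / 2 = min (-1) ⌊x⌋ := by omega
    rw [this]
    linarith

lemma st4_promote (N : Subgroup QAut) (hN : N.Normal) (w : QAut) (hw : w ∈ N)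
    (hcof : St4UpCof (w : Equiv.Perm ℚ)) (hcoi : St4DnCoi (w : Equiv.Perm ℚ)) :
    ∃ u ∈ N, St4UpCof (u : Equiv.Perm ℚ) ∧ St4UpCoi (u : Equiv.Perm ℚ) := by
  classical
  obtain ⟨P, Q, hPQgood, hPQlt, hPQchain, hPQup, hPQdn⟩ :=
    st4_master (fun n p => if n < 0 then (w : Equiv.Perm ℚ) p.2 = p.1
        else (w : Equiv.Perm ℚ) p.1 = p.2)
      (by
        intro n hn b
        obtain ⟨a, ha1, ha2⟩ := hcof b
        exact ⟨(a, (w : Equiv.Perm ℚ) a), by simp [show ¬ (n : ℤ) < 0 by omega], ha1, ha2⟩)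
      (by
        intro n hn b
        obtain ⟨a, ha1, ha2⟩ := hcoi b
        exact ⟨((w : Equiv.Perm ℚ) a, a), by simp [hn], ha1, ha2⟩)
  obtain ⟨A, B, hABgood, hABlt, hABchain, hABup, hABdn⟩ :=
    st4_master (fun n p => if n < 0 then p.1 < (w : Equiv.Perm ℚ) p.2
        else p.2 < (w : Equiv.Perm ℚ) p.1)
      (by
        intro n hn b
        obtain ⟨e, he1, he2⟩ := hcof b
        obtain ⟨q, hq1, hq2⟩ := exists_between he2
        exact ⟨(e, q), by simp only [show ¬ (n : ℤ) < 0 by omega, if_false]; exact hq2,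
          he1, hq1⟩)
      (by
        intro n hn b
        refine ⟨(min (b - 1) ((w : Equiv.Perm ℚ) (b - 1)) - 1, b - 1), ?_, by norm_num, ?_⟩
        · have h := min_le_right (b - 1) ((w : Equiv.Perm ℚ) (b - 1))
          simp only [hn, if_true]
          linarith
        · have h := min_le_left (b - 1) ((w : Equiv.Perm ℚ) (b - 1))
          simp only
          linarith)
  obtain ⟨s, hs, hs1, hs2, hsu, hsd⟩ := st4_inter P Q hPQlt hPQchain hPQup hPQdn
  obtain ⟨t, ht, ht1, ht2, htu, htd⟩ := st4_inter A B hABlt hABchain hABup hABdn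
  obtain ⟨k, hk⟩ := st4_interp s t hs ht hsu hsd htu htd
  have hkP : ∀ n, (k : Equiv.Perm ℚ) (P n) = A n := by
    intro n
    have := hk (2 * n)
    rwa [hs1 n, ht1 n] at this
  have hkQ : ∀ n, (k : Equiv.Perm ℚ) (Q n) = B n := by
    intro n
    have := hk (2 * n + 1)
    rwa [hs2 n, ht2 n] at this
  refine ⟨w * (k * w⁻¹ * k⁻¹), Subgroup.mul_mem _ hw
    (hN.conj_mem _ (Subgroup.inv_mem _ hw) k), ?_, ?_⟩
  · -- up-moved points cofinal, witnesses B n for n ≥ 0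
    intro x
    obtain ⟨hCub, _, _, _⟩ := st4_unbd A B hABlt hABup hABdn
    obtain ⟨x', hx'⟩ := hCub x
    set n : ℤ := max 0 ⌈x⌉
    have hn0 : (0 : ℤ) ≤ n := le_max_left _ _
    have hxn : x ≤ ((n : ℤ) : ℚ) := by
      calc x ≤ (⌈x⌉ : ℚ) := Int.le_ceil x
      _ ≤ _ := by exact_mod_cast le_max_right 0 ⌈x⌉
    have hAx : x < A n := lt_of_le_of_lt hxn (hABup n hn0)
    refine ⟨B n, lt_trans hAx (hABlt n), ?_⟩
    have happ : ((w * (k * w⁻¹ * k⁻¹) : QAut) : Equiv.Perm ℚ) (B n)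
        = (w : Equiv.Perm ℚ) ((k : Equiv.Perm ℚ)
            (((w : Equiv.Perm ℚ))⁻¹ (((k : Equiv.Perm ℚ))⁻¹ (B n)))) := rfl
    rw [happ]
    have e1 : ((k : Equiv.Perm ℚ))⁻¹ (B n) = Q n := by
      rw [← hkQ n, Equiv.Perm.inv_apply_self]
    have e2 : ((w : Equiv.Perm ℚ))⁻¹ (Q n) = P n := by
      have hg := hPQgood n
      rw [if_neg (by omega : ¬ n < 0)] at hg
      have hg2 : (w : Equiv.Perm ℚ) (P n) = Q n := hg
      rw [← hg2, Equiv.Perm.inv_apply_self]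
    rw [e1, e2, hkP n]
    have hg' := hABgood n
    rw [if_neg (by omega : ¬ n < 0)] at hg'
    exact hg'
  · -- up-moved points coinitial, witnesses A n for n < 0
    intro x
    set n : ℤ := min (-1) ⌊x⌋
    have hn0 : n < 0 := by omega
    have hxn : ((n : ℤ) : ℚ) ≤ x := by
      calc ((n : ℤ) : ℚ) ≤ (⌊x⌋ : ℚ) := by exact_mod_cast min_le_right (-1) ⌊x⌋
      _ ≤ x := Int.floor_le x
    have hAx : A n < x := lt_of_lt_of_le (lt_trans (hABlt n) (hABdn n hn0)) hxn
    refine ⟨A n, hAx, ?_⟩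
    have happ : ((w * (k * w⁻¹ * k⁻¹) : QAut) : Equiv.Perm ℚ) (A n)
        = (w : Equiv.Perm ℚ) ((k : Equiv.Perm ℚ)
            (((w : Equiv.Perm ℚ))⁻¹ (((k : Equiv.Perm ℚ))⁻¹ (A n)))) := rfl
    rw [happ]
    have e1 : ((k : Equiv.Perm ℚ))⁻¹ (A n) = P n := by
      rw [← hkP n, Equiv.Perm.inv_apply_self]
    have e2 : ((w : Equiv.Perm ℚ))⁻¹ (P n) = Q n := by
      have hg := hPQgood n
      rw [if_pos hn0] at hg
      have hg2 : (w : Equiv.Perm ℚ) (Q n) = P n := hg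
      rw [← hg2, Equiv.Perm.inv_apply_self]
    rw [e1, e2, hkQ n]
    have hg' := hABgood n
    rw [if_pos hn0] at hg'
    exact hg'

lemma st4_final (N : Subgroup QAut) (hN : N.Normal) (u : QAut) (hu : u ∈ N)
    (hcof : St4UpCof (u : Equiv.Perm ℚ)) (hcoi : St4UpCoi (u : Equiv.Perm ℚ)) :
    (∃ f ∈ N, SinglePlusQ (f : Equiv.Perm ℚ)) ∧
    (∃ f ∈ N, SingleMinusQ (f : Equiv.Perm ℚ)) := by
  classical
  obtain ⟨C, D, hgood, hlt, hchain, hupb, hdnb⟩ :=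
    st4_master (fun _ p => (u : Equiv.Perm ℚ) p.1 = p.2)
      (by
        intro n hn b
        obtain ⟨a, ha1, ha2⟩ := hcof b
        exact ⟨(a, (u : Equiv.Perm ℚ) a), rfl, ha1, ha2⟩)
      (by
        intro n hn b
        obtain ⟨a, ha1, ha2⟩ := hcoi (min b (((u : Equiv.Perm ℚ))⁻¹ b))
        refine ⟨(a, (u : Equiv.Perm ℚ) a), rfl, ?_, ha2⟩
        have h1 : a < ((u : Equiv.Perm ℚ))⁻¹ b := lt_of_lt_of_le ha1 (min_le_right _ _)
        have := (st4_lt_iff u _ _).1 h1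
        rwa [Equiv.Perm.apply_inv_self] at this)
  obtain ⟨hCub, hDdb, hCdb, hDub⟩ := st4_unbd C D hlt hupb hdnb
  obtain ⟨s, hs, hs1, hs2, hsu, hsd⟩ := st4_inter C D hlt hchain hupb hdnb
  have ht : StrictMono (fun m => s (m + 1)) := fun a b hab => hs (by omega)
  have htu : ∀ x : ℚ, ∃ n, x < s (n + 1) := by
    intro x
    obtain ⟨n, hn⟩ := hsu x
    exact ⟨n - 1, by rwa [sub_add_cancel]⟩
  have htd : ∀ x : ℚ, ∃ n, s (n + 1) < x := by
    intro x
    obtain ⟨n, hn⟩ := hsd x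
    exact ⟨n - 1, by rwa [sub_add_cancel]⟩
  obtain ⟨k, hk⟩ := st4_interp s (fun m => s (m + 1)) hs ht hsu hsd htu htd
  set f : QAut := (k * u * k⁻¹) * u with hfdef
  have hfN : f ∈ N := Subgroup.mul_mem _ (hN.conj_mem _ hu k) hu
  set fp : Equiv.Perm ℚ := (f : Equiv.Perm ℚ) with hfp
  have hgood' : ∀ n, (u : Equiv.Perm ℚ) (C n) = D n := fun n => hgood n
  have hkC : ∀ n, (k : Equiv.Perm ℚ) (C n) = D n := by
    intro n
    have h := hk (2 * n)
    rwa [hs1 n, hs2 n] at h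
  have hkD : ∀ n, (k : Equiv.Perm ℚ) (D n) = C (n + 1) := by
    intro n
    have h := hk (2 * n + 1)
    rw [hs2 n] at h
    rwa [show (2 * n + 1 + 1 : ℤ) = 2 * (n + 1) by ring, hs1 (n + 1)] at h
  have hfC : ∀ n, fp (C n) = C (n + 1) := by
    intro n
    have happ : fp (C n) = (k : Equiv.Perm ℚ) ((u : Equiv.Perm ℚ)
        (((k : Equiv.Perm ℚ))⁻¹ ((u : Equiv.Perm ℚ) (C n)))) := rfl
    have e1 : ((k : Equiv.Perm ℚ))⁻¹ (D n) = C n := by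
      rw [← hkC n, Equiv.Perm.inv_apply_self]
    rw [happ, hgood' n, e1, hgood' n, hkD n]
  have hfCinv : ∀ n, fp⁻¹ (C n) = C (n - 1) := by
    intro n
    have := hfC (n - 1)
    rw [sub_add_cancel] at this
    rw [← this, Equiv.Perm.inv_apply_self]
  have horb : ∀ m : ℤ, ∀ n, (fp ^ m) (C n) = C (n + m) := by
    intro m
    induction m using Int.induction_on with
    | zero => simp
    | succ i ih =>
      intro n
      rw [zpow_add_one, Equiv.Perm.mul_apply, hfC, ih]
      congr 1
      ring
    | pred i ih =>
      intro n
      rw [zpow_sub_one, Equiv.Perm.mul_apply, hfCinv, ih]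
      congr 1
      ring
  constructor
  · refine ⟨f, hfN, C 0, ?_, ?_, ?_⟩
    · rw [hfC 0]
      exact lt_trans (hlt 0) (hchain 0)
    · intro x
      obtain ⟨n, hn⟩ := hCub x
      exact ⟨n, by rwa [horb n 0, zero_add]⟩
    · intro x
      obtain ⟨n, hn⟩ := hCdb x
      exact ⟨n, by rwa [horb n 0, zero_add]⟩
  · refine ⟨f⁻¹, Subgroup.inv_mem _ hfN, C 0, ?_, ?_, ?_⟩
    · rw [st4_coe_inv, ← hfp, hfCinv 0]
      have h2 := hchain (0 - 1)
      rw [show (0 - 1 + 1 : ℤ) = 0 by ring] at h2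
      exact lt_trans (hlt (0 - 1)) h2
    · intro x
      obtain ⟨n, hn⟩ := hCub x
      refine ⟨-n, ?_⟩
      rw [st4_coe_inv, ← hfp, inv_zpow, ← zpow_neg, neg_neg, horb n 0, zero_add]
      exact hn
    · intro x
      obtain ⟨n, hn⟩ := hCdb x
      refine ⟨-n, ?_⟩
      rw [st4_coe_inv, ← hfp, inv_zpow, ← zpow_neg, neg_neg, horb n 0, zero_add]
      exact hn

/-- If `g` is an unbounded automorphism of `(ℚ, ≤)`, then the normal
closure of `{g}` contains an element with a single `+`-orbital and an element with a
single `−`-orbital. -/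
theorem stmt4 (g : QAut)
    (hnr : ¬ ∃ a : ℚ, ∀ b : ℚ, a < b → (g : Equiv.Perm ℚ) b = b)
    (hnl : ¬ ∃ a : ℚ, ∀ b : ℚ, b < a → (g : Equiv.Perm ℚ) b = b) :
    (∃ f ∈ Subgroup.normalClosure ({g} : Set QAut), SinglePlusQ (f : Equiv.Perm ℚ)) ∧
    (∃ f ∈ Subgroup.normalClosure ({g} : Set QAut), SingleMinusQ (f : Equiv.Perm ℚ)) := by
  classical
  set N := Subgroup.normalClosure ({g} : Set QAut) with hNdef
  have hN : N.Normal := Subgroup.normalClosure_normal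
  have hgN : g ∈ N := Subgroup.subset_normalClosure (Set.mem_singleton g)
  have hgiN : g⁻¹ ∈ N := Subgroup.inv_mem _ hgN
  push_neg at hnr hnl
  have hmovr : ∀ x : ℚ, ∃ b, x < b ∧ (g : Equiv.Perm ℚ) b ≠ b := by
    intro x
    obtain ⟨b, hb1, hb2⟩ := hnr x
    exact ⟨b, hb1, hb2⟩
  have hmovl : ∀ x : ℚ, ∃ b, b < x ∧ (g : Equiv.Perm ℚ) b ≠ b := by
    intro x
    obtain ⟨b, hb1, hb2⟩ := hnl x
    exact ⟨b, hb1, hb2⟩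
  have hdich1 := st4_dich_cof g hmovr
  have hdich2 := st4_dich_coi g hmovl
  have hkey : ∃ u ∈ N, St4UpCof (u : Equiv.Perm ℚ) ∧ St4UpCoi (u : Equiv.Perm ℚ) := by
    rcases hdich1 with hA | hA' <;> rcases hdich2 with hB | hB'
    · exact ⟨g, hgN, hA, hB⟩
    · exact st4_promote N hN g hgN hA hB'
    · exact st4_promote N hN g⁻¹ hgiN (st4_dncof_inv g hA') (st4_upcoi_inv g hB)
    · exact ⟨g⁻¹, hgiN, st4_dncof_inv g hA', st4_dncoi_inv g hB'⟩
  obtain ⟨u, huN, hucof, hucoi⟩ := hkey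
  exact st4_final N hN u huN hucof hucoi
end

section
/- Let M be a universal n-linear order, let m ∈ {1, …, n}, and let g ∈ Aut(M) be unbounded with respect to <_m. Then the normal closure of {g} in Aut(M) contains an element having a single +-orbital with respect to <_m, and also contains an element having a single −-orbital with respect to <_m. -/
namespace S5

variable {n : ℕ} {M : Type*}

lemma asymm (L : NLinear n M) {i : Fin n} {a b : M} (h : L.lt i a b) : ¬ L.lt i b a :=
  fun h' => L.irrefl i a (L.trans i a b a h h')

lemma ne_of_lt' (L : NLinear n M) {i : Fin n} {a b : M} (h : L.lt i a b) : a ≠ b := by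
  rintro rfl; exact L.irrefl i a h

lemma lt_of_not_lt (L : NLinear n M) {i : Fin n} {a b : M} (h : ¬ L.lt i a b) (hne : a ≠ b) :
    L.lt i b a := by
  rcases L.total i a b with h1 | h1 | h1
  · exact absurd h1 h
  · exact absurd h1 hne
  · exact h1

/-- partial isomorphism, as a finite set of pairs -/
def PIso (L : NLinear n M) (s : Finset (M × M)) : Prop :=
  ∀ i : Fin n, ∀ p ∈ s, ∀ q ∈ s, (L.lt i p.1 q.1 ↔ L.lt i p.2 q.2)

lemma PIso.inj2 {L : NLinear n M} (m : Fin n) {s : Finset (M × M)} (hs : PIso L s)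
    {p q : M × M} (hp : p ∈ s) (hq : q ∈ s) (h : p.2 = q.2) : p.1 = q.1 := by
  by_contra hne
  rcases L.total m p.1 q.1 with h1 | h1 | h1
  · exact L.irrefl m p.2 (h ▸ (hs m p hp q hq).1 h1)
  · exact hne h1
  · exact L.irrefl m p.2 (h ▸ (hs m q hq p hp).1 h1)

lemma PIso.inj1 {L : NLinear n M} (m : Fin n) {s : Finset (M × M)} (hs : PIso L s)
    {p q : M × M} (hp : p ∈ s) (hq : q ∈ s) (h : p.1 = q.1) : p.2 = q.2 := by
  by_contra hne
  rcases L.total m p.2 q.2 with h1 | h1 | h1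
  · exact L.irrefl m p.1 (h ▸ (hs m p hp q hq).2 h1)
  · exact hne h1
  · exact L.irrefl m p.1 (h ▸ (hs m q hq p hp).2 h1)

lemma PIso.mono {L : NLinear n M} {s t : Finset (M × M)} (hst : s ⊆ t) (ht : PIso L t) :
    PIso L s := fun i p hp q hq => ht i p (hst hp) q (hst hq)

/-- The master one-point extension lemma. -/
lemma masterExt [DecidableEq M] {L : NLinear n M} (hL : IsUniversalNLinear n M L) (m : Fin n)
    (s : Finset (M × M)) (hs : PIso L s) (u : M)
    (hu : ∀ p ∈ s, p.1 ≠ u)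
    (X Y : Finset M)
    (hXY : ∀ x ∈ X, ∀ y ∈ Y, L.lt m x y)
    (hX : ∀ x ∈ X, ∀ p ∈ s, L.lt m u p.1 → L.lt m x p.2)
    (hY : ∀ y ∈ Y, ∀ p ∈ s, L.lt m p.1 u → L.lt m p.2 y) :
    ∃ v, (∀ p ∈ s, p.2 ≠ v) ∧ (∀ x ∈ X, L.lt m x v) ∧ (∀ y ∈ Y, L.lt m v y) ∧
      PIso L (insert (u, v) s) := by
  classical
  set A : Finset M := s.image Prod.snd ∪ X ∪ Y with hA
  have hmemA : ∀ p ∈ s, p.2 ∈ A := fun p hp => by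
    exact Finset.mem_union_left _ (Finset.mem_union_left _ (Finset.mem_image_of_mem Prod.snd hp))
  have hXA : ∀ x ∈ X, x ∈ A := fun x hx => Finset.mem_union_left _ (Finset.mem_union_right _ hx)
  have hYA : ∀ y ∈ Y, y ∈ A := fun y hy => Finset.mem_union_right _ hy
  set D : Fin n → Set M := fun i =>
    {a | a ∈ A ∧ ((∃ p ∈ s, L.lt i p.1 u ∧ (a = p.2 ∨ L.lt i a p.2)) ∨
      (i = m ∧ ∃ x ∈ X, a = x ∨ L.lt m a x))} with hD
  have hDsub : ∀ i, D i ⊆ ↑A := fun i a ha => ha.1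
  have hDdc : ∀ i, ∀ a ∈ A, ∀ b ∈ A, L.lt i a b → b ∈ D i → a ∈ D i := by
    intro i a ha b hb hab hbD
    refine ⟨ha, ?_⟩
    rcases hbD.2 with ⟨p, hp, hpu, hbp⟩ | ⟨rfl, x, hx, hbx⟩
    · refine Or.inl ⟨p, hp, hpu, Or.inr ?_⟩
      rcases hbp with rfl | h
      · exact hab
      · exact L.trans i a b p.2 hab h
    · refine Or.inr ⟨rfl, x, hx, Or.inr ?_⟩
      rcases hbx with rfl | h
      · exact hab
      · exact L.trans i a b x hab h
  obtain ⟨v, hvA, hv⟩ := hL.extension A D hDsub hDdc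
  have hvne : ∀ p ∈ s, p.2 ≠ v := fun p hp h => hvA (h ▸ hmemA p hp)
  -- key fact
  have f1 : ∀ p ∈ s, ∀ i, (L.lt i p.2 v ↔ L.lt i p.1 u) := by
    intro p hp i
    rw [hv i p.2 (hmemA p hp)]
    constructor
    · rintro ⟨-, ⟨q, hq, hqu, hpq⟩ | ⟨him, x, hx, hpx⟩⟩
      · rcases hpq with h | h
        · rwa [PIso.inj2 m hs hp hq h]
        · exact L.trans i p.1 q.1 u ((hs i p hp q hq).2 h) hqu
      · subst him
        by_contra hcon
        have h2 : L.lt i u p.1 := lt_of_not_lt L hcon (hu p hp)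
        have h3 : L.lt i x p.2 := hX x hx p hp h2
        rcases hpx with heq | h
        · rw [heq] at h3; exact L.irrefl i x h3
        · exact L.irrefl i p.2 (L.trans i p.2 x p.2 h h3)
    · intro h
      exact ⟨hmemA p hp, Or.inl ⟨p, hp, h, Or.inl rfl⟩⟩
  have f2 : ∀ x ∈ X, L.lt m x v := by
    intro x hx
    rw [hv m x (hXA x hx)]
    exact ⟨hXA x hx, Or.inr ⟨rfl, x, hx, Or.inl rfl⟩⟩
  have f3 : ∀ y ∈ Y, L.lt m v y := by
    intro y hy
    have hyD : y ∉ D m := by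
      rintro ⟨-, ⟨p, hp, hpu, hyp⟩ | ⟨-, x, hx, hyx⟩⟩
      · have h2 : L.lt m p.2 y := hY y hy p hp hpu
        rcases hyp with heq | h
        · rw [heq] at h2; exact L.irrefl m p.2 h2
        · exact L.irrefl m y (L.trans m y p.2 y h h2)
      · have h2 : L.lt m x y := hXY x hx y hy
        rcases hyx with heq | h
        · rw [heq] at h2; exact L.irrefl m x h2
        · exact L.irrefl m y (L.trans m y x y h h2)
    have h1 : ¬ L.lt m y v := fun h => hyD ((hv m y (hYA y hy)).1 h)
    have h2 : y ≠ v := fun h => hvA (h ▸ hYA y hy)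
    exact lt_of_not_lt L h1 h2
  refine ⟨v, hvne, f2, f3, ?_⟩
  intro i p hp q hq
  rcases Finset.mem_insert.1 hp with rfl | hp' <;> rcases Finset.mem_insert.1 hq with rfl | hq'
  · constructor <;> (intro h; exact absurd h (L.irrefl i _))
  · -- p = (u,v), q old : lt i u q.1 ↔ lt i v q.2
    simp only
    constructor
    · intro h
      have h1 : ¬ L.lt i q.1 u := asymm L h
      have h2 : ¬ L.lt i q.2 v := fun hc => h1 ((f1 q hq' i).1 hc)
      exact lt_of_not_lt L h2 (hvne q hq')
    · intro h
      have h1 : ¬ L.lt i q.2 v := asymm L h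
      have h2 : ¬ L.lt i q.1 u := fun hc => h1 ((f1 q hq' i).2 hc)
      exact lt_of_not_lt L h2 (hu q hq')
  · exact (f1 p hp' i).symm
  · exact hs i p hp' q hq'


/-- the dual structure (all orders reversed) -/
def dln (L : NLinear n M) : NLinear n M where
  lt := fun i a b => L.lt i b a
  irrefl := fun i a h => L.irrefl i a h
  trans := fun i a b c h1 h2 => L.trans i c b a h2 h1
  total := fun i a b => by rcases L.total i a b with h | h | h
                           · exact Or.inr (Or.inr h)
                           · exact Or.inr (Or.inl h)
                           · exact Or.inl h

lemma dual_univ {L : NLinear n M} (hL : IsUniversalNLinear n M L) :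
    IsUniversalNLinear n M (dln L) := by
  refine ⟨hL.countable, hL.infinite, ?_⟩
  intro A D hsub hdc
  classical
  obtain ⟨x, hxA, hx⟩ := hL.extension A (fun i => ↑A \ D i)
    (fun i => Set.diff_subset)
    (by
      intro i a ha b hb hab hbD
      refine ⟨ha, fun haD => hbD.2 (hdc i b hb a ha hab haD)⟩)
  refine ⟨x, hxA, ?_⟩
  intro i a ha
  have h1 := hx i a ha
  constructor
  · intro hlt
    by_contra hD
    have : L.lt i a x := h1.2 ⟨ha, hD⟩
    exact L.irrefl i a (L.trans i a x a this hlt)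
  · intro hD
    have h2 : ¬ L.lt i a x := fun hc => (h1.1 hc).2 hD
    have h3 : a ≠ x := fun hc => hxA (hc ▸ ha)
    exact lt_of_not_lt L h2 h3

lemma PIso_dual {L : NLinear n M} {s : Finset (M × M)} :
    PIso (dln L) s ↔ PIso L s :=
  ⟨fun h i p hp q hq => h i q hq p hp, fun h i p hp q hq => h i q hq p hp⟩

lemma dual_lt {L : NLinear n M} {i : Fin n} {a b : M} : (dln L).lt i a b ↔ L.lt i b a :=
  Iff.rfl

lemma PIso.swap [DecidableEq M] {L : NLinear n M} {s : Finset (M × M)} (hs : PIso L s) :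
    PIso L (s.image Prod.swap) := by
  intro i p hp q hq
  obtain ⟨p', hp', rfl⟩ := Finset.mem_image.1 hp
  obtain ⟨q', hq', rfl⟩ := Finset.mem_image.1 hq
  exact (hs i p' hp' q' hq').symm

lemma exists_above {L : NLinear n M} (hL : IsUniversalNLinear n M L) (m : Fin n)
    (F : Finset M) : ∃ w, ∀ a ∈ F, L.lt m a w := by
  obtain ⟨x, hxA, hx⟩ := hL.extension F (fun _ => ↑F) (fun _ => subset_rfl)
    (fun i a ha b hb _ _ => ha)
  exact ⟨x, fun a ha => (hx m a ha).2 ha⟩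

lemma exists_below {L : NLinear n M} (hL : IsUniversalNLinear n M L) (m : Fin n)
    (F : Finset M) : ∃ w, ∀ a ∈ F, L.lt m w a := by
  obtain ⟨x, hxA, hx⟩ := hL.extension F (fun _ => ∅) (fun _ => Set.empty_subset _)
    (fun i a ha b hb _ hc => hc)
  refine ⟨x, fun a ha => ?_⟩
  have h2 : ¬ L.lt m a x := fun hc => (hx m a ha).1 hc
  exact lt_of_not_lt L h2 (fun hc => hxA (hc ▸ ha))

/-- fill domain, keeping the range strictly below `b` -/
lemma fillDom [DecidableEq M] {L : NLinear n M} (hL : IsUniversalNLinear n M L) (m : Fin n)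
    {s : Finset (M × M)} {b : M} (hs : PIso L s) (hI : ∀ p ∈ s, L.lt m p.2 b) (u : M) :
    ∃ t, s ⊆ t ∧ PIso L t ∧ (∃ y, (u, y) ∈ t) ∧ (∀ p ∈ t, L.lt m p.2 b) := by
  by_cases hc : ∃ p ∈ s, p.1 = u
  · obtain ⟨p, hp, hp1⟩ := hc
    exact ⟨s, subset_rfl, hs, ⟨p.2, by rw [← hp1]; exact hp⟩, hI⟩
  · push_neg at hc
    obtain ⟨v, hvne, -, hvY, hPI⟩ := masterExt hL m s hs u hc ∅ {b}
      (by simp) (by simp) (by intro y hy p hp _; simp at hy; rw [hy]; exact hI p hp)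
    refine ⟨insert (u, v) s, Finset.subset_insert _ _, hPI, ⟨v, Finset.mem_insert_self _ _⟩, ?_⟩
    intro p hp
    rcases Finset.mem_insert.1 hp with rfl | hp'
    · exact hvY b (Finset.mem_singleton_self b)
    · exact hI p hp'

/-- fill domain, no constraint -/
lemma fillDomP [DecidableEq M] {L : NLinear n M} (hL : IsUniversalNLinear n M L) (m : Fin n)
    {s : Finset (M × M)} (hs : PIso L s) (u : M) :
    ∃ t, s ⊆ t ∧ PIso L t ∧ (∃ y, (u, y) ∈ t) := by
  by_cases hc : ∃ p ∈ s, p.1 = u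
  · obtain ⟨p, hp, hp1⟩ := hc
    exact ⟨s, subset_rfl, hs, ⟨p.2, by rw [← hp1]; exact hp⟩⟩
  · push_neg at hc
    obtain ⟨v, hvne, -, -, hPI⟩ := masterExt hL m s hs u hc ∅ ∅
      (by simp) (by simp) (by simp)
    exact ⟨insert (u, v) s, Finset.subset_insert _ _, hPI, ⟨v, Finset.mem_insert_self _ _⟩⟩

lemma unswap_mem [DecidableEq M] {s : Finset (M × M)} {u v : M}
    (h : (u, v) ∈ s.image Prod.swap) : (v, u) ∈ s := by
  obtain ⟨p, hp, he⟩ := Finset.mem_image.1 h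
  have : p = (v, u) := by
    cases p; simp [Prod.swap] at he; simp [he.1, he.2]
  rwa [this] at hp

/-- fill range, keeping the range strictly below `b`; requires the new point to be below b -/
lemma fillRng [DecidableEq M] {L : NLinear n M} (hL : IsUniversalNLinear n M L) (m : Fin n)
    {s : Finset (M × M)} {b : M} (hs : PIso L s) (hI : ∀ p ∈ s, L.lt m p.2 b) (x : M)
    (hx : L.lt m x b) :
    ∃ t, s ⊆ t ∧ PIso L t ∧ (∃ w, (w, x) ∈ t) ∧ (∀ p ∈ t, L.lt m p.2 b) := by
  by_cases hc : ∃ p ∈ s, p.2 = x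
  · obtain ⟨p, hp, hp2⟩ := hc
    exact ⟨s, subset_rfl, hs, ⟨p.1, by rw [← hp2]; exact hp⟩, hI⟩
  · push_neg at hc
    obtain ⟨v, hvne, -, -, hPI⟩ := masterExt hL m (s.image Prod.swap) hs.swap x
      (by intro p hp; obtain ⟨p', hp', rfl⟩ := Finset.mem_image.1 hp; exact hc p' hp') ∅ ∅
      (by simp) (by simp) (by simp)
    refine ⟨insert (v, x) s, Finset.subset_insert _ _, ?_, ⟨v, Finset.mem_insert_self _ _⟩, ?_⟩
    · intro i p hp q hq
      have hsw : ∀ r, r ∈ insert (v, x) s → r.swap ∈ insert (x, v) (s.image Prod.swap) := by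
        intro r hr
        rcases Finset.mem_insert.1 hr with rfl | hr'
        · exact Finset.mem_insert_self _ _
        · exact Finset.mem_insert_of_mem (Finset.mem_image_of_mem Prod.swap hr')
      exact (hPI i p.swap (hsw p hp) q.swap (hsw q hq)).symm
    · intro p hp
      rcases Finset.mem_insert.1 hp with rfl | hp'
      · exact hx
      · exact hI p hp'

/-- fill range, no constraint -/
lemma fillRngP [DecidableEq M] {L : NLinear n M} (hL : IsUniversalNLinear n M L) (m : Fin n)
    {s : Finset (M × M)} (hs : PIso L s) (x : M) :
    ∃ t, s ⊆ t ∧ PIso L t ∧ (∃ w, (w, x) ∈ t) := by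
  by_cases hc : ∃ p ∈ s, p.2 = x
  · obtain ⟨p, hp, hp2⟩ := hc
    exact ⟨s, subset_rfl, hs, ⟨p.1, by rw [← hp2]; exact hp⟩⟩
  · push_neg at hc
    obtain ⟨v, hvne, -, -, hPI⟩ := masterExt hL m (s.image Prod.swap) hs.swap x
      (by intro p hp; obtain ⟨p', hp', rfl⟩ := Finset.mem_image.1 hp; exact hc p' hp') ∅ ∅
      (by simp) (by simp) (by simp)
    refine ⟨insert (v, x) s, Finset.subset_insert _ _, ?_, ⟨v, Finset.mem_insert_self _ _⟩⟩
    intro i p hp q hq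
    have hsw : ∀ r, r ∈ insert (v, x) s → r.swap ∈ insert (x, v) (s.image Prod.swap) := by
      intro r hr
      rcases Finset.mem_insert.1 hr with rfl | hr'
      · exact Finset.mem_insert_self _ _
      · exact Finset.mem_insert_of_mem (Finset.mem_image_of_mem Prod.swap hr')
    exact (hPI i p.swap (hsw p hp) q.swap (hsw q hq)).symm


def UpHigh (L : NLinear n M) (m : Fin n) (φ : M → M) : Prop :=
  ∀ x, ∃ q, L.lt m q (φ q) ∧ L.lt m x q

def AnyHigh (L : NLinear n M) (m : Fin n) (φ : M → M) : Prop :=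
  ∀ x, ∃ q, q ≠ φ q ∧ L.lt m x q ∧ L.lt m x (φ q)

lemma memR [DecidableEq M] {s : Finset (M × M)} {p : M × M} (hp : p ∈ s) : p.2 ∈ s.image Prod.snd :=
  Finset.mem_image_of_mem Prod.snd hp

/-- the inner pin of a link step -/
lemma pin1 [DecidableEq M] {L : NLinear n M} (hL : IsUniversalNLinear n M L) (m : Fin n)
    {φ : M → M} {s : Finset (M × M)} {b : M} (hs : PIso L s) (hU : UpHigh L m φ)
    (hI : ∀ p ∈ s, L.lt m p.2 b) (XB : Finset M) :
    ∃ t σ γ ζ, s ⊆ t ∧ PIso L t ∧ (σ, γ) ∈ t ∧ (φ σ, ζ) ∈ t ∧ L.lt m γ b ∧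
      (∀ x ∈ XB, L.lt m x ζ) := by
  obtain ⟨w, hw⟩ := exists_above hL m (s.image Prod.fst)
  obtain ⟨σ, hσφ, hσw⟩ := hU w
  have habove : ∀ p ∈ s, L.lt m p.1 σ :=
    fun p hp => L.trans m p.1 w σ (hw p.1 (Finset.mem_image_of_mem Prod.fst hp)) hσw
  obtain ⟨γ, -, -, hγY, hP0⟩ := masterExt hL m s hs σ
    (fun p hp => ne_of_lt' L (habove p hp)) ∅ {b}
    (by simp) (by simp)
    (by intro y hy p hp _; rw [Finset.mem_singleton.1 hy]; exact hI p hp)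
  have habove2 : ∀ p ∈ insert (σ, γ) s, L.lt m p.1 (φ σ) := by
    intro p hp
    rcases Finset.mem_insert.1 hp with rfl | hp'
    · exact hσφ
    · exact L.trans m p.1 σ (φ σ) (habove p hp') hσφ
  obtain ⟨ζ, -, hζX, -, hP1⟩ := masterExt hL m (insert (σ, γ) s) hP0 (φ σ)
    (fun p hp => ne_of_lt' L (habove2 p hp)) XB ∅
    (by simp) (fun x hx p hp hc => absurd hc (asymm L (habove2 p hp))) (by simp)
  exact ⟨insert (φ σ, ζ) (insert (σ, γ) s), σ, γ, ζ, fun p hp =>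
      Finset.mem_insert_of_mem (Finset.mem_insert_of_mem hp), hP1,
    Finset.mem_insert_of_mem (Finset.mem_insert_self _ _), Finset.mem_insert_self _ _,
    hγY b (Finset.mem_singleton_self b), hζX⟩

/-- an "up" relay of a link step -/
lemma relayUp [DecidableEq M] {L : NLinear n M} (hL : IsUniversalNLinear n M L) (m : Fin n)
    {φ : M → M} {s : Finset (M × M)} {W : M} (hs : PIso L s) (hU : UpHigh L m φ)
    (hWrng : ∀ p ∈ s, L.lt m p.2 W) (XN : Finset M) :
    ∃ t u zu zv, s ⊆ t ∧ PIso L t ∧ (u, zu) ∈ t ∧ (φ u, zv) ∈ t ∧ L.lt m zu W ∧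
      (∀ x ∈ XN, L.lt m x zv) := by
  obtain ⟨w, hw⟩ := exists_above hL m (s.image Prod.fst)
  obtain ⟨u, huφ, huw⟩ := hU w
  have habove : ∀ p ∈ s, L.lt m p.1 u :=
    fun p hp => L.trans m p.1 w u (hw p.1 (Finset.mem_image_of_mem Prod.fst hp)) huw
  obtain ⟨zu, -, -, hzuY, hP0⟩ := masterExt hL m s hs u
    (fun p hp => ne_of_lt' L (habove p hp)) ∅ {W}
    (by simp) (by simp)
    (by intro y hy p hp _; rw [Finset.mem_singleton.1 hy]; exact hWrng p hp)
  have habove2 : ∀ p ∈ insert (u, zu) s, L.lt m p.1 (φ u) := by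
    intro p hp
    rcases Finset.mem_insert.1 hp with rfl | hp'
    · exact huφ
    · exact L.trans m p.1 u (φ u) (habove p hp') huφ
  obtain ⟨zv, -, hzvX, -, hP1⟩ := masterExt hL m (insert (u, zu) s) hP0 (φ u)
    (fun p hp => ne_of_lt' L (habove2 p hp)) XN ∅
    (by simp) (fun x hx p hp hc => absurd hc (asymm L (habove2 p hp))) (by simp)
  exact ⟨insert (φ u, zv) (insert (u, zu) s), u, zu, zv, fun p hp =>
      Finset.mem_insert_of_mem (Finset.mem_insert_of_mem hp), hP1,
    Finset.mem_insert_of_mem (Finset.mem_insert_self _ _), Finset.mem_insert_self _ _,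
    hzuY W (Finset.mem_singleton_self W), hzvX⟩

/-- an "any direction" relay of a link step -/
lemma relayAny [DecidableEq M] {L : NLinear n M} (hL : IsUniversalNLinear n M L) (m : Fin n)
    {φ : M → M} {s : Finset (M × M)} {W : M} (hs : PIso L s) (hA : AnyHigh L m φ)
    (hWrng : ∀ p ∈ s, L.lt m p.2 W) (XN : Finset M) (hXNW : ∀ x ∈ XN, L.lt m x W) :
    ∃ t u zu zv, s ⊆ t ∧ PIso L t ∧ (u, zu) ∈ t ∧ (φ u, zv) ∈ t ∧ L.lt m zu W ∧
      (∀ x ∈ XN, L.lt m x zv) ∧ (∀ p ∈ t, p ∈ s ∨ ∀ x ∈ XN, L.lt m x p.2) := by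
  obtain ⟨w, hw⟩ := exists_above hL m (s.image Prod.fst)
  obtain ⟨u, hune, huw, huφw⟩ := hA w
  have habove : ∀ p ∈ s, L.lt m p.1 u :=
    fun p hp => L.trans m p.1 w u (hw p.1 (Finset.mem_image_of_mem Prod.fst hp)) huw
  have habove' : ∀ p ∈ s, L.lt m p.1 (φ u) :=
    fun p hp => L.trans m p.1 w (φ u) (hw p.1 (Finset.mem_image_of_mem Prod.fst hp)) huφw
  rcases L.total m u (φ u) with hdir | hdir | hdir
  · -- up
    obtain ⟨zu, -, hzuX, hzuY, hP0⟩ := masterExt hL m s hs u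
      (fun p hp => ne_of_lt' L (habove p hp)) XN {W}
      (fun x hx y hy => by rw [Finset.mem_singleton.1 hy]; exact hXNW x hx)
      (fun x hx p hp hc => absurd hc (asymm L (habove p hp)))
      (by intro y hy p hp _; rw [Finset.mem_singleton.1 hy]; exact hWrng p hp)
    have habove2 : ∀ p ∈ insert (u, zu) s, L.lt m p.1 (φ u) := by
      intro p hp
      rcases Finset.mem_insert.1 hp with rfl | hp'
      · exact hdir
      · exact habove' p hp'
    obtain ⟨zv, -, hzvX, -, hP1⟩ := masterExt hL m (insert (u, zu) s) hP0 (φ u)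
      (fun p hp => ne_of_lt' L (habove2 p hp)) XN ∅
      (by simp) (fun x hx p hp hc => absurd hc (asymm L (habove2 p hp))) (by simp)
    refine ⟨insert (φ u, zv) (insert (u, zu) s), u, zu, zv, fun p hp =>
        Finset.mem_insert_of_mem (Finset.mem_insert_of_mem hp), hP1,
      Finset.mem_insert_of_mem (Finset.mem_insert_self _ _), Finset.mem_insert_self _ _,
      hzuY W (Finset.mem_singleton_self W), hzvX, ?_⟩
    intro p hp
    rcases Finset.mem_insert.1 hp with rfl | hp'
    · exact Or.inr hzvX
    · rcases Finset.mem_insert.1 hp' with rfl | hp''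
      · exact Or.inr hzuX
      · exact Or.inl hp''
  · exact absurd hdir hune
  · -- down : add (φ u, zv) first
    obtain ⟨zv, -, hzvX, hzvY, hP0⟩ := masterExt hL m s hs (φ u)
      (fun p hp => ne_of_lt' L (habove' p hp)) XN {W}
      (fun x hx y hy => by rw [Finset.mem_singleton.1 hy]; exact hXNW x hx)
      (fun x hx p hp hc => absurd hc (asymm L (habove' p hp)))
      (by intro y hy p hp _; rw [Finset.mem_singleton.1 hy]; exact hWrng p hp)
    have habove2 : ∀ p ∈ insert (φ u, zv) s, L.lt m p.1 u := by
      intro p hp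
      rcases Finset.mem_insert.1 hp with rfl | hp'
      · exact hdir
      · exact habove p hp'
    obtain ⟨zu, -, hzuX, hzuY, hP1⟩ := masterExt hL m (insert (φ u, zv) s) hP0 u
      (fun p hp => ne_of_lt' L (habove2 p hp)) XN {W}
      (fun x hx y hy => by rw [Finset.mem_singleton.1 hy]; exact hXNW x hx)
      (fun x hx p hp hc => absurd hc (asymm L (habove2 p hp)))
      (by
        intro y hy p hp _
        rw [Finset.mem_singleton.1 hy]
        rcases Finset.mem_insert.1 hp with rfl | hp'
        · exact hzvY W (Finset.mem_singleton_self W)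
        · exact hWrng p hp')
    refine ⟨insert (u, zu) (insert (φ u, zv) s), u, zu, zv, fun p hp =>
        Finset.mem_insert_of_mem (Finset.mem_insert_of_mem hp), hP1,
      Finset.mem_insert_self _ _, Finset.mem_insert_of_mem (Finset.mem_insert_self _ _),
      hzuY W (Finset.mem_singleton_self W), hzvX, ?_⟩
    intro p hp
    rcases Finset.mem_insert.1 hp with rfl | hp'
    · exact Or.inr hzuX
    · rcases Finset.mem_insert.1 hp' with rfl | hp''
      · exact Or.inr hzvX
      · exact Or.inl hp''

/-- The certificate produced by one link step. -/
def LinkCert (L : NLinear n M) (m : Fin n) (φ1 φ2 φ3 φ4 : M → M)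
    (t1 t2 t3 t4 : Finset (M × M)) (b b' : M) : Prop :=
  ∃ σ γ ζ u2 zu2 zv2 u3 zu3 zv3 u4 zu4 zv4,
    (σ, γ) ∈ t1 ∧ (φ1 σ, ζ) ∈ t1 ∧ L.lt m γ b ∧
    (u2, zu2) ∈ t2 ∧ (φ2 u2, zv2) ∈ t2 ∧ L.lt m zu2 ζ ∧
    (u3, zu3) ∈ t3 ∧ (φ3 u3, zv3) ∈ t3 ∧ L.lt m zu3 zv2 ∧
    (u4, zu4) ∈ t4 ∧ (φ4 u4, zv4) ∈ t4 ∧ L.lt m zu4 zv3 ∧ b' = zv4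

lemma LinkCert.mono {L : NLinear n M} {m : Fin n} {φ1 φ2 φ3 φ4 : M → M}
    {t1 t2 t3 t4 r1 r2 r3 r4 : Finset (M × M)} {b b' : M}
    (h : LinkCert L m φ1 φ2 φ3 φ4 t1 t2 t3 t4 b b')
    (h1 : t1 ⊆ r1) (h2 : t2 ⊆ r2) (h3 : t3 ⊆ r3) (h4 : t4 ⊆ r4) :
    LinkCert L m φ1 φ2 φ3 φ4 r1 r2 r3 r4 b b' := by
  obtain ⟨a1,a2,a3,a4,a5,a6,a7,a8,a9,a10,a11,a12,m1,m2,m3,m4,m5,m6,m7,m8,m9,m10,m11,m12,m13⟩ := h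
  exact ⟨a1,a2,a3,a4,a5,a6,a7,a8,a9,a10,a11,a12, h1 m1, h1 m2, m3, h2 m4, h2 m5, m6,
    h3 m7, h3 m8, m9, h4 m10, h4 m11, m12, m13⟩

/-- One full link step, pushing the head `b` up past `e0`. -/
lemma link [DecidableEq M] {L : NLinear n M} (hL : IsUniversalNLinear n M L) (m : Fin n)
    {φ1 φ2 φ3 φ4 : M → M}
    (U1 : UpHigh L m φ1) (U2 : UpHigh L m φ2) (A3 : AnyHigh L m φ3) (A4 : AnyHigh L m φ4)
    {s1 s2 s3 s4 : Finset (M × M)}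
    (h1 : PIso L s1) (h2 : PIso L s2) (h3 : PIso L s3) (h4 : PIso L s4)
    (b d e0 : M) (I1 : ∀ p ∈ s1, L.lt m p.2 b) :
    ∃ t1 t2 t3 t4 b',
      s1 ⊆ t1 ∧ s2 ⊆ t2 ∧ s3 ⊆ t3 ∧ s4 ⊆ t4 ∧
      PIso L t1 ∧ PIso L t2 ∧ PIso L t3 ∧ PIso L t4 ∧
      L.lt m e0 b' ∧ L.lt m b b' ∧ L.lt m d b' ∧
      (∀ p ∈ t1, L.lt m p.2 b') ∧
      (∀ p ∈ t4, p ∈ s4 ∨ L.lt m d p.2) ∧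
      LinkCert L m φ1 φ2 φ3 φ4 t1 t2 t3 t4 b b' := by
  obtain ⟨t1, σ, γ, ζ, hs1, hP1, hpin1, hpin2, hγb, hζX⟩ :=
    pin1 hL m h1 U1 I1 (s2.image Prod.snd)
  have hWrng2 : ∀ p ∈ s2, L.lt m p.2 ζ := fun p hp => hζX p.2 (memR hp)
  set XN2 : Finset M := insert e0 (insert b (insert d
    ((t1.image Prod.snd ∪ s3.image Prod.snd) ∪ s4.image Prod.snd))) with hXN2
  obtain ⟨t2, u2, zu2, zv2, hs2, hP2, hpin3, hpin4, hzu2, hzv2⟩ :=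
    relayUp hL m h2 U2 hWrng2 XN2
  have he0zv2 : L.lt m e0 zv2 := hzv2 e0 (by simp [hXN2])
  have hbzv2 : L.lt m b zv2 := hzv2 b (by simp [hXN2])
  have hdzv2 : L.lt m d zv2 := hzv2 d (by simp [hXN2])
  have ht1zv2 : ∀ p ∈ t1, L.lt m p.2 zv2 := fun p hp => hzv2 p.2 (by
    simp only [hXN2, Finset.mem_insert, Finset.mem_union]
    exact Or.inr (Or.inr (Or.inr (Or.inl (Or.inl (memR hp))))))
  have hs3zv2 : ∀ p ∈ s3, L.lt m p.2 zv2 := fun p hp => hzv2 p.2 (by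
    simp only [hXN2, Finset.mem_insert, Finset.mem_union]
    exact Or.inr (Or.inr (Or.inr (Or.inl (Or.inr (memR hp))))))
  have hs4zv2 : ∀ p ∈ s4, L.lt m p.2 zv2 := fun p hp => hzv2 p.2 (by
    simp only [hXN2, Finset.mem_insert, Finset.mem_union]
    exact Or.inr (Or.inr (Or.inr (Or.inr (memR hp)))))
  set XN3 : Finset M := insert e0 (insert b (insert d
    (t1.image Prod.snd ∪ s4.image Prod.snd))) with hXN3
  have hXN3zv2 : ∀ x ∈ XN3, L.lt m x zv2 := by
    intro x hx
    simp only [hXN3, Finset.mem_insert, Finset.mem_union] at hx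
    rcases hx with rfl | rfl | rfl | hx | hx
    · exact he0zv2
    · exact hbzv2
    · exact hdzv2
    · obtain ⟨p, hp, rfl⟩ := Finset.mem_image.1 hx; exact ht1zv2 p hp
    · obtain ⟨p, hp, rfl⟩ := Finset.mem_image.1 hx; exact hs4zv2 p hp
  obtain ⟨t3, u3, zu3, zv3, hs3, hP3, hpin5, hpin6, hzu3, hzv3, -⟩ :=
    relayAny hL m h3 A3 hs3zv2 XN3 hXN3zv2
  set XN4 : Finset M := insert e0 (insert b (insert d (t1.image Prod.snd))) with hXN4
  have hXN4sub : ∀ x ∈ XN4, x ∈ XN3 := by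
    intro x hx
    simp only [hXN4, Finset.mem_insert] at hx
    simp only [hXN3, Finset.mem_insert, Finset.mem_union]
    tauto
  have hXN4zv3 : ∀ x ∈ XN4, L.lt m x zv3 := fun x hx => hzv3 x (hXN4sub x hx)
  have hs4zv3 : ∀ p ∈ s4, L.lt m p.2 zv3 := fun p hp => hzv3 p.2 (by
    simp only [hXN3, Finset.mem_insert, Finset.mem_union]
    exact Or.inr (Or.inr (Or.inr (Or.inr (memR hp)))))
  obtain ⟨t4, u4, zu4, zv4, hs4, hP4, hpin7, hpin8, hzu4, hzv4, hmaint4⟩ :=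
    relayAny hL m h4 A4 hs4zv3 XN4 hXN4zv3
  refine ⟨t1, t2, t3, t4, zv4, hs1, hs2, hs3, hs4, hP1, hP2, hP3, hP4,
    hzv4 e0 (by simp [hXN4]), hzv4 b (by simp [hXN4]), hzv4 d (by simp [hXN4]), ?_, ?_, ?_⟩
  · intro p hp
    exact hzv4 p.2 (by
      simp only [hXN4, Finset.mem_insert]
      exact Or.inr (Or.inr (Or.inr (memR hp))))
  · intro p hp
    rcases hmaint4 p hp with hp' | hx
    · exact Or.inl hp'
    · exact Or.inr (hx d (by simp [hXN4]))
  · exact ⟨σ, γ, ζ, u2, zu2, zv2, u3, zu3, zv3, u4, zu4, zv4,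
      hpin1, hpin2, hγb, hpin3, hpin4, hzu2, hpin5, hpin6, hzu3, hpin7, hpin8, hzu4, rfl⟩


structure GS (M : Type*) where
  s1 : Finset (M × M)
  s2 : Finset (M × M)
  s3 : Finset (M × M)
  s4 : Finset (M × M)
  b : M
  d : M

def Inv (L : NLinear n M) (m : Fin n) (S : GS M) : Prop :=
  PIso L S.s1 ∧ PIso L S.s2 ∧ PIso L S.s3 ∧ PIso L S.s4 ∧
  (∀ p ∈ S.s1, L.lt m p.2 S.b) ∧ (∀ p ∈ S.s4, L.lt m S.d p.2)

def StepP (L : NLinear n M) (m : Fin n) (φ1 φ2 φ3 φ4 ψ1 ψ2 ψ3 ψ4 : M → M)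
    (e0 : M) (S S' : GS M) : Prop :=
  S.s1 ⊆ S'.s1 ∧ S.s2 ⊆ S'.s2 ∧ S.s3 ⊆ S'.s3 ∧ S.s4 ⊆ S'.s4 ∧
  L.lt m e0 S'.b ∧ L.lt m S.b S'.b ∧ L.lt m S'.d e0 ∧ L.lt m S'.d S.d ∧
  LinkCert L m φ1 φ2 φ3 φ4 S'.s1 S'.s2 S'.s3 S'.s4 S.b S'.b ∧
  LinkCert (dln L) m ψ4 ψ3 ψ2 ψ1 S'.s4 S'.s3 S'.s2 S'.s1 S.d S'.d ∧
  (∃ y, (e0, y) ∈ S'.s1) ∧ (∃ w, (w, e0) ∈ S'.s1) ∧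
  (∃ y, (e0, y) ∈ S'.s2) ∧ (∃ w, (w, e0) ∈ S'.s2) ∧
  (∃ y, (e0, y) ∈ S'.s3) ∧ (∃ w, (w, e0) ∈ S'.s3) ∧
  (∃ y, (e0, y) ∈ S'.s4) ∧ (∃ w, (w, e0) ∈ S'.s4)

lemma step [DecidableEq M] {L : NLinear n M} (hL : IsUniversalNLinear n M L) (m : Fin n)
    {φ1 φ2 φ3 φ4 ψ1 ψ2 ψ3 ψ4 : M → M}
    (U1 : UpHigh L m φ1) (U2 : UpHigh L m φ2) (A3 : AnyHigh L m φ3) (A4 : AnyHigh L m φ4)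
    (D4 : UpHigh (dln L) m ψ4) (D3 : UpHigh (dln L) m ψ3)
    (DA2 : AnyHigh (dln L) m ψ2) (DA1 : AnyHigh (dln L) m ψ1)
    (S : GS M) (hS : Inv L m S) (e0 : M) :
    ∃ S', Inv L m S' ∧ StepP L m φ1 φ2 φ3 φ4 ψ1 ψ2 ψ3 ψ4 e0 S S' := by
  obtain ⟨hp1, hp2, hp3, hp4, I1, I2⟩ := hS
  -- top link
  obtain ⟨t1, t2, t3, t4, b1, hs1, hs2, hs3, hs4, hQ1, hQ2, hQ3, hQ4,
    he0b1, hbb1, hdb1, It1, O3, certT⟩ :=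
    link hL m U1 U2 A3 A4 hp1 hp2 hp3 hp4 S.b S.d e0 I1
  -- bottom link (in the dual)
  have hL' := dual_univ hL
  have I1d : ∀ p ∈ t4, (dln L).lt m p.2 S.d := by
    intro p hp
    rcases O3 p hp with hp' | hlt
    · exact I2 p hp'
    · exact hlt
  obtain ⟨r4, r3, r2, r1, d1, hs4', hs3', hs2', hs1', hR4, hR3, hR2, hR1,
    he0d1, hdd1, hb1d1, Ir4, O3d, certB⟩ :=
    link hL' m D4 D3 DA2 DA1 (PIso_dual.2 hQ4) (PIso_dual.2 hQ3) (PIso_dual.2 hQ2)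
      (PIso_dual.2 hQ1) S.d b1 e0 I1d
  have hR1' : PIso L r1 := PIso_dual.1 hR1
  have hR2' : PIso L r2 := PIso_dual.1 hR2
  have hR3' : PIso L r3 := PIso_dual.1 hR3
  have Ir1 : ∀ p ∈ r1, L.lt m p.2 b1 := by
    intro p hp
    rcases O3d p hp with hp' | hlt
    · exact It1 p hp'
    · exact hlt
  -- fills
  obtain ⟨f1a, hf1a, hPf1a, hdom1, hIf1a⟩ := fillDom hL m hR1' Ir1 e0
  obtain ⟨f1, hf1, hPf1, hrng1, hIf1⟩ := fillRng hL m hPf1a hIf1a e0 he0b1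
  obtain ⟨f2a, hf2a, hPf2a, hdom2⟩ := fillDomP hL m hR2' e0
  obtain ⟨f2, hf2, hPf2, hrng2⟩ := fillRngP hL m hPf2a e0
  obtain ⟨f3a, hf3a, hPf3a, hdom3⟩ := fillDomP hL m hR3' e0
  obtain ⟨f3, hf3, hPf3, hrng3⟩ := fillRngP hL m hPf3a e0
  obtain ⟨f4a, hf4a, hPf4a, hdom4, hIf4a⟩ := fillDom hL' m hR4 Ir4 e0
  obtain ⟨f4, hf4, hPf4, hrng4, hIf4⟩ := fillRng hL' m hPf4a hIf4a e0 he0d1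
  -- assemble
  have sub1 : t1 ⊆ f1 := fun p hp => hf1 (hf1a (hs1' hp))
  have sub2 : t2 ⊆ f2 := fun p hp => hf2 (hf2a (hs2' hp))
  have sub3 : t3 ⊆ f3 := fun p hp => hf3 (hf3a (hs3' hp))
  have sub4 : t4 ⊆ f4 := fun p hp => hf4 (hf4a (hs4' hp))
  have subr1 : r1 ⊆ f1 := fun p hp => hf1 (hf1a hp)
  have subr2 : r2 ⊆ f2 := fun p hp => hf2 (hf2a hp)
  have subr3 : r3 ⊆ f3 := fun p hp => hf3 (hf3a hp)
  have subr4 : r4 ⊆ f4 := fun p hp => hf4 (hf4a hp)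
  have hI2f : ∀ p ∈ f4, L.lt m d1 p.2 := fun p hp => hIf4 p hp
  refine ⟨⟨f1, f2, f3, f4, b1, d1⟩, ⟨hPf1, hPf2, hPf3, PIso_dual.1 hPf4, hIf1, hI2f⟩,
    fun p hp => sub1 (hs1 hp), fun p hp => sub2 (hs2 hp), fun p hp => sub3 (hs3 hp),
    fun p hp => sub4 (hs4 hp), he0b1, hbb1, he0d1, hdd1,
    certT.mono sub1 sub2 sub3 sub4, certB.mono subr4 subr3 subr2 subr1,
    hdom1.imp (fun y hy => hf1 hy), hrng1,
    hdom2.imp (fun y hy => hf2 hy), hrng2,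
    hdom3.imp (fun y hy => hf3 hy), hrng3,
    hdom4.imp (fun y hy => hf4 hy), hrng4⟩


section Moved

variable {L : NLinear n M} {m : Fin n} {gp : Equiv.Perm M}

/-- monotonicity of the inverse -/
lemma monoInv {c : Equiv.Perm M} (hc : ∀ (i : Fin n) a b, L.lt i a b ↔ L.lt i (c a) (c b))
    (i : Fin n) (a b : M) : L.lt i a b ↔ L.lt i (c⁻¹ a) (c⁻¹ b) := by
  have := hc i (c⁻¹ a) (c⁻¹ b)
  simp only [Equiv.Perm.coe_inv, Equiv.apply_symm_apply] at this
  exact this.symm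

def InvPair (gp : Equiv.Perm M) (h : Equiv.Perm M) : Prop := h = gp ∨ h = gp⁻¹

lemma InvPair.inv {gp h : Equiv.Perm M} (hh : InvPair gp h) : InvPair gp h⁻¹ := by
  rcases hh with rfl | rfl
  · exact Or.inr rfl
  · exact Or.inl (inv_inv gp)

lemma InvPair.mono {gp h : Equiv.Perm M}
    (hgm : ∀ (i : Fin n) a b, L.lt i a b ↔ L.lt i (gp a) (gp b)) (hh : InvPair gp h)
    (i : Fin n) (a b : M) : L.lt i a b ↔ L.lt i (h a) (h b) := by
  rcases hh with rfl | rfl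
  · exact hgm i a b
  · exact monoInv hgm i a b

lemma pairAbove (hL : IsUniversalNLinear n M L) (m : Fin n) (gp : Equiv.Perm M)
    (hgm : ∀ (i : Fin n) a b, L.lt i a b ↔ L.lt i (gp a) (gp b)) (hnr : ∀ a : M, ∃ b : M, L.lt m a b ∧ gp b ≠ b) [DecidableEq M] (x : M) :
    ∃ q, gp q ≠ q ∧ L.lt m x q ∧ L.lt m x (gp q) ∧ L.lt m x (gp⁻¹ q) := by
  obtain ⟨w, hw⟩ := exists_above hL m {x, gp x, gp⁻¹ x}
  obtain ⟨q, hwq, hq⟩ := hnr w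
  refine ⟨q, hq, ?_, ?_, ?_⟩
  · exact L.trans m x w q (hw x (by simp)) hwq
  · have h1 : L.lt m (gp⁻¹ x) q := L.trans m _ w q (hw _ (by simp)) hwq
    have := (hgm m (gp⁻¹ x) q).1 h1
    simpa using this
  · have h1 : L.lt m (gp x) q := L.trans m _ w q (hw _ (by simp)) hwq
    have := (monoInv hgm m (gp x) q).1 h1
    simpa using this

lemma pairBelow (hL : IsUniversalNLinear n M L) (m : Fin n) (gp : Equiv.Perm M)
    (hgm : ∀ (i : Fin n) a b, L.lt i a b ↔ L.lt i (gp a) (gp b)) (hnl : ∀ a : M, ∃ b : M, L.lt m b a ∧ gp b ≠ b) [DecidableEq M] (x : M) :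
    ∃ q, gp q ≠ q ∧ L.lt m q x ∧ L.lt m (gp q) x ∧ L.lt m (gp⁻¹ q) x := by
  obtain ⟨w, hw⟩ := exists_below hL m {x, gp x, gp⁻¹ x}
  obtain ⟨q, hwq, hq⟩ := hnl w
  refine ⟨q, hq, ?_, ?_, ?_⟩
  · exact L.trans m q w x hwq (hw x (by simp))
  · have h1 : L.lt m q (gp⁻¹ x) := L.trans m q w _ hwq (hw _ (by simp))
    have := (hgm m q (gp⁻¹ x)).1 h1
    simpa using this
  · have h1 : L.lt m q (gp x) := L.trans m q w _ hwq (hw _ (by simp))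
    have := (monoInv hgm m q (gp x)).1 h1
    simpa using this

lemma anyHigh_of (hL : IsUniversalNLinear n M L) (m : Fin n) (gp : Equiv.Perm M)
    (hgm : ∀ (i : Fin n) a b, L.lt i a b ↔ L.lt i (gp a) (gp b)) (hnr : ∀ a : M, ∃ b : M, L.lt m a b ∧ gp b ≠ b) [DecidableEq M]
    {h : Equiv.Perm M} (hh : InvPair gp h) : AnyHigh L m ⇑h := by
  intro x
  obtain ⟨q, hq, h1, h2, h3⟩ := pairAbove hL m gp hgm hnr x
  rcases hh with rfl | rfl
  · exact ⟨q, fun hc => hq hc.symm, h1, h2⟩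
  · exact ⟨q, fun hc => hq ((congrArg (⇑gp) hc).trans (gp.apply_symm_apply q)), h1, h3⟩

lemma anyHighD_of (hL : IsUniversalNLinear n M L) (m : Fin n) (gp : Equiv.Perm M)
    (hgm : ∀ (i : Fin n) a b, L.lt i a b ↔ L.lt i (gp a) (gp b)) (hnl : ∀ a : M, ∃ b : M, L.lt m b a ∧ gp b ≠ b) [DecidableEq M]
    {h : Equiv.Perm M} (hh : InvPair gp h) : AnyHigh (dln L) m ⇑h := by
  intro x
  obtain ⟨q, hq, h1, h2, h3⟩ := pairBelow hL m gp hgm hnl x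
  rcases hh with rfl | rfl
  · exact ⟨q, fun hc => hq hc.symm, h1, h2⟩
  · exact ⟨q, fun hc => hq ((congrArg (⇑gp) hc).trans (gp.apply_symm_apply q)), h1, h3⟩

lemma upHigh_choice (hL : IsUniversalNLinear n M L) (m : Fin n) (gp : Equiv.Perm M)
    (hgm : ∀ (i : Fin n) a b, L.lt i a b ↔ L.lt i (gp a) (gp b)) (hnr : ∀ a : M, ∃ b : M, L.lt m a b ∧ gp b ≠ b) [DecidableEq M] :
    ∃ gP : Equiv.Perm M, InvPair gp gP ∧ UpHigh L m ⇑gP := by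
  by_cases hcase : UpHigh L m ⇑gp
  · exact ⟨gp, Or.inl rfl, hcase⟩
  · refine ⟨gp⁻¹, Or.inr rfl, ?_⟩
    unfold UpHigh at hcase
    push_neg at hcase
    obtain ⟨x0, hx0⟩ := hcase
    intro x
    obtain ⟨w, hw⟩ := exists_above hL m {x, x0}
    obtain ⟨q, hq, h1, h2, h3⟩ := pairAbove hL m gp hgm hnr w
    have hnot : ¬ L.lt m q (gp q) := fun hc => by
      have := hx0 q hc
      exact this (L.trans m x0 w q (hw x0 (by simp)) h1)
    have hlt : L.lt m (gp q) q := lt_of_not_lt L hnot (fun hc => hq hc.symm)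
    refine ⟨gp q, ?_, ?_⟩
    · simpa using hlt
    · exact L.trans m x w (gp q) (hw x (by simp)) h2

lemma upLow_choice (hL : IsUniversalNLinear n M L) (m : Fin n) (gp : Equiv.Perm M)
    (hgm : ∀ (i : Fin n) a b, L.lt i a b ↔ L.lt i (gp a) (gp b)) (hnl : ∀ a : M, ∃ b : M, L.lt m b a ∧ gp b ≠ b) [DecidableEq M] :
    ∃ gM : Equiv.Perm M, InvPair gp gM ∧ (∀ x, ∃ q, L.lt m q (gM q) ∧ L.lt m (gM q) x) := by
  by_cases hcase : ∀ x, ∃ q, L.lt m q (gp q) ∧ L.lt m (gp q) x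
  · exact ⟨gp, Or.inl rfl, hcase⟩
  · refine ⟨gp⁻¹, Or.inr rfl, ?_⟩
    push_neg at hcase
    obtain ⟨x0, hx0⟩ := hcase
    intro x
    obtain ⟨w, hw⟩ := exists_below hL m {x, x0}
    obtain ⟨q, hq, h1, h2, h3⟩ := pairBelow hL m gp hgm hnl w
    have hnot : ¬ L.lt m q (gp q) := fun hc => by
      have := hx0 q hc
      exact this (L.trans m (gp q) w x0 h2 (hw x0 (by simp)))
    have hlt : L.lt m (gp q) q := lt_of_not_lt L hnot (fun hc => hq hc.symm)
    refine ⟨gp q, ?_, ?_⟩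
    · simpa using hlt
    · simpa using L.trans m q w x h1 (hw x (by simp))

end Moved


lemma stepSem {L : NLinear n M} {m : Fin n} {c : Equiv.Perm M} {φ : M → M}
    (hc : ∀ (i : Fin n) a b, L.lt i a b ↔ L.lt i (c a) (c b))
    (hφ : ∀ a b, L.lt m a b ↔ L.lt m (φ a) (φ b))
    {u zu zv w : M} (h1 : c u = zu) (h2 : c (φ u) = zv) (hlt : L.lt m zu w) :
    L.lt m zv (c (φ (c⁻¹ w))) := by
  have e1 : c⁻¹ zu = u := by rw [← h1]; simp
  have s1 : L.lt m u (c⁻¹ w) := by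
    have := (monoInv hc m zu w).1 hlt
    rwa [e1] at this
  have s2 : L.lt m (φ u) (φ (c⁻¹ w)) := (hφ _ _).1 s1
  have s3 := (hc m _ _).1 s2
  rwa [h2] at s3

lemma LinkCert.sem {L : NLinear n M} {m : Fin n} {φA φB φC φD : M → M}
    {tA tB tC tD : Finset (M × M)} {b b' : M}
    (h : LinkCert L m φA φB φC φD tA tB tC tD b b')
    {cA cB cC cD : Equiv.Perm M}
    (mA : ∀ (i : Fin n) a b, L.lt i a b ↔ L.lt i (cA a) (cA b))
    (mB : ∀ (i : Fin n) a b, L.lt i a b ↔ L.lt i (cB a) (cB b))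
    (mC : ∀ (i : Fin n) a b, L.lt i a b ↔ L.lt i (cC a) (cC b))
    (mD : ∀ (i : Fin n) a b, L.lt i a b ↔ L.lt i (cD a) (cD b))
    (fA : ∀ a b, L.lt m a b ↔ L.lt m (φA a) (φA b))
    (fB : ∀ a b, L.lt m a b ↔ L.lt m (φB a) (φB b))
    (fC : ∀ a b, L.lt m a b ↔ L.lt m (φC a) (φC b))
    (fD : ∀ a b, L.lt m a b ↔ L.lt m (φD a) (φD b))
    (vA : ∀ p ∈ tA, cA p.1 = p.2) (vB : ∀ p ∈ tB, cB p.1 = p.2)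
    (vC : ∀ p ∈ tC, cC p.1 = p.2) (vD : ∀ p ∈ tD, cD p.1 = p.2) :
    L.lt m b' (cD (φD (cD⁻¹ (cC (φC (cC⁻¹ (cB (φB (cB⁻¹ (cA (φA (cA⁻¹ b)))))))))))) := by
  obtain ⟨σ, γ, ζ, u2, zu2, zv2, u3, zu3, zv3, u4, zu4, zv4,
    q1, q2, l1, q3, q4, l2, q5, q6, l3, q7, q8, l4, rfl⟩ := h
  have w1 := stepSem mA fA (vA _ q1) (vA _ q2) l1
  have w2 := stepSem mB fB (vB _ q3) (vB _ q4) (L.trans m _ _ _ l2 w1)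
  have w3 := stepSem mC fC (vC _ q5) (vC _ q6) (L.trans m _ _ _ l3 w2)
  exact stepSem mD fD (vD _ q7) (vD _ q8) (L.trans m _ _ _ l4 w3)

lemma buildAut {L : NLinear n M} (m : Fin n) (S : ℕ → Finset (M × M))
    (hmono : ∀ t, S t ⊆ S (t + 1)) (hp : ∀ t, PIso L (S t))
    (htot : ∀ x, ∃ t, ∃ y, (x, y) ∈ S t) (hsur : ∀ x, ∃ t, ∃ w, (w, x) ∈ S t) :
    ∃ c : Equiv.Perm M, (∀ (i : Fin n) a b, L.lt i a b ↔ L.lt i (c a) (c b)) ∧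
      (∀ t, ∀ p ∈ S t, c p.1 = p.2) := by
  have hmono2 : Monotone S := monotone_nat_of_le_succ hmono
  have key : ∀ {t t' : ℕ} {p q : M × M}, p ∈ S t → q ∈ S t' →
      p ∈ S (max t t') ∧ q ∈ S (max t t') := by
    intro t t' p q hpp hqq
    exact ⟨hmono2 (le_max_left t t') hpp, hmono2 (le_max_right t t') hqq⟩
  choose T F hF using htot
  choose T' G hG using hsur
  have left_inv : ∀ x, G (F x) = x := by
    intro x
    obtain ⟨h1, h2⟩ := key (hG (F x)) (hF x)
    exact PIso.inj2 m (hp _) h1 h2 rfl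
  have right_inv : ∀ x, F (G x) = x := by
    intro x
    obtain ⟨h1, h2⟩ := key (hF (G x)) (hG x)
    exact PIso.inj1 m (hp _) h1 h2 rfl
  refine ⟨⟨F, G, left_inv, right_inv⟩, ?_, ?_⟩
  · intro i a b
    obtain ⟨h1, h2⟩ := key (hF a) (hF b)
    exact hp _ i (a, F a) h1 (b, F b) h2
  · intro t p hpp
    obtain ⟨h1, h2⟩ := key (hF p.1) hpp
    exact PIso.inj1 m (hp _) h1 h2 rfl


lemma zhelp (f : Equiv.Perm M) (a : M) (k : ℤ) : ((f⁻¹) ^ (1 - k)) (f a) = (f ^ k) a := by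
  have h : (f⁻¹) ^ (1 - k) * f = f ^ k := by group
  calc ((f⁻¹) ^ (1 - k)) (f a) = ((f⁻¹) ^ (1 - k) * f) a := rfl
    _ = (f ^ k) a := by rw [h]

lemma main {L : NLinear n M} (hL : IsUniversalNLinear n M L) (m : Fin n) (g : L.aut)
    (hnr : ¬ ∃ a : M, ∀ b : M, L.lt m a b → (g : Equiv.Perm M) b = b)
    (hnl : ¬ ∃ a : M, ∀ b : M, L.lt m b a → (g : Equiv.Perm M) b = b) :
    ∃ f ∈ Subgroup.normalClosure ({g} : Set L.aut), L.SinglePlus m (f : Equiv.Perm M) := by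
  letI := Classical.decEq M
  have hcnt : Countable M := hL.countable
  have hinf : Infinite M := hL.infinite
  obtain ⟨e, he⟩ := exists_surjective_nat M
  set gp : Equiv.Perm M := (g : Equiv.Perm M) with hgp
  have hgm : ∀ (i : Fin n) a b, L.lt i a b ↔ L.lt i (gp a) (gp b) := g.2
  push_neg at hnr hnl
  have hnr' : ∀ a : M, ∃ b : M, L.lt m a b ∧ gp b ≠ b := hnr
  have hnl' : ∀ a : M, ∃ b : M, L.lt m b a ∧ gp b ≠ b := hnl
  obtain ⟨gP, hgPpair, hgPU⟩ := upHigh_choice hL m gp hgm hnr'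
  obtain ⟨gM, hgMpair, hgMU⟩ := upLow_choice hL m gp hgm hnl'
  have anyH : AnyHigh L m ⇑gM := anyHigh_of hL m gp hgm hnr' hgMpair
  have D4 : UpHigh (dln L) m ⇑gM⁻¹ := by
    intro x
    obtain ⟨q, h1, h2⟩ := hgMU x
    exact ⟨gM q, by rw [dual_lt]; simpa using h1, h2⟩
  have DA : AnyHigh (dln L) m ⇑gP⁻¹ := anyHighD_of hL m gp hgm hnl' hgPpair.inv
  have hstep : ∀ (e0 : M) (S : GS M), Inv L m S →
      ∃ S', Inv L m S' ∧ StepP L m ⇑gP ⇑gP ⇑gM ⇑gM ⇑gP⁻¹ ⇑gP⁻¹ ⇑gM⁻¹ ⇑gM⁻¹ e0 S S' :=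
    fun e0 S h => step hL m hgPU hgPU anyH anyH D4 D4 DA DA S h e0
  choose FS hInvF hStepF using hstep
  have hne : Nonempty M := inferInstance
  set a0 : M := Classical.arbitrary M with ha0
  have hS0 : Inv L m (⟨∅, ∅, ∅, ∅, a0, a0⟩ : GS M) :=
    ⟨fun i p hp => absurd hp (Finset.notMem_empty p),
     fun i p hp => absurd hp (Finset.notMem_empty p),
     fun i p hp => absurd hp (Finset.notMem_empty p),
     fun i p hp => absurd hp (Finset.notMem_empty p),
     fun p hp => absurd hp (Finset.notMem_empty p),
     fun p hp => absurd hp (Finset.notMem_empty p)⟩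
  let Q : ℕ → {S : GS M // Inv L m S} := fun t =>
    Nat.rec ⟨⟨∅, ∅, ∅, ∅, a0, a0⟩, hS0⟩ (fun t' p => ⟨FS (e t') p.1 p.2, hInvF (e t') p.1 p.2⟩) t
  have hQP : ∀ t, StepP L m ⇑gP ⇑gP ⇑gM ⇑gM ⇑gP⁻¹ ⇑gP⁻¹ ⇑gM⁻¹ ⇑gM⁻¹ (e t)
      (Q t).1 (Q (t+1)).1 := fun t => hStepF (e t) (Q t).1 (Q t).2
  -- build the four automorphisms
  have hbuild : ∀ (pick : GS M → Finset (M × M)),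
      (∀ t, pick (Q t).1 ⊆ pick (Q (t+1)).1) →
      (∀ t, PIso L (pick (Q t).1)) →
      (∀ t, ∃ y, (e t, y) ∈ pick (Q (t+1)).1) →
      (∀ t, ∃ w, (w, e t) ∈ pick (Q (t+1)).1) →
      ∃ c : Equiv.Perm M, (∀ (i : Fin n) a b, L.lt i a b ↔ L.lt i (c a) (c b)) ∧
        (∀ t, ∀ p ∈ pick (Q t).1, c p.1 = p.2) := by
    intro pick hmono hpi htot hsur
    exact buildAut m (fun t => pick (Q t).1) hmono hpi
      (fun x => by obtain ⟨t, rfl⟩ := he x; obtain ⟨y, hy⟩ := htot t; exact ⟨t+1, y, hy⟩)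
      (fun x => by obtain ⟨t, rfl⟩ := he x; obtain ⟨w, hw⟩ := hsur t; exact ⟨t+1, w, hw⟩)
  obtain ⟨c1, hc1, v1⟩ := hbuild (fun S => S.s1) (fun t => (hQP t).1)
    (fun t => (Q t).2.1) (fun t => (hQP t).2.2.2.2.2.2.2.2.2.2.1)
    (fun t => (hQP t).2.2.2.2.2.2.2.2.2.2.2.1)
  obtain ⟨c2, hc2, v2⟩ := hbuild (fun S => S.s2) (fun t => (hQP t).2.1)
    (fun t => (Q t).2.2.1) (fun t => (hQP t).2.2.2.2.2.2.2.2.2.2.2.2.1)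
    (fun t => (hQP t).2.2.2.2.2.2.2.2.2.2.2.2.2.1)
  obtain ⟨c3, hc3, v3⟩ := hbuild (fun S => S.s3) (fun t => (hQP t).2.2.1)
    (fun t => (Q t).2.2.2.1) (fun t => (hQP t).2.2.2.2.2.2.2.2.2.2.2.2.2.2.1)
    (fun t => (hQP t).2.2.2.2.2.2.2.2.2.2.2.2.2.2.2.1)
  obtain ⟨c4, hc4, v4⟩ := hbuild (fun S => S.s4) (fun t => (hQP t).2.2.2.1)
    (fun t => (Q t).2.2.2.2.1) (fun t => (hQP t).2.2.2.2.2.2.2.2.2.2.2.2.2.2.2.2.1)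
    (fun t => (hQP t).2.2.2.2.2.2.2.2.2.2.2.2.2.2.2.2.2)
  -- the group element
  have hgPaut : gP ∈ L.aut := by
    rcases hgPpair with rfl | rfl
    · exact g.2
    · exact L.aut.inv_mem g.2
  have hgMaut : gM ∈ L.aut := by
    rcases hgMpair with rfl | rfl
    · exact g.2
    · exact L.aut.inv_mem g.2
  have hgPncl : (⟨gP, hgPaut⟩ : L.aut) ∈ Subgroup.normalClosure ({g} : Set L.aut) := by
    rcases hgPpair with h | h
    · have : (⟨gP, hgPaut⟩ : L.aut) = g := Subtype.ext h
      rw [this]; exact Subgroup.subset_normalClosure rfl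
    · have : (⟨gP, hgPaut⟩ : L.aut) = g⁻¹ := Subtype.ext h
      rw [this]; exact (Subgroup.normalClosure _).inv_mem (Subgroup.subset_normalClosure rfl)
  have hgMncl : (⟨gM, hgMaut⟩ : L.aut) ∈ Subgroup.normalClosure ({g} : Set L.aut) := by
    rcases hgMpair with h | h
    · have : (⟨gM, hgMaut⟩ : L.aut) = g := Subtype.ext h
      rw [this]; exact Subgroup.subset_normalClosure rfl
    · have : (⟨gM, hgMaut⟩ : L.aut) = g⁻¹ := Subtype.ext h
      rw [this]; exact (Subgroup.normalClosure _).inv_mem (Subgroup.subset_normalClosure rfl)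
  set C1 : L.aut := ⟨c1, hc1⟩
  set C2 : L.aut := ⟨c2, hc2⟩
  set C3 : L.aut := ⟨c3, hc3⟩
  set C4 : L.aut := ⟨c4, hc4⟩
  set F : L.aut := (C4 * ⟨gM, hgMaut⟩ * C4⁻¹) * ((C3 * ⟨gM, hgMaut⟩ * C3⁻¹) *
    ((C2 * ⟨gP, hgPaut⟩ * C2⁻¹) * (C1 * ⟨gP, hgPaut⟩ * C1⁻¹))) with hF
  have hFmem : F ∈ Subgroup.normalClosure ({g} : Set L.aut) := by
    have hN : (Subgroup.normalClosure ({g} : Set L.aut)).Normal := Subgroup.normalClosure_normal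
    exact Subgroup.mul_mem _ (hN.conj_mem _ hgMncl C4)
      (Subgroup.mul_mem _ (hN.conj_mem _ hgMncl C3)
        (Subgroup.mul_mem _ (hN.conj_mem _ hgPncl C2) (hN.conj_mem _ hgPncl C1)))
  set fp : Equiv.Perm M := (F : Equiv.Perm M) with hfp
  have hfap : ∀ x : M,
      fp x = c4 (gM (c4⁻¹ (c3 (gM (c3⁻¹ (c2 (gP (c2⁻¹ (c1 (gP (c1⁻¹ x))))))))))) := by
    intro x
    simp only [hfp, hF, Subgroup.coe_mul, InvMemClass.coe_inv, Equiv.Perm.mul_apply]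
    rfl
  have hfinvap : ∀ x : M,
      fp⁻¹ x = c1 (gP⁻¹ (c1⁻¹ (c2 (gP⁻¹ (c2⁻¹ (c3 (gM⁻¹ (c3⁻¹ (c4 (gM⁻¹ (c4⁻¹ x))))))))))) := by
    intro x
    simp only [hfp, hF, mul_inv_rev, inv_inv, Subgroup.coe_mul, InvMemClass.coe_inv,
      Equiv.Perm.mul_apply]
    rfl
  have hfm : ∀ a b : M, L.lt m a b ↔ L.lt m (fp a) (fp b) := fun a b => F.2 m a b
  have hfm' : ∀ a b : M, L.lt m a b ↔ L.lt m (fp⁻¹ a) (fp⁻¹ b) := fun a b =>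
    monoInv (fun i a b => F.2 i a b) m a b
  -- chains
  set bs : ℕ → M := fun t => (Q t).1.b with hbs
  set ds : ℕ → M := fun t => (Q t).1.d with hds
  have hb0 : bs 0 = a0 := rfl
  have hd0 : ds 0 = a0 := rfl
  have heb : ∀ t, L.lt m (e t) (bs (t+1)) := fun t => (hQP t).2.2.2.2.1
  have hbb : ∀ t, L.lt m (bs t) (bs (t+1)) := fun t => (hQP t).2.2.2.2.2.1
  have hde : ∀ t, L.lt m (ds (t+1)) (e t) := fun t => (hQP t).2.2.2.2.2.2.1
  -- semantic certificates
  have fPmono : ∀ a b : M, L.lt m a b ↔ L.lt m (gP a) (gP b) :=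
    fun a b => InvPair.mono hgm hgPpair m a b
  have fMmono : ∀ a b : M, L.lt m a b ↔ L.lt m (gM a) (gM b) :=
    fun a b => InvPair.mono hgm hgMpair m a b
  have topsem : ∀ t, L.lt m (bs (t+1)) (fp (bs t)) := by
    intro t
    have hcert := (hQP t).2.2.2.2.2.2.2.2.1
    have := hcert.sem hc1 hc2 hc3 hc4 fPmono fPmono fMmono fMmono
      (v1 (t+1)) (v2 (t+1)) (v3 (t+1)) (v4 (t+1))
    rwa [← hfap (bs t)] at this
  have botsem : ∀ t, L.lt m (fp⁻¹ (ds t)) (ds (t+1)) := by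
    intro t
    have hcert := (hQP t).2.2.2.2.2.2.2.2.2.1
    have hsem := hcert.sem (fun i a b => hc4 i b a) (fun i a b => hc3 i b a)
      (fun i a b => hc2 i b a) (fun i a b => hc1 i b a)
      (fun a b => InvPair.mono hgm hgMpair.inv m b a)
      (fun a b => InvPair.mono hgm hgMpair.inv m b a)
      (fun a b => InvPair.mono hgm hgPpair.inv m b a)
      (fun a b => InvPair.mono hgm hgPpair.inv m b a)
      (v4 (t+1)) (v3 (t+1)) (v2 (t+1)) (v1 (t+1))
    rw [hfinvap (ds t)]
    exact hsem
  -- orbit estimates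
  have orbUp : ∀ t : ℕ, bs t = (fp ^ t) a0 ∨ L.lt m (bs t) ((fp ^ t) a0) := by
    intro t
    induction t with
    | zero => exact Or.inl rfl
    | succ t ih =>
      have hps : (fp ^ (t+1)) a0 = fp ((fp ^ t) a0) := by
        rw [pow_succ']; rfl
      rcases ih with hEq | hLt
      · right; rw [hps, ← hEq]; exact topsem t
      · right
        rw [hps]
        exact L.trans m _ _ _ (topsem t) ((hfm _ _).1 hLt)
  have orbDown : ∀ t : ℕ, (fp⁻¹ ^ t) a0 = ds t ∨ L.lt m ((fp⁻¹ ^ t) a0) (ds t) := by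
    intro t
    induction t with
    | zero => exact Or.inl rfl
    | succ t ih =>
      have hps : (fp⁻¹ ^ (t+1)) a0 = fp⁻¹ ((fp⁻¹ ^ t) a0) := by
        rw [pow_succ']; rfl
      rcases ih with hEq | hLt
      · right; rw [hps, hEq]; exact botsem t
      · right
        rw [hps]
        exact L.trans m _ _ _ ((hfm' _ _).1 hLt) (botsem t)
  refine ⟨F, hFmem, a0, ?_, ?_, ?_⟩
  · -- a0 < fp a0
    have h1 : L.lt m a0 (bs 1) := hbb 0
    have h2 : L.lt m (bs 1) (fp a0) := topsem 0
    exact L.trans m _ _ _ h1 h2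
  · -- unbounded above
    intro x
    obtain ⟨t, rfl⟩ := he x
    refine ⟨((t+1 : ℕ) : ℤ), ?_⟩
    have hz : (fp ^ ((t+1 : ℕ) : ℤ)) a0 = (fp ^ (t+1)) a0 := by rw [zpow_natCast]
    rw [hz]
    rcases orbUp (t+1) with hEq | hLt
    · rw [← hEq]; exact heb t
    · exact L.trans m _ _ _ (heb t) hLt
  · -- unbounded below
    intro x
    obtain ⟨t, rfl⟩ := he x
    refine ⟨-((t+1 : ℕ) : ℤ), ?_⟩
    have hz : (fp ^ (-((t+1 : ℕ) : ℤ))) a0 = (fp⁻¹ ^ (t+1)) a0 := by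
      rw [zpow_neg, ← inv_zpow, zpow_natCast]
    rw [hz]
    rcases orbDown (t+1) with hEq | hLt
    · rw [hEq]; exact hde t
    · exact L.trans m _ _ _ hLt (hde t)

end S5

/-- If `g` is an automorphism of a universal `n`-linear order that is
unbounded with respect to `<_m`, then the normal closure of `{g}` contains an element
with a single `+`-orbital with respect to `<_m` and an element with a single
`−`-orbital with respect to `<_m`. -/
theorem stmt5 {n : ℕ} {M : Type*} (L : NLinear n M) (hL : IsUniversalNLinear n M L)
    (m : Fin n) (g : L.aut)
    (hnr : ¬ ∃ a : M, ∀ b : M, L.lt m a b → (g : Equiv.Perm M) b = b)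
    (hnl : ¬ ∃ a : M, ∀ b : M, L.lt m b a → (g : Equiv.Perm M) b = b) :
    (∃ f ∈ Subgroup.normalClosure ({g} : Set L.aut), L.SinglePlus m (f : Equiv.Perm M)) ∧
    (∃ f ∈ Subgroup.normalClosure ({g} : Set L.aut), L.SingleMinus m (f : Equiv.Perm M)) := by
  obtain ⟨f, hmem, hplus⟩ := S5.main hL m g hnr hnl
  refine ⟨⟨f, hmem, hplus⟩, f⁻¹, (Subgroup.normalClosure _).inv_mem hmem, ?_⟩
  obtain ⟨a, h1, h2, h3⟩ := hplus
  have hco : ((f⁻¹ : L.aut) : Equiv.Perm M) = (f : Equiv.Perm M)⁻¹ := rfl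
  rw [NLinear.SingleMinus, hco]
  refine ⟨(f : Equiv.Perm M) a, ?_, ?_, ?_⟩
  · simpa using h1
  · intro x
    obtain ⟨k, hk⟩ := h2 x
    exact ⟨1 - k, by rw [S5.zhelp]; exact hk⟩
  · intro x
    obtain ⟨k, hk⟩ := h3 x
    exact ⟨1 - k, by rw [S5.zhelp]; exact hk⟩
end

section
/- Let g ∈ Aut(ℚ, ≤) be such that for every x ∈ ℚ there exists y < x with g y > y and there exists z > x with g z > z. Then there exists h ∈ Aut(ℚ, ≤) such that the automorphism g ∘ h⁻¹ ∘ g ∘ h has a single +-orbital. -/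
/-!
Choose a sequence `c : ℤ → ℚ`, unbounded in both directions, with `c n < g (c n) < c (n + 1)`.
Let `h` be the piecewise affine automorphism fixing every `c n` and sending
`g⁻¹ (c (n + 1)) ∈ (c n, c (n + 1))` to the midpoint of `c n` and `g (c n)`. Then
`h (g⁻¹ (c (n + 1))) < g (h (c n))`, i.e. `c (n + 1) < (g h⁻¹ g h) (c n)`, so the orbit of `c 0`
under `g h⁻¹ g h` outruns `c` in both directions.
-/

open Set

section Interpolation

variable {α : Type*} [Field α] {s t : ℤ → α}

def segmentMap (s t : ℤ → α) (n : ℤ) (x : α) : α :=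
  t n + (x - s n) * ((t (n + 1) - t n) / (s (n + 1) - s n))

lemma segmentMap_left (n : ℤ) : segmentMap s t n (s n) = t n := by
  simp [segmentMap]

lemma segmentMap_right {n : ℤ} (hs : s (n + 1) ≠ s n) :
    segmentMap s t n (s (n + 1)) = t (n + 1) := by
  have := sub_ne_zero.2 hs
  simp only [segmentMap]
  field_simp
  ring

lemma segmentMap_segmentMap {n : ℤ} (hs : s (n + 1) ≠ s n) (ht : t (n + 1) ≠ t n) (x : α) :
    segmentMap s t n (segmentMap t s n x) = x := by
  have := sub_ne_zero.2 hs
  have := sub_ne_zero.2 ht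
  simp only [segmentMap]
  field_simp
  ring

variable [LinearOrder α] [IsStrictOrderedRing α]

lemma segmentMap_strictMono (hs : StrictMono s) (ht : StrictMono t) (n : ℤ) :
    StrictMono (segmentMap s t n) := by
  have hslope : 0 < (t (n + 1) - t n) / (s (n + 1) - s n) :=
    div_pos (sub_pos.2 (ht (lt_add_one n))) (sub_pos.2 (hs (lt_add_one n)))
  intro x y hxy
  simpa [segmentMap] using mul_lt_mul_of_pos_right (sub_lt_sub_right hxy (s n)) hslope

lemma segmentMap_mapsTo (hs : StrictMono s) (ht : StrictMono t) (n : ℤ) :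
    MapsTo (segmentMap s t n) (Ico (s n) (s (n + 1))) (Ico (t n) (t (n + 1))) := by
  simpa only [segmentMap_left, segmentMap_right (hs (lt_add_one n)).ne'] using
    (segmentMap_strictMono hs ht n).mapsTo_Ico (a := s n) (b := s (n + 1))

end Interpolation

lemma StrictMono.existsUnique_mem_Ico {α : Type*} [LinearOrder α] {s : ℤ → α} (hs : StrictMono s)
    (hsa : ∀ x, ∃ n, x < s n) (hsb : ∀ x, ∃ n, s n < x) (x : α) :
    ∃! n, x ∈ Ico (s n) (s (n + 1)) := by
  obtain ⟨n, hn, hmax⟩ : ∃ n, s n ≤ x ∧ ∀ m, s m ≤ x → m ≤ n := by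
    obtain ⟨b, hb⟩ := hsa x
    refine Int.exists_greatest_of_bdd ⟨b, fun m hm => ?_⟩ ((hsb x).imp fun _ => le_of_lt)
    exact (hs.lt_iff_lt.1 (hm.trans_lt hb)).le
  refine ⟨n, ⟨hn, not_le.1 fun h => ?_⟩, fun m hm => ?_⟩
  · exact (lt_add_one n).not_ge (hmax _ h)
  · have hmn := hmax m hm.1
    refine le_antisymm hmn (not_lt.1 fun hlt => ?_)
    exact (hm.2.trans_le (hs.monotone hlt)).not_ge hn

theorem exists_orderIso_apply_eq {α : Type*} [Field α] [LinearOrder α] [IsStrictOrderedRing α]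
    {s t : ℤ → α} (hs : StrictMono s) (ht : StrictMono t)
    (hsa : ∀ x, ∃ n, x < s n) (hsb : ∀ x, ∃ n, s n < x)
    (hta : ∀ x, ∃ n, x < t n) (htb : ∀ x, ∃ n, t n < x) :
    ∃ e : α ≃o α, ∀ n, e (s n) = t n := by
  choose I hI hI_unique using hs.existsUnique_mem_Ico hsa hsb
  choose J hJ hJ_unique using ht.existsUnique_mem_Ico hta htb
  set φ : α → α := fun x => segmentMap s t (I x) x
  have hφ : StrictMono φ := by
    intro x y hxy
    rcases lt_trichotomy (I x) (I y) with hlt | heq | hgt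
    · calc φ x < t (I x + 1) := (segmentMap_mapsTo hs ht _ (hI x)).2
        _ ≤ t (I y) := ht.monotone hlt
        _ ≤ φ y := (segmentMap_mapsTo hs ht _ (hI y)).1
    · simpa only [φ, heq] using segmentMap_strictMono hs ht (I y) hxy
    · exact absurd ((hI y).2.trans_le ((hs.monotone hgt).trans (hI x).1)) hxy.not_gt
  have hφ_surj : Function.Surjective φ := fun y => by
    have hmem := segmentMap_mapsTo ht hs _ (hJ y)
    refine ⟨segmentMap t s (J y) y, ?_⟩
    show segmentMap s t (I _) _ = y
    rw [← hI_unique _ _ hmem]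
    exact segmentMap_segmentMap (hs (lt_add_one _)).ne' (ht (lt_add_one _)).ne' y
  refine ⟨hφ.orderIsoOfSurjective φ hφ_surj, fun n => ?_⟩
  have hn : I (s n) = n := (hI_unique _ _ ⟨le_rfl, hs (lt_add_one n)⟩).symm
  simp [φ, hn, segmentMap_left]
section Interleave

variable {α : Type*}

def interleave (u v : ℤ → α) (n : ℤ) : α :=
  if n % 2 = 0 then u (n / 2) else v (n / 2)

@[simp]
lemma interleave_two_mul (u v : ℤ → α) (k : ℤ) : interleave u v (2 * k) = u k := by
  rw [interleave, if_pos (by omega), show 2 * k / 2 = k by omega]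

@[simp]
lemma interleave_two_mul_add_one (u v : ℤ → α) (k : ℤ) :
    interleave u v (2 * k + 1) = v k := by
  rw [interleave, if_neg (by omega), show (2 * k + 1) / 2 = k by omega]

variable [Preorder α] {u v : ℤ → α}

lemma strictMono_interleave (huv : ∀ k, u k < v k) (hvu : ∀ k, v k < u (k + 1)) :
    StrictMono (interleave u v) := by
  refine strictMono_int_of_lt_succ fun n => ?_
  obtain ⟨k, rfl | rfl⟩ := Int.even_or_odd' n
  · simpa using huv k
  · simpa [show 2 * k + 1 + 1 = 2 * (k + 1) by ring] using hvu k

lemma interleave_unbounded_above (hu : ∀ x, ∃ k, x < u k) (x : α) :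
    ∃ n, x < interleave u v n :=
  let ⟨k, hk⟩ := hu x
  ⟨2 * k, by simpa using hk⟩

lemma interleave_unbounded_below (hu : ∀ x, ∃ k, u k < x) (x : α) :
    ∃ n, interleave u v n < x :=
  let ⟨k, hk⟩ := hu x
  ⟨2 * k, by simpa using hk⟩

end Interleave

lemma exists_seq_forall_rel {α : Type*} (R : ℕ → α → α → Prop) (hR : ∀ k x, ∃ y, R k x y)
    (a : α) : ∃ p : ℕ → α, p 0 = a ∧ ∀ k, R k (p k) (p (k + 1)) := by
  choose next hnext using hR
  exact ⟨fun k => Nat.rec a next k, rfl, fun k => hnext k _⟩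

lemma Int.exists_forall_rel_succ {α : Type*} (R : α → α → Prop) {p q : ℕ → α} (h0 : p 0 = q 0)
    (hp : ∀ k, R (p k) (p (k + 1))) (hq : ∀ k, R (q (k + 1)) (q k)) :
    ∃ c : ℤ → α, (∀ n, R (c n) (c (n + 1))) ∧ (∀ k : ℕ, c k = p k) ∧ ∀ k : ℕ, c (-k) = q k := by
  let c : ℤ → α
    | .ofNat k => p k
    | .negSucc k => q (k + 1)
  refine ⟨c, ?_, fun k => rfl, ?_⟩
  · rintro (k | _ | k)
    exacts [hp k, show R (q 1) (p 0) from h0 ▸ hq 0, hq (k + 1)]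
  · rintro (_ | k)
    exacts [h0, rfl]

lemma exists_unbounded_seq_lt_apply_lt_succ {α : Type*} [Ring α] [LinearOrder α] [IsStrictOrderedRing α]
    [Archimedean α] (g : α ≃o α)
    (hg : ∀ x, (∃ y, y < x ∧ y < g y) ∧ ∃ z, x < z ∧ z < g z) :
    ∃ c : ℤ → α, (∀ n, c n < g (c n) ∧ g (c n) < c (n + 1)) ∧
      (∀ x, ∃ k : ℕ, x < c k) ∧ ∀ x, ∃ k : ℕ, c (-k) < x := by
  obtain ⟨a, -, ha⟩ := (hg 0).2
  obtain ⟨p, hp0, hp⟩ := exists_seq_forall_rel (fun k x y => g x < y ∧ (k : α) < y ∧ y < g y)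
    (fun k x => by
      obtain ⟨z, hz, hgz⟩ := (hg (max (g x) k)).2
      exact ⟨z, (le_max_left _ _).trans_lt hz, (le_max_right _ _).trans_lt hz, hgz⟩) a
  obtain ⟨q, hq0, hq⟩ := exists_seq_forall_rel (fun k x y => g y < x ∧ y < -k ∧ y < g y)
    (fun k x => by
      obtain ⟨y, hy, hgy⟩ := (hg (min (g.symm x) (-k))).1
      exact ⟨y, g.lt_symm_apply.1 (hy.trans_le (min_le_left _ _)),
        hy.trans_le (min_le_right _ _), hgy⟩) a
  have hpg : ∀ k, p k < g (p k) := by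
    rintro (_ | k)
    exacts [hp0 ▸ ha, (hp k).2.2]
  have hqg : ∀ k, q k < g (q k) := by
    rintro (_ | k)
    exacts [hq0 ▸ ha, (hq k).2.2]
  obtain ⟨c, hc, hcp, hcq⟩ := Int.exists_forall_rel_succ (fun x y => x < g x ∧ g x < y)
    (hp0.trans hq0.symm) (fun k => ⟨hpg k, (hp k).1⟩) (fun k => ⟨hqg (k + 1), (hq k).1⟩)
  refine ⟨c, hc, fun x => ?_, fun x => ?_⟩
  · obtain ⟨k, hk⟩ := exists_nat_gt x
    exact ⟨k + 1, by rw [hcp]; exact hk.trans (hp k).2.1⟩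
  · obtain ⟨k, hk⟩ := exists_nat_gt (-x)
    exact ⟨k + 1, by rw [hcq]; exact (hq k).2.1.trans (neg_lt.1 hk)⟩

def QAut.toOrderIso (g : QAut) : ℚ ≃o ℚ where
  toEquiv := g
  map_rel_iff' := (g.2 _ _).symm

def QAut.ofOrderIso (e : ℚ ≃o ℚ) : QAut :=
  ⟨e.toEquiv, fun _ _ => e.le_iff_le.symm⟩

lemma singlePlusQ_of_succ_lt_apply (f : QAut) {c : ℤ → ℚ} (hc : Monotone c)
    (hf : ∀ n, c (n + 1) < (f : Equiv.Perm ℚ) (c n))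
    (hca : ∀ x, ∃ k : ℕ, x < c k) (hcb : ∀ x, ∃ k : ℕ, c (-k) < x) : SinglePlusQ f := by
  have hfwd (k : ℕ) : c k ≤ ((f : Equiv.Perm ℚ) ^ (k : ℤ)) (c 0) := by
    rw [zpow_natCast, ← Equiv.Perm.iterate_eq_pow]
    refine Monotone.seq_le_seq (x := fun j => c j) (y := fun j => (⇑(f : Equiv.Perm ℚ))^[j] (c 0))
      (QAut.toOrderIso f).monotone k le_rfl (fun j _ => ?_)
      fun j _ => (Function.iterate_succ_apply' _ _ _).ge
    exact_mod_cast (hf j).le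
  have hbwd (k : ℕ) : ((f : Equiv.Perm ℚ) ^ (-(k : ℤ))) (c 0) ≤ c (-k) := by
    rw [zpow_neg, zpow_natCast, ← inv_pow, ← Equiv.Perm.iterate_eq_pow]
    refine Monotone.seq_le_seq (x := fun j => (⇑(f⁻¹ : Equiv.Perm ℚ))^[j] (c 0))
      (y := fun j => c (-j)) (QAut.toOrderIso f⁻¹).monotone k le_rfl
      (fun j _ => (Function.iterate_succ_apply' _ _ _).le) fun j _ => ?_
    have := hf (-(j + 1 : ℕ))
    rw [show -((j + 1 : ℕ) : ℤ) + 1 = -j by push_cast; ring] at this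
    exact ((QAut.toOrderIso f).symm_apply_lt.2 this).le
  refine ⟨c 0, (hc (zero_le_one' ℤ)).trans_lt (hf 0), fun x => ?_, fun x => ?_⟩
  · obtain ⟨k, hk⟩ := hca x
    exact ⟨k, hk.trans_le (hfwd k)⟩
  · obtain ⟨k, hk⟩ := hcb x
    exact ⟨-k, (hbwd k).trans_lt hk⟩

/-- If `g ∈ Aut(ℚ, ≤)` is such that every `x` has some `y < x` with
`g y > y` and some `z > x` with `g z > z`, then there is `h ∈ Aut(ℚ, ≤)` such that
`g ∘ h⁻¹ ∘ g ∘ h` has a single `+`-orbital. -/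
theorem stmt6 (g : QAut)
    (hg : ∀ x : ℚ, (∃ y, y < x ∧ y < (g : Equiv.Perm ℚ) y) ∧
      (∃ z, x < z ∧ z < (g : Equiv.Perm ℚ) z)) :
    ∃ h : QAut, SinglePlusQ ((g * h⁻¹ * g * h : QAut) : Equiv.Perm ℚ) := by
  set G := QAut.toOrderIso g
  obtain ⟨c, hc, hca, hcb⟩ := exists_unbounded_seq_lt_apply_lt_succ G hg
  have hca' (x : ℚ) : ∃ n : ℤ, x < c n := let ⟨k, hk⟩ := hca x; ⟨k, hk⟩
  have hcb' (x : ℚ) : ∃ n : ℤ, c n < x := let ⟨k, hk⟩ := hcb x; ⟨-k, hk⟩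
  obtain ⟨e, he⟩ := exists_orderIso_apply_eq
    (s := interleave c fun k => G.symm (c (k + 1)))
    (t := interleave c fun k => (c k + G (c k)) / 2)
    (strictMono_interleave (fun k => G.lt_symm_apply.2 (hc k).2)
      fun k => G.symm_apply_lt.2 (hc (k + 1)).1)
    (strictMono_interleave (fun k => by linarith [hc k]) fun k => by linarith [hc k])
    (interleave_unbounded_above hca') (interleave_unbounded_below hcb')
    (interleave_unbounded_above hca') (interleave_unbounded_below hcb')
  refine ⟨QAut.ofOrderIso e, singlePlusQ_of_succ_lt_apply _
    (strictMono_int_of_lt_succ fun n => (hc n).1.trans (hc n).2).monotone (fun n => ?_) hca hcb⟩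
  have hfix : e (c n) = c n := by simpa using he (2 * n)
  have hmid : e (G.symm (c (n + 1))) = (c n + G (c n)) / 2 := by simpa using he (2 * n + 1)
  show c (n + 1) < G (e.symm (G (e (c n))))
  rw [← G.symm_apply_lt, e.lt_symm_apply, hmid, hfix]
  linarith [(hc n).1]
end
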